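/- arXiv:math/9606214 — 6 statements merged into one kernel-verified Lean document; each statement's English description precedes it below -/
import Mathlib

section
/- Let X and Y be standard Borel spaces, let μ be a finite Borel measure on X, and let π : X → Y be a Borel measurable map. Suppose (μ_y)_{y ∈ Y} and (μ'_y)_{y ∈ Y} are two families of finite Borel measures on X each satisfying: (i) for every Borel A ⊆ X, y ↦ μ_y(A) (resp. y ↦ μ'_y(A)) is measurable; (ii) for π_*μ-a.e. y, μ_y (resp. μ'_y) is concentrated on π⁻¹({y}); (iii) μ(A) = ∫_Y μ_y(A) d(π_*μ)(y) (resp. with μ'_y) for every Borel A ⊆ X. Then μ_y = μ'_y for π_*μ-almost every y ∈ Y. (Uniqueness part of Rokhlin's theorem on canonical systems of measures.) -/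
/-!
Integrating `y ↦ κ y B` over a measurable `A ⊆ Y` gives `μ (π ⁻¹' A ∩ B)`, because `κ y` lives on
the fiber over `y`. Hence, for each measurable `B`, the densities `y ↦ κ y B` and `y ↦ κ' y B` have
the same integral over every measurable set and agree `π_*μ`-a.e. Since `X` is countably
generated, it suffices to compare the two systems on a countable generating π-system, and a
countable union of null sets is null.
-/

open MeasureTheory MeasurableSpace

lemma countable_generatePiSystem {α : Type*} {S : Set (Set α)} (hS : S.Countable) :
    (generatePiSystem S).Countable := by
  refine ((Set.countable_ofPred_finite_subset hS).image fun F => ⋂₀ F).mono ?_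
  intro t ht
  induction ht with
  | @base s hs => exact ⟨{s}, ⟨Set.finite_singleton s, Set.singleton_subset_iff.2 hs⟩, by simp⟩
  | inter _ _ _ ihs iht =>
    obtain ⟨F, ⟨hF, hFS⟩, rfl⟩ := ihs
    obtain ⟨G, ⟨hG, hGS⟩, rfl⟩ := iht
    exact ⟨F ∪ G, ⟨hF.union hG, Set.union_subset hFS hGS⟩, Set.sInter_union F G⟩

lemma exists_countable_isPiSystem_generateFrom_eq (X : Type*) [m : MeasurableSpace X]
    [CountablyGenerated X] :
    ∃ T : Set (Set X), T.Countable ∧ IsPiSystem T ∧ m = generateFrom T := by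
  refine ⟨generatePiSystem (countableGeneratingSet X),
    countable_generatePiSystem countable_countableGeneratingSet,
    isPiSystem_generatePiSystem _, ?_⟩
  rw [generateFrom_generatePiSystem_eq, generateFrom_countableGeneratingSet]

lemma ae_eq_of_forall_ae_apply_eq {X Y : Type*} [MeasurableSpace X] [CountablyGenerated X]
    [MeasurableSpace Y] {ν : Measure Y} {κ κ' : Y → Measure X}
    (hfin : ∀ y, IsFiniteMeasure (κ y))
    (h : ∀ B, MeasurableSet B → ∀ᵐ y ∂ν, κ y B = κ' y B) :
    ∀ᵐ y ∂ν, κ y = κ' y := by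
  obtain ⟨T, hTc, hT, hgen⟩ := exists_countable_isPiSystem_generateFrom_eq X
  have hTmeas : ∀ t ∈ T, MeasurableSet t := fun t ht => hgen ▸ measurableSet_generateFrom ht
  have h_on_T : ∀ᵐ y ∂ν, ∀ t ∈ T, κ y t = κ' y t :=
    (ae_ball_iff hTc).2 fun t ht => h t (hTmeas t ht)
  filter_upwards [h_on_T, h Set.univ MeasurableSet.univ] with y hyT hyuniv
  exact ext_of_generate_finite T hgen hT hyT hyuniv

lemma measure_preimage_inter_eq_indicator {X Y : Type*} [MeasurableSpace X] {ρ : Measure X}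
    {π : X → Y} {y : Y} (hy : ρ (π ⁻¹' {y})ᶜ = 0) (A : Set Y) (B : Set X) :
    ρ (π ⁻¹' A ∩ B) = A.indicator (fun _ => ρ B) y := by
  by_cases hyA : y ∈ A
  · rw [Set.indicator_of_mem hyA, Set.inter_comm, measure_inter_conull]
    refine measure_mono_null (Set.compl_subset_compl.2 ?_) hy
    exact Set.preimage_mono (Set.singleton_subset_iff.2 hyA)
  · rw [Set.indicator_of_notMem hyA]
    exact measure_mono_null (fun x hx (hxy : π x = y) => hyA (hxy ▸ hx.1)) hy

structure IsCanonicalSystem {X Y : Type*} [MeasurableSpace X] [MeasurableSpace Y]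
    (μ : Measure X) (π : X → Y) (κ : Y → Measure X) : Prop where
  measurable_apply : ∀ A, MeasurableSet A → Measurable fun y => κ y A
  ae_measure_compl_fiber_eq_zero : ∀ᵐ y ∂μ.map π, κ y (π ⁻¹' {y})ᶜ = 0
  measure_eq_lintegral : ∀ A, MeasurableSet A → μ A = ∫⁻ y, κ y A ∂μ.map π

namespace IsCanonicalSystem

variable {X Y : Type*} [MeasurableSpace X] [MeasurableSpace Y] {μ : Measure X} {π : X → Y}
  {κ κ' : Y → Measure X}

lemma setLIntegral_apply (h : IsCanonicalSystem μ π κ) (hπ : Measurable π) {A : Set Y}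
    (hA : MeasurableSet A) {B : Set X} (hB : MeasurableSet B) :
    ∫⁻ y in A, κ y B ∂μ.map π = μ (π ⁻¹' A ∩ B) := by
  rw [h.measure_eq_lintegral _ ((hπ hA).inter hB), ← lintegral_indicator hA]
  refine lintegral_congr_ae ?_
  filter_upwards [h.ae_measure_compl_fiber_eq_zero] with y hy
  exact (measure_preimage_inter_eq_indicator hy A B).symm

lemma ae_apply_eq [IsFiniteMeasure μ] (h : IsCanonicalSystem μ π κ)
    (h' : IsCanonicalSystem μ π κ') (hπ : Measurable π) {B : Set X} (hB : MeasurableSet B) :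
    ∀ᵐ y ∂μ.map π, κ y B = κ' y B := by
  refine ae_eq_of_forall_setLIntegral_eq_of_sigmaFinite (h.measurable_apply B hB)
    (h'.measurable_apply B hB) fun A hA _ => ?_
  rw [h.setLIntegral_apply hπ hA hB, h'.setLIntegral_apply hπ hA hB]

end IsCanonicalSystem

theorem rokhlin_uniqueness_general {X Y : Type*} [MeasurableSpace X] [StandardBorelSpace X]
    [MeasurableSpace Y]
    (μ : Measure X) [IsFiniteMeasure μ] (π : X → Y) (hπ : Measurable π)
    (κ κ' : Y → Measure X)
    (hfin : ∀ y : Y, IsFiniteMeasure (κ y))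
    (hmeas : ∀ A : Set X, MeasurableSet A → Measurable fun y : Y => κ y A)
    (hmeas' : ∀ A : Set X, MeasurableSet A → Measurable fun y : Y => κ' y A)
    (hconc : ∀ᵐ (y : Y) ∂(μ.map π), κ y ((π ⁻¹' {y})ᶜ) = 0)
    (hconc' : ∀ᵐ (y : Y) ∂(μ.map π), κ' y ((π ⁻¹' {y})ᶜ) = 0)
    (hint : ∀ A : Set X, MeasurableSet A → μ A = ∫⁻ y : Y, κ y A ∂(μ.map π))
    (hint' : ∀ A : Set X, MeasurableSet A → μ A = ∫⁻ y : Y, κ' y A ∂(μ.map π)) :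
    ∀ᵐ (y : Y) ∂(μ.map π), κ y = κ' y := by
  have h : IsCanonicalSystem μ π κ := ⟨hmeas, hconc, hint⟩
  have h' : IsCanonicalSystem μ π κ' := ⟨hmeas', hconc', hint'⟩
  exact ae_eq_of_forall_ae_apply_eq hfin fun B hB => h.ae_apply_eq h' hπ hB

/-- Uniqueness part of Rokhlin's theorem on canonical systems of measures: two canonical
systems for the partition of `X` into the fibers of `π` agree `π_*μ`-almost everywhere. -/
theorem rokhlin_uniqueness {X Y : Type*} [MeasurableSpace X] [StandardBorelSpace X]
    [MeasurableSpace Y] [StandardBorelSpace Y]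
    (μ : Measure X) [IsFiniteMeasure μ] (π : X → Y) (hπ : Measurable π)
    (κ κ' : Y → Measure X)
    (hfin : ∀ y : Y, IsFiniteMeasure (κ y)) (hfin' : ∀ y : Y, IsFiniteMeasure (κ' y))
    (hmeas : ∀ A : Set X, MeasurableSet A → Measurable fun y : Y => κ y A)
    (hmeas' : ∀ A : Set X, MeasurableSet A → Measurable fun y : Y => κ' y A)
    (hconc : ∀ᵐ (y : Y) ∂(μ.map π), κ y ((π ⁻¹' {y})ᶜ) = 0)
    (hconc' : ∀ᵐ (y : Y) ∂(μ.map π), κ' y ((π ⁻¹' {y})ᶜ) = 0)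
    (hint : ∀ A : Set X, MeasurableSet A → μ A = ∫⁻ y : Y, κ y A ∂(μ.map π))
    (hint' : ∀ A : Set X, MeasurableSet A → μ A = ∫⁻ y : Y, κ' y A ∂(μ.map π)) :
    ∀ᵐ (y : Y) ∂(μ.map π), κ y = κ' y :=
  rokhlin_uniqueness_general μ π hπ κ κ' hfin hmeas hmeas' hconc hconc' hint hint'
end

section
/- Let θ be a non-constant inner function on the open unit disk 𝔻, with Clark family {μ_α}_{α ∈ 𝕋}. Then for every Borel set B ⊆ 𝕋 the function α ↦ μ_α(B) is m-measurable and ∫_𝕋 μ_α(B) dm(α) = m(B). (Aleksandrov's disintegration formula: the Clark family is a canonical system of measures over (𝕋, m).) -/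
open MeasureTheory Complex

noncomputable section

instance : MeasurableSpace Circle := borel Circle
instance : BorelSpace Circle := ⟨rfl⟩

/-- The normalized arc-length (Haar) measure `m` on the unit circle `𝕋`. -/
def mc : Measure Circle := Measure.haarMeasure (⊤ : TopologicalSpace.PositiveCompacts Circle)

instance : IsProbabilityMeasure mc :=
  ⟨by simpa [mc] using Measure.haarMeasure_self (K₀ := (⊤ : TopologicalSpace.PositiveCompacts Circle))⟩

/-- `F` has nontangential limit `L` at the boundary point `ξ` of the unit disk:
for every `M > 1`, `F z → L` as `z → ξ` within `{z ∈ 𝔻 : |z - ξ| ≤ M (1 - |z|)}`. -/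
def NTLimit (F : ℂ → ℂ) (ξ L : ℂ) : Prop :=
  ∀ M : ℝ, 1 < M →
    Filter.Tendsto F
      (nhdsWithin ξ {z : ℂ | ‖z‖ < 1 ∧ ‖z - ξ‖ ≤ M * (1 - ‖z‖)})
      (nhds L)

/-- `θ` is an inner function on the open unit disk. -/
def IsInner (θ : ℂ → ℂ) : Prop :=
  DifferentiableOn ℂ θ (Metric.ball (0 : ℂ) 1) ∧
  (∀ z ∈ Metric.ball (0 : ℂ) 1, ‖θ z‖ ≤ 1) ∧
  (∀ᵐ (ξ : Circle) ∂mc, ∃ L : ℂ, ‖L‖ = 1 ∧ NTLimit θ (ξ : ℂ) L)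

/-- `θ` is non-constant on the unit disk. -/
def IsNonconstant (θ : ℂ → ℂ) : Prop :=
  ∃ z ∈ Metric.ball (0 : ℂ) 1, ∃ w ∈ Metric.ball (0 : ℂ) 1, θ z ≠ θ w

/-- `μ` is the Clark measure of the inner function `θ` at `α ∈ 𝕋`:
the finite positive Borel measure on `𝕋` whose Poisson integral is `Re ((α + θ)/(α - θ))`. -/
def IsClarkMeasure (θ : ℂ → ℂ) (α : Circle) (μ : Measure Circle) : Prop :=
  IsFiniteMeasure μ ∧ ∀ z ∈ Metric.ball (0 : ℂ) 1,
    ∫ ξ : Circle, (1 - ‖z‖ ^ 2) / ‖(ξ : ℂ) - z‖ ^ 2 ∂μ =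
      (((α : ℂ) + θ z) / ((α : ℂ) - θ z)).re

variable {H : Type*} [NormedAddCommGroup H] [InnerProductSpace ℂ H] [CompleteSpace H]

/-- The rank-one operator `ψ ↦ ⟨ψ, φ⟩ φ` (inner product linear in the first argument,
i.e. `ψ ↦ ⟪φ, ψ⟫_ℂ • φ` in Mathlib's convention). -/
def rankOne (φ : H) : H →L[ℂ] H := (innerSL ℂ φ).smulRight φ

/-- `μ` is the spectral measure of the vector `φ` for the bounded self-adjoint operator `T`:
`⟨(T - z)⁻¹ φ, φ⟩ = ∫ (t - z)⁻¹ dμ(t)` for all non-real `z`. -/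
def IsSpectralMeasureSA (T : H →L[ℂ] H) (φ : H) (μ : Measure ℝ) : Prop :=
  IsFiniteMeasure μ ∧ ∀ z : ℂ, z.im ≠ 0 →
    (inner ℂ φ ((Ring.inverse (T - z • (1 : H →L[ℂ] H))) φ) : ℂ) = ∫ t : ℝ, ((t : ℂ) - z)⁻¹ ∂μ

/-- `ν` is the spectral measure of the vector `φ` for the unitary operator `V`:
`⟨Vⁿ φ, φ⟩ = ∫ ξⁿ dν(ξ)` for all `n ∈ ℤ`. -/
def IsSpectralMeasureU (V : unitary (H →L[ℂ] H)) (φ : H) (ν : Measure Circle) : Prop :=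
  IsFiniteMeasure ν ∧ ∀ n : ℤ,
    (inner ℂ φ (((V ^ n : unitary (H →L[ℂ] H)) : H →L[ℂ] H) φ) : ℂ) =
      ∫ ξ : Circle, (ξ : ℂ) ^ n ∂ν

/-- A bounded operator is pure point if the closed linear span of its eigenvectors
is the whole space. -/
def IsPurePoint (T : H →L[ℂ] H) : Prop :=
  (Submodule.span ℂ {x : H | x ≠ 0 ∧ ∃ c : ℂ, T x = c • x}).topologicalClosure = ⊤

/-- `φ` is a cyclic vector for the bounded (self-adjoint) operator `T`. -/
def IsCyclicSA (T : H →L[ℂ] H) (φ : H) : Prop :=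
  (Submodule.span ℂ (Set.range fun n : ℕ => (T ^ n) φ)).topologicalClosure = ⊤

/-- `φ` is a cyclic vector for the unitary operator `V`. -/
def IsCyclicU (V : unitary (H →L[ℂ] H)) (φ : H) : Prop :=
  (Submodule.span ℂ
    (Set.range fun n : ℤ => ((V ^ n : unitary (H →L[ℂ] H)) : H →L[ℂ] H) φ)).topologicalClosure = ⊤

/-- The unitary rank-one perturbation `U + (α - 1)⟨·, U⁻¹ φ⟩φ`. -/
def uPert (U : H →L[ℂ] H) (φ : H) (α : Circle) : H →L[ℂ] H :=
  U + ((α : ℂ) - 1) • (innerSL ℂ ((Ring.inverse U) φ)).smulRight φ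

/-- The recursively defined chain of unitary rank-one perturbations:
`U_{α,0} = U`, `U_{α,k} = U_{α,k-1} + (α_k - 1)⟨·, (U_{α,k-1})⁻¹ φ_k⟩ φ_k`. -/
def uChain (U : H →L[ℂ] H) {n : ℕ} (φ : Fin n → H) (α : Fin n → Circle) : ℕ → (H →L[ℂ] H)
  | 0 => U
  | (k + 1) => if h : k < n then uPert (uChain U φ α k) (φ ⟨k, h⟩) (α ⟨k, h⟩) else uChain U φ α k


/-! ### Auxiliary development for Aleksandrov's disintegration theorem -/

namespace Aleks

instance : mc.IsMulLeftInvariant := Measure.isMulLeftInvariant_haarMeasure _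

/-- The Poisson kernel at `w ∈ 𝔻` evaluated at `ξ ∈ 𝕋`. -/
def P (w : ℂ) (ξ : Circle) : ℝ :=
  (1 - ‖w‖ ^ 2) / ‖(ξ : ℂ) - w‖ ^ 2

lemma circle_sub_ne (w : ℂ) (hw : ‖w‖ < 1) (ξ : Circle) : (ξ : ℂ) - w ≠ 0 := by
  intro h
  rw [sub_eq_zero] at h
  have := (Circle.norm_coe ξ)
  rw [h] at this; linarith

lemma circle_sub_abs_pos (w : ℂ) (hw : ‖w‖ < 1) (ξ : Circle) :
    0 < ‖(ξ:ℂ) - w‖ :=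
  norm_pos_iff.mpr (circle_sub_ne w hw ξ)

lemma circle_sub_abs_ge (w : ℂ) (ξ : Circle) :
    1 - ‖w‖ ≤ ‖(ξ:ℂ) - w‖ := by
  have h := (Circle.norm_coe ξ)
  have h2 : ‖(ξ:ℂ)‖ ≤ ‖(ξ:ℂ) - w‖ + ‖w‖ := by
    simpa using norm_add_le ((ξ:ℂ) - w) w
  linarith

lemma P_nonneg (w : ℂ) (hw : ‖w‖ ≤ 1) (ξ : Circle) : 0 ≤ P w ξ := by
  apply div_nonneg
  · nlinarith [norm_nonneg w]
  · positivity

lemma P_pos (w : ℂ) (hw : ‖w‖ < 1) (ξ : Circle) : 0 < P w ξ := by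
  apply div_pos
  · nlinarith [norm_nonneg w]
  · have := circle_sub_abs_pos w hw ξ
    positivity

lemma P_eq_re (w : ℂ) (hw : ‖w‖ < 1) (ξ : Circle) :
    P w ξ = (((ξ:ℂ) + w) / ((ξ:ℂ) - w)).re := by
  have h1 : (ξ:ℂ).re^2 + (ξ:ℂ).im^2 = 1 := by
    have h : Complex.normSq (ξ:ℂ) = 1 := by
      rw [← Complex.sq_norm, (Circle.norm_coe ξ)]; norm_num
    rw [Complex.normSq_apply] at h
    nlinarith [h]
  simp only [P, Complex.sq_norm, Complex.div_re]
  rw [← add_div]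
  congr 1
  simp only [Complex.normSq_apply, Complex.add_re, Complex.sub_re, Complex.add_im, Complex.sub_im]
  nlinarith [h1]

lemma P_le (w : ℂ) (hw : ‖w‖ < 1) (ξ : Circle) :
    P w ξ ≤ 2 / (1 - ‖w‖) ^ 2 := by
  have h1 := circle_sub_abs_ge w ξ
  have h2 : (0:ℝ) < 1 - ‖w‖ := by linarith
  have h3 : (1 - ‖w‖)^2 ≤ ‖(ξ:ℂ) - w‖ ^ 2 := by nlinarith
  have h4 : 1 - ‖w‖ ^ 2 ≤ 2 := by nlinarith [norm_nonneg w]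
  have h5 : (0:ℝ) < ‖(ξ:ℂ) - w‖ ^ 2 := by
    have := circle_sub_abs_pos w hw ξ; positivity
  unfold P
  gcongr

lemma integral_zpow_eq_zero {n : ℤ} (hn : n ≠ 0) : ∫ α : Circle, (α:ℂ) ^ n ∂mc = 0 := by
  set β : Circle := Circle.exp (Real.pi / n) with hβ
  have hβn : (β:ℂ) ^ n = -1 := by
    rw [hβ, Circle.coe_exp, ← Complex.exp_int_mul]
    have hn0 : (n:ℂ) ≠ 0 := Int.cast_ne_zero.mpr hn
    have : (n:ℂ) * (↑(Real.pi / (n:ℝ)) * Complex.I) = Real.pi * Complex.I := by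
      push_cast
      field_simp
    rw [this, Complex.exp_pi_mul_I]
  have hinv : ∫ α : Circle, ((β * α : Circle):ℂ) ^ n ∂mc = ∫ α : Circle, (α:ℂ) ^ n ∂mc :=
    integral_mul_left_eq_self (fun α : Circle => (α:ℂ) ^ n) β
  have hexp : ∀ α : Circle, ((β * α : Circle):ℂ) ^ n = (β:ℂ)^n * (α:ℂ)^n := by
    intro α
    push_cast
    rw [mul_zpow]
  simp only [hexp, hβn] at hinv
  rw [integral_const_mul] at hinv
  have : (-1 - 1 : ℂ) * ∫ α : Circle, (α:ℂ) ^ n ∂mc = 0 := by ring_nf; linear_combination hinv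
  have h2 : (-1 - 1 : ℂ) ≠ 0 := by norm_num
  exact (mul_eq_zero.mp this).resolve_left h2

lemma herglotz_series (w : ℂ) (hw : ‖w‖ < 1) (ξ : Circle) :
    ((ξ:ℂ) + w) / ((ξ:ℂ) - w) = 1 + 2 * ∑' n : ℕ, (w * (ξ:ℂ)⁻¹) ^ (n + 1) := by
  have hξ : (ξ:ℂ) ≠ 0 := ξ.coe_ne_zero
  have hne : (ξ:ℂ) - w ≠ 0 := circle_sub_ne w hw ξ
  have hq : ‖w * (ξ:ℂ)⁻¹‖ < 1 := by
    rw [norm_mul, norm_inv, Circle.norm_coe ξ]; simpa using hw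
  have hq1 : (1 : ℂ) - w * (ξ:ℂ)⁻¹ ≠ 0 := by
    intro h
    rw [sub_eq_zero] at h
    have := congrArg (‖·‖) h
    simp only [norm_one] at this
    rw [← this] at hq; exact lt_irrefl _ hq
  have hgeo : ∑' n : ℕ, (w * (ξ:ℂ)⁻¹) ^ (n + 1) =
      (w * (ξ:ℂ)⁻¹) * (1 - w * (ξ:ℂ)⁻¹)⁻¹ := by
    rw [← tsum_geometric_of_norm_lt_one (ξ := w * (ξ:ℂ)⁻¹) (by simpa using hq)]
    rw [← tsum_mul_left]
    congr 1; ext n; ring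
  rw [hgeo]
  field_simp
  ring

lemma cont_integrable {E : Type*} [NormedAddCommGroup E] {f : Circle → E} (hf : Continuous f)
    (μ : Measure Circle) [IsFiniteMeasure μ] : Integrable f μ :=
  integrableOn_univ.mp (hf.continuousOn.integrableOn_compact isCompact_univ)

lemma continuous_coe : Continuous (fun ξ : Circle => (ξ:ℂ)) := continuous_subtype_val

lemma continuous_coe_inv : Continuous (fun ξ : Circle => (ξ:ℂ)⁻¹) := by
  have : (fun ξ : Circle => (ξ:ℂ)⁻¹) = fun ξ : Circle => ((ξ⁻¹ : Circle) : ℂ) := by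
    ext ξ; simp
  rw [this]
  exact continuous_coe.comp continuous_inv

lemma continuous_herglotz (w : ℂ) (hw : ‖w‖ < 1) :
    Continuous (fun ξ : Circle => ((ξ:ℂ) + w) / ((ξ:ℂ) - w)) := by
  apply Continuous.div (by continuity) (by continuity)
  intro ξ
  exact circle_sub_ne w hw ξ

lemma integral_herglotz (w : ℂ) (hw : ‖w‖ < 1) :
    ∫ ξ : Circle, ((ξ:ℂ) + w) / ((ξ:ℂ) - w) ∂mc = 1 := by
  have hI : Integrable (fun ξ : Circle => ((ξ:ℂ) + w) / ((ξ:ℂ) - w)) mc :=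
    cont_integrable (continuous_herglotz w hw) mc
  have hser : ∀ ξ : Circle, ((ξ:ℂ) + w) / ((ξ:ℂ) - w) - 1
      = ∑' n : ℕ, 2 * (w * (ξ:ℂ)⁻¹) ^ (n + 1) := by
    intro ξ
    rw [herglotz_series w hw ξ, tsum_mul_left]
    ring
  have hIsub : Integrable (fun ξ : Circle => ((ξ:ℂ) + w) / ((ξ:ℂ) - w) - 1) mc :=
    hI.sub (integrable_const 1)
  have hmeas : ∀ n : ℕ, AEStronglyMeasurable (fun ξ : Circle => 2 * (w * (ξ:ℂ)⁻¹)^(n+1)) mc := by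
    intro n
    apply Continuous.aestronglyMeasurable
    exact (continuous_const.mul ((continuous_const.mul continuous_coe_inv).pow (n+1)))
  have hnorm : ∀ (n : ℕ) (ξ : Circle), ‖(2 : ℂ) * (w * (ξ:ℂ)⁻¹)^(n+1)‖ = 2 * ‖w‖ ^ (n+1) := by
    intro n ξ
    simp [norm_mul, norm_pow, norm_inv, Circle.norm_coe ξ]
  have hsum : Summable (fun n : ℕ => 2 * ‖w‖ ^ (n+1)) := by
    apply Summable.mul_left
    exact (summable_geometric_of_lt_one (norm_nonneg w) hw).comp_injective
      (add_left_injective 1)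
  have hbound : ∑' n : ℕ, ∫⁻ ξ : Circle, ‖(2 : ℂ) * (w * (ξ:ℂ)⁻¹)^(n+1)‖₊ ∂mc ≠ ⊤ := by
    have hle : ∀ n : ℕ, ∫⁻ ξ : Circle, ‖(2 : ℂ) * (w * (ξ:ℂ)⁻¹)^(n+1)‖₊ ∂mc
        = ENNReal.ofReal (2 * ‖w‖ ^ (n+1)) := by
      intro n
      have : ∀ ξ : Circle, (‖(2 : ℂ) * (w * (ξ:ℂ)⁻¹)^(n+1)‖₊ : ENNReal)
          = ENNReal.ofReal (2 * ‖w‖ ^ (n+1)) := by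
        intro ξ
        rw [← hnorm n ξ, ofReal_norm, enorm_eq_nnnorm]
      simp only [this]
      rw [lintegral_const]
      simp
    simp only [hle]
    rw [← ENNReal.ofReal_tsum_of_nonneg (fun n => by positivity) hsum]
    exact ENNReal.ofReal_ne_top
  have hterm : ∀ n : ℕ, ∫ ξ : Circle, 2 * (w * (ξ:ℂ)⁻¹)^(n+1) ∂mc = 0 := by
    intro n
    have : ∀ ξ : Circle, (2:ℂ) * (w * (ξ:ℂ)⁻¹)^(n+1) = (2 * w^(n+1)) * (ξ:ℂ)^(-(n+1:ℕ):ℤ) := by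
      intro ξ
      simp only [mul_pow, zpow_neg, zpow_natCast, inv_pow]
      ring
    simp only [this]
    rw [integral_const_mul, integral_zpow_eq_zero (by omega), mul_zero]
  have key : ∫ ξ : Circle, (((ξ:ℂ) + w) / ((ξ:ℂ) - w) - 1) ∂mc = 0 := by
    calc ∫ ξ : Circle, (((ξ:ℂ) + w) / ((ξ:ℂ) - w) - 1) ∂mc
        = ∫ ξ : Circle, ∑' n : ℕ, 2 * (w * (ξ:ℂ)⁻¹)^(n+1) ∂mc := by
          congr 1; ext ξ; exact hser ξ
      _ = ∑' n : ℕ, ∫ ξ : Circle, 2 * (w * (ξ:ℂ)⁻¹)^(n+1) ∂mc :=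
          integral_tsum hmeas hbound
      _ = 0 := by simp [hterm]
  have := integral_sub hI (integrable_const (1:ℂ))
  rw [this] at key
  rw [integral_const] at key
  simp at key
  linear_combination key

lemma integral_P (w : ℂ) (hw : ‖w‖ < 1) :
    ∫ α : Circle, P w α ∂mc = 1 := by
  have hI : Integrable (fun α : Circle => ((α:ℂ) + w) / ((α:ℂ) - w)) mc :=
    cont_integrable (continuous_herglotz w hw) mc
  have : ∫ α : Circle, P w α ∂mc
      = ∫ α : Circle, Complex.reCLM (((α:ℂ) + w) / ((α:ℂ) - w)) ∂mc := by
    congr 1; ext α; rw [P_eq_re w hw α]; rfl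
  rw [this, ContinuousLinearMap.integral_comp_comm _ hI, integral_herglotz w hw]
  rfl

lemma coord_sq (ξ : Circle) : (ξ:ℂ).re^2 + (ξ:ℂ).im^2 = 1 := by
  have h : Complex.normSq (ξ:ℂ) = 1 := by
    rw [← Complex.sq_norm, (Circle.norm_coe ξ)]; norm_num
  rw [Complex.normSq_apply] at h
  nlinarith [h]

lemma abs_real_mul (r : ℝ) (hr : 0 ≤ r) (ξ : Circle) : ‖(r:ℂ) * ξ‖ = r := by
  rw [norm_mul, Complex.norm_real, Real.norm_eq_abs, (Circle.norm_coe ξ), _root_.abs_of_nonneg hr, mul_one]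

lemma P_symm (r : ℝ) (ξ η : Circle) : P ((r:ℂ) * ξ) η = P ((r:ℂ) * η) ξ := by
  unfold P
  have h1 := coord_sq ξ
  have h2 := coord_sq η
  have key : ‖(η:ℂ) - (r:ℂ)*ξ‖ ^ 2 = ‖(ξ:ℂ) - (r:ℂ)*η‖ ^ 2 := by
    rw [Complex.sq_norm, Complex.sq_norm, Complex.normSq_apply, Complex.normSq_apply]
    simp only [Complex.sub_re, Complex.sub_im, Complex.mul_re, Complex.mul_im,
      Complex.ofReal_re, Complex.ofReal_im]
    ring_nf
    nlinarith [h1, h2]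
  rw [key]
  congr 2
  rw [norm_mul, norm_mul, Complex.norm_real, Real.norm_eq_abs, (Circle.norm_coe ξ), (Circle.norm_coe η)]

lemma continuous_P (w : ℂ) (hw : ‖w‖ < 1) : Continuous (fun ξ : Circle => P w ξ) := by
  unfold P
  apply Continuous.div continuous_const
  · continuity
  · intro ξ
    have := circle_sub_abs_pos w hw ξ
    positivity

/-- The sequence of radii tending to 1. -/
def rseq (k : ℕ) : ℝ := 1 - 1/(k+2)

lemma rseq_nonneg (k : ℕ) : 0 ≤ rseq k := by
  unfold rseq
  have h2 : (2:ℝ) ≤ (k:ℝ) + 2 := by have : (0:ℝ) ≤ (k:ℝ) := Nat.cast_nonneg k; linarith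
  have h3 : (0:ℝ) < (k:ℝ) + 2 := by positivity
  have : 1/((k:ℝ)+2) ≤ 1/2 := by
    apply one_div_le_one_div_of_le (by norm_num) h2
  linarith

lemma rseq_lt_one (k : ℕ) : rseq k < 1 := by
  unfold rseq
  have : (0:ℝ) < 1/((k:ℝ)+2) := by positivity
  linarith

lemma one_sub_rseq (k : ℕ) : 1 - rseq k = 1/((k:ℝ)+2) := by unfold rseq; ring

lemma abs_rseq_mul (k : ℕ) (η : Circle) : ‖(rseq k : ℂ) * η‖ = rseq k :=
  abs_real_mul _ (rseq_nonneg k) η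

lemma poisson_pointwise_bound {K ε δ : ℝ} (hK : 0 ≤ K) (hδ : 0 < δ) (hε : 0 ≤ ε)
    {f : Circle → ℝ} (hfK : ∀ ξ, |f ξ| ≤ K) (η : Circle)
    (hδf : ∀ ξ : Circle, ‖(ξ:ℂ) - η‖ < δ → |f ξ - f η| ≤ ε)
    {r : ℝ} (hr0 : 0 ≤ r) (hr1 : r < 1) (hrδ : 1 - r ≤ δ/2) (ξ : Circle) :
    |f ξ - f η| * P ((r:ℂ)*η) ξ ≤ ε * P ((r:ℂ)*η) ξ + 2*K*(1-r^2)*4/δ^2 := by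
  have hwabs : ‖(r:ℂ)*η‖ = r := abs_real_mul r hr0 η
  have hw1 : ‖(r:ℂ)*η‖ < 1 := by rw [hwabs]; exact hr1
  have hP0 : 0 ≤ P ((r:ℂ)*η) ξ := P_nonneg _ (le_of_lt hw1) ξ
  rcases lt_or_ge (‖(ξ:ℂ) - η‖) δ with hcase | hcase
  · have h1 : |f ξ - f η| * P ((r:ℂ)*η) ξ ≤ ε * P ((r:ℂ)*η) ξ :=
      mul_le_mul_of_nonneg_right (hδf ξ hcase) hP0
    have h2 : (0:ℝ) ≤ 2*K*(1-r^2)*4/δ^2 := by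
      have : (0:ℝ) ≤ 1 - r^2 := by nlinarith
      positivity
    linarith
  · -- far case
    have htri : ‖(ξ:ℂ) - η‖ ≤ ‖(ξ:ℂ) - (r:ℂ)*η‖ + (1 - r) := by
      have h := norm_sub_le_norm_sub_add_norm_sub (ξ:ℂ) ((r:ℂ)*η) (η:ℂ)
      have h2 : ‖(r:ℂ)*η - η‖ = 1 - r := by
        have : (r:ℂ)*η - η = ((r:ℂ) - 1) * η := by ring
        rw [this, norm_mul, (Circle.norm_coe η), mul_one]
        rw [show ((r:ℂ) - 1) = ((r - 1 : ℝ) : ℂ) by push_cast; ring, Complex.norm_real, Real.norm_eq_abs]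
        rw [abs_sub_comm, _root_.abs_of_nonneg (by linarith : (0:ℝ) ≤ 1 - r)]
      rw [h2] at h
      exact h
    have hge : δ/2 ≤ ‖(ξ:ℂ) - (r:ℂ)*η‖ := by linarith
    have hPle : P ((r:ℂ)*η) ξ ≤ (1-r^2)*4/δ^2 := by
      unfold P
      rw [hwabs]
      have hd2 : δ^2/4 ≤ ‖(ξ:ℂ) - (r:ℂ)*η‖^2 := by nlinarith
      have hnum : (0:ℝ) ≤ 1 - r^2 := by nlinarith
      rw [div_le_div_iff₀ (by nlinarith [circle_sub_abs_pos ((r:ℂ)*η) hw1 ξ]) (by positivity)]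
      nlinarith
    have hf2K : |f ξ - f η| ≤ 2*K := by
      have := hfK ξ; have := hfK η
      have := abs_sub_abs_le_abs_sub (f ξ) (f η)
      have h3 := abs_sub (f ξ) (f η)
      calc |f ξ - f η| ≤ |f ξ| + |f η| := abs_sub _ _
        _ ≤ 2*K := by linarith [hfK ξ, hfK η]
    have h4 : |f ξ - f η| * P ((r:ℂ)*η) ξ ≤ 2*K * ((1-r^2)*4/δ^2) := by
      apply mul_le_mul hf2K hPle hP0 (by linarith)
    have h5 : (0:ℝ) ≤ ε * P ((r:ℂ)*η) ξ := mul_nonneg hε hP0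
    have : 2*K * ((1-r^2)*4/δ^2) = 2*K*(1-r^2)*4/δ^2 := by ring
    linarith [h4, h5, this ▸ h4]

lemma poisson_approx {f : Circle → ℝ} (hf : Continuous f) (η : Circle) :
    Filter.Tendsto (fun k : ℕ => ∫ ξ : Circle, f ξ * P ((rseq k : ℂ) * η) ξ ∂mc)
      Filter.atTop (nhds (f η)) := by
  rw [Metric.tendsto_atTop]
  intro ε hε
  -- bound on f
  obtain ⟨K₀, hK₀⟩ := (isCompact_range hf).isBounded.exists_norm_le
  set K := |K₀| + 1 with hKdef
  have hK : 0 < K := by positivity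
  have hfK : ∀ ξ, |f ξ| ≤ K := by
    intro ξ
    have := hK₀ _ (Set.mem_range_self ξ)
    rw [Real.norm_eq_abs] at this
    calc |f ξ| ≤ K₀ := this
      _ ≤ |K₀| := le_abs_self K₀
      _ ≤ K := by rw [hKdef]; linarith
  -- uniform continuity
  have huc : UniformContinuous f := CompactSpace.uniformContinuous_of_continuous hf
  replace huc := Metric.uniformContinuous_iff.mp huc
  obtain ⟨δ, hδ, hδf⟩ := huc (ε/4) (by linarith)
  have hδf' : ∀ ξ : Circle, ‖(ξ:ℂ) - η‖ < δ → |f ξ - f η| ≤ ε/4 := by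
    intro ξ hξ
    have : dist ξ η < δ := by
      show dist (ξ:ℂ) (η:ℂ) < δ; rw [Complex.dist_eq]; exact hξ
    have := hδf this
    rw [Real.dist_eq] at this
    linarith
  -- choose N
  obtain ⟨N, hN⟩ := exists_nat_gt (max (2/δ) (32*K/(δ^2*ε)))
  refine ⟨N, fun k hk => ?_⟩
  have hkN : (N:ℝ) ≤ (k:ℝ) := Nat.cast_le.mpr hk
  have hk2 : max (2/δ) (32*K/(δ^2*ε)) < (k:ℝ) + 2 := by linarith [hN]
  have hk2a : 2/δ < (k:ℝ) + 2 := lt_of_le_of_lt (le_max_left _ _) hk2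
  have hk2b : 32*K/(δ^2*ε) < (k:ℝ) + 2 := lt_of_le_of_lt (le_max_right _ _) hk2
  have hkpos : (0:ℝ) < (k:ℝ) + 2 := by positivity
  set r := rseq k with hrdef
  have hr0 : 0 ≤ r := rseq_nonneg k
  have hr1 : r < 1 := rseq_lt_one k
  have h1r : 1 - r = 1/((k:ℝ)+2) := one_sub_rseq k
  have hrδ : 1 - r ≤ δ/2 := by
    rw [h1r]
    rw [div_lt_iff₀ hδ] at hk2a
    rw [div_le_div_iff₀ hkpos (by norm_num)]
    linarith
  set w : ℂ := (r:ℂ) * η with hwdef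
  have hwabs : ‖w‖ = r := abs_real_mul r hr0 η
  have hw1 : ‖w‖ < 1 := by rw [hwabs]; exact hr1
  have hPint : ∫ ξ : Circle, P w ξ ∂mc = 1 := integral_P w hw1
  have hPcont : Continuous (fun ξ : Circle => P w ξ) := continuous_P w hw1
  have hPI : Integrable (fun ξ : Circle => P w ξ) mc := cont_integrable hPcont mc
  have hfPI : Integrable (fun ξ : Circle => f ξ * P w ξ) mc :=
    cont_integrable (hf.mul hPcont) mc
  have hsubI : Integrable (fun ξ : Circle => (f ξ - f η) * P w ξ) mc :=
    cont_integrable (((hf.sub continuous_const)).mul hPcont) mc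
  set c : ℝ := 2*K*(1-r^2)*4/δ^2 with hcdef
  have hc0 : 0 ≤ c := by
    have : (0:ℝ) ≤ 1 - r^2 := by nlinarith
    positivity
  have hclt : c < ε/2 := by
    have h1 : 1 - r^2 ≤ 2*(1-r) := by nlinarith
    have h2 : 1 - r^2 ≤ 2/((k:ℝ)+2) := by
      have e : 2*(1-r) = 2/((k:ℝ)+2) := by rw [h1r]; ring
      linarith [h1, e]
    have h3 : c ≤ 16*K/(δ^2*((k:ℝ)+2)) := by
      rw [hcdef]
      rw [div_le_div_iff₀ (by positivity) (by positivity)]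
      have hKnn : (0:ℝ) ≤ 2*K*4*δ^2 := by positivity
      have := mul_le_mul_of_nonneg_left h2 (by positivity : (0:ℝ) ≤ 2*K*4*δ^2)
      calc 2*K*(1-r^2)*4*(δ^2*((k:ℝ)+2)) = (2*K*4*δ^2) * ((1-r^2)*((k:ℝ)+2)) := by ring
        _ ≤ (2*K*4*δ^2) * (2/((k:ℝ)+2)*((k:ℝ)+2)) := by
            apply mul_le_mul_of_nonneg_left _ hKnn
            apply mul_le_mul_of_nonneg_right h2 (le_of_lt hkpos)
        _ = 16*K*δ^2 := by field_simp; ring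
    have h4 : 16*K/(δ^2*((k:ℝ)+2)) < ε/2 := by
      rw [div_lt_iff₀ (by positivity)]
      rw [div_lt_iff₀ (by positivity)] at hk2b
      nlinarith [hk2b, hδ, hε, hK]
    linarith
  -- the estimate
  have hdiff : (∫ ξ : Circle, f ξ * P w ξ ∂mc) - f η
      = ∫ ξ : Circle, (f ξ - f η) * P w ξ ∂mc := by
    rw [show (fun ξ : Circle => (f ξ - f η) * P w ξ)
        = fun ξ : Circle => f ξ * P w ξ - f η * P w ξ by ext ξ; ring]
    rw [integral_sub hfPI (hPI.const_mul (f η)), integral_const_mul, hPint, mul_one]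
  rw [Real.dist_eq, hdiff]
  have hbd : ∀ ξ : Circle, |(f ξ - f η) * P w ξ| ≤ ε/4 * P w ξ + c := by
    intro ξ
    rw [abs_mul, _root_.abs_of_nonneg (P_nonneg w (le_of_lt hw1) ξ)]
    exact poisson_pointwise_bound (le_of_lt hK) hδ (by linarith) hfK η hδf' hr0 hr1 hrδ ξ
  have habs : |∫ ξ : Circle, (f ξ - f η) * P w ξ ∂mc|
      ≤ ∫ ξ : Circle, (ε/4 * P w ξ + c) ∂mc := by
    calc |∫ ξ : Circle, (f ξ - f η) * P w ξ ∂mc|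
        ≤ ∫ ξ : Circle, |(f ξ - f η) * P w ξ| ∂mc := by
          simpa [Real.norm_eq_abs, abs_mul] using
            norm_integral_le_integral_norm (fun ξ : Circle => (f ξ - f η) * P w ξ) (μ := mc)
      _ = ∫ ξ : Circle, |f ξ - f η| * |P w ξ| ∂mc := by
          congr 1; ext ξ; rw [abs_mul]
      _ ≤ ∫ ξ : Circle, (ε/4 * P w ξ + c) ∂mc := by
          apply integral_mono (by simpa [abs_mul] using hsubI.abs)
            ((hPI.const_mul (ε/4)).add (integrable_const c))
          intro ξ
          show |f ξ - f η| * |P w ξ| ≤ ε/4 * P w ξ + c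
          rw [← abs_mul]
          exact hbd ξ
  have hrhs : ∫ ξ : Circle, (ε/4 * P w ξ + c) ∂mc = ε/4 + c := by
    rw [integral_add (hPI.const_mul (ε/4)) (integrable_const c), integral_const_mul, hPint,
      integral_const]
    simp
  rw [hrhs] at habs
  linarith

section Theta

variable {θ : ℂ → ℂ}

lemma theta_lt_one (hθd : DifferentiableOn ℂ θ (Metric.ball 0 1))
    (hθb : ∀ z ∈ Metric.ball (0:ℂ) 1, ‖θ z‖ ≤ 1) (hnc : IsNonconstant θ) :
    ∀ z ∈ Metric.ball (0:ℂ) 1, ‖θ z‖ < 1 := by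
  intro z hz
  rcases lt_or_eq_of_le (hθb z hz) with h | h
  · exact h
  · exfalso
    have hmax : IsMaxOn (norm ∘ θ) (Metric.ball (0:ℂ) 1) z := by
      intro w hw
      simp only [Function.comp_apply, Set.mem_setOf_eq]
      rw [h]
      exact hθb w hw
    have heq := Complex.eqOn_of_isPreconnected_of_isMaxOn_norm
      (convex_ball (0:ℂ) 1).isPreconnected Metric.isOpen_ball hθd hz hmax
    obtain ⟨x, hx, y, hy, hne⟩ := hnc
    exact hne ((heq hx).trans (heq hy).symm)

lemma clark_poisson {α : Circle} {μα : Measure Circle} (h : IsClarkMeasure θ α μα)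
    (hlt : ∀ z ∈ Metric.ball (0:ℂ) 1, ‖θ z‖ < 1)
    {z : ℂ} (hz : z ∈ Metric.ball (0:ℂ) 1) :
    ∫ ξ : Circle, P z ξ ∂μα = P (θ z) α := by
  rw [P_eq_re (θ z) (hlt z hz) α]
  exact h.2 z hz

lemma clark_mass {α : Circle} {μα : Measure Circle} (h : IsClarkMeasure θ α μα)
    (hlt : ∀ z ∈ Metric.ball (0:ℂ) 1, ‖θ z‖ < 1) :
    μα Set.univ = ENNReal.ofReal (P (θ 0) α) := by
  haveI := h.1
  have h0 : (0:ℂ) ∈ Metric.ball (0:ℂ) 1 := by simp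
  have key := clark_poisson h hlt h0
  have hP0 : ∀ ξ : Circle, P (0:ℂ) ξ = 1 := by
    intro ξ
    unfold P
    simp [(Circle.norm_coe ξ)]
  simp only [hP0] at key
  rw [integral_const] at key
  simp only [smul_eq_mul, mul_one] at key
  rw [← key, measureReal_def, ENNReal.ofReal_toReal (measure_ne_top μα _)]

end Theta

section Main

variable {θ : ℂ → ℂ}

lemma cont_integrable_prod {E : Type*} [NormedAddCommGroup E] {f : Circle × Circle → E}
    (hf : Continuous f) (μ ν : Measure Circle) [IsFiniteMeasure μ] [IsFiniteMeasure ν] :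
    Integrable f (μ.prod ν) :=
  integrableOn_univ.mp (hf.continuousOn.integrableOn_compact isCompact_univ)

lemma rmul_mem_ball (k : ℕ) (ξ : Circle) : ((rseq k : ℂ) * ξ) ∈ Metric.ball (0:ℂ) 1 := by
  rw [Metric.mem_ball, Complex.dist_eq, sub_zero, abs_rseq_mul]
  exact rseq_lt_one k

/-- Joint continuity of `(ξ, η) ↦ P (r_k ξ) η`. -/
lemma continuous_P_pair (k : ℕ) :
    Continuous (fun p : Circle × Circle => P ((rseq k : ℂ) * p.1) p.2) := by
  have hw : ∀ ξ : Circle, ‖(rseq k : ℂ) * ξ‖ < 1 := by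
    intro ξ; rw [abs_rseq_mul]; exact rseq_lt_one k
  unfold P
  apply Continuous.div
  · exact continuous_const.sub ((continuous_norm.comp
      (continuous_const.mul (continuous_coe.comp continuous_fst))).pow 2)
  · exact (continuous_norm.comp ((continuous_coe.comp continuous_snd).sub
      (continuous_const.mul (continuous_coe.comp continuous_fst)))).pow 2
  · intro p
    have := circle_sub_abs_pos _ (hw p.1) p.2
    positivity

/-- Joint continuity of `(α, ξ) ↦ P (θ (r_k ξ)) α`. -/
lemma continuous_theta_P (hθd : DifferentiableOn ℂ θ (Metric.ball 0 1))
    (hlt : ∀ z ∈ Metric.ball (0:ℂ) 1, ‖θ z‖ < 1) (k : ℕ) :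
    Continuous (fun p : Circle × Circle => P (θ ((rseq k : ℂ) * p.2)) p.1) := by
  have hg : Continuous (fun ξ : Circle => θ ((rseq k:ℂ) * ξ)) := by
    apply hθd.continuousOn.comp_continuous (continuous_const.mul continuous_coe)
    exact fun ξ => rmul_mem_ball k ξ
  have hwlt : ∀ ξ : Circle, ‖θ ((rseq k:ℂ) * ξ)‖ < 1 :=
    fun ξ => hlt _ (rmul_mem_ball k ξ)
  unfold P
  apply Continuous.div
  · exact continuous_const.sub ((continuous_norm.comp (hg.comp continuous_snd)).pow 2)
  · exact (continuous_norm.comp ((continuous_coe.comp continuous_fst).sub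
      (hg.comp continuous_snd))).pow 2
  · intro p
    have := circle_sub_abs_pos _ (hwlt p.2) p.1
    positivity

/-- The Poisson approximants to `∫ f dμ_α`. -/
def Afun (θ : ℂ → ℂ) (f : Circle → ℝ) (k : ℕ) (α : Circle) : ℝ :=
  ∫ ξ : Circle, f ξ * P (θ ((rseq k : ℂ) * ξ)) α ∂mc

lemma Afun_measurable (hθd : DifferentiableOn ℂ θ (Metric.ball 0 1))
    (hlt : ∀ z ∈ Metric.ball (0:ℂ) 1, ‖θ z‖ < 1)
    {f : Circle → ℝ} (hf : Continuous f) (k : ℕ) : Measurable (Afun θ f k) := by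
  have hc : Continuous (fun p : Circle × Circle => f p.2 * P (θ ((rseq k:ℂ)*p.2)) p.1) :=
    (hf.comp continuous_snd).mul (continuous_theta_P hθd hlt k)
  exact hc.stronglyMeasurable.integral_prod_right'.measurable

/-- Rewriting `Afun` by Fubini and the Clark property. -/
lemma Afun_eq {α : Circle} {μα : Measure Circle} (h : IsClarkMeasure θ α μα)
    (hlt : ∀ z ∈ Metric.ball (0:ℂ) 1, ‖θ z‖ < 1)
    {f : Circle → ℝ} (hf : Continuous f) (k : ℕ) :
    Afun θ f k α = ∫ η : Circle, (∫ ξ : Circle, f ξ * P ((rseq k:ℂ)*η) ξ ∂mc) ∂μα := by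
  haveI := h.1
  have h1 : ∀ ξ : Circle, f ξ * P (θ ((rseq k:ℂ)*ξ)) α
      = ∫ η : Circle, f ξ * P ((rseq k:ℂ)*ξ) η ∂μα := by
    intro ξ
    rw [integral_const_mul, clark_poisson h hlt (rmul_mem_ball k ξ)]
  have hint : Integrable (Function.uncurry
      (fun ξ η : Circle => f ξ * P ((rseq k:ℂ)*ξ) η)) (mc.prod μα) := by
    apply cont_integrable_prod
    exact (hf.comp continuous_fst).mul (continuous_P_pair k)
  calc Afun θ f k α = ∫ ξ : Circle, ∫ η : Circle, f ξ * P ((rseq k:ℂ)*ξ) η ∂μα ∂mc := by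
        unfold Afun; exact integral_congr_ae (Filter.Eventually.of_forall h1)
    _ = ∫ η : Circle, ∫ ξ : Circle, f ξ * P ((rseq k:ℂ)*ξ) η ∂mc ∂μα :=
        integral_integral_swap hint
    _ = ∫ η : Circle, ∫ ξ : Circle, f ξ * P ((rseq k:ℂ)*η) ξ ∂mc ∂μα := by
        congr 1
        ext η
        congr 1
        ext ξ
        rw [P_symm]

lemma inner_norm_bound (k : ℕ) (η : Circle) {f : Circle → ℝ} (hf : Continuous f)
    {K : ℝ} (hK : ∀ ξ, |f ξ| ≤ K) :
    ‖∫ ξ : Circle, f ξ * P ((rseq k:ℂ)*η) ξ ∂mc‖ ≤ K := by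
  have hw1 : ‖(rseq k:ℂ)*η‖ < 1 := by
    rw [abs_rseq_mul]; exact rseq_lt_one k
  have hPc := continuous_P _ hw1
  calc ‖∫ ξ : Circle, f ξ * P ((rseq k:ℂ)*η) ξ ∂mc‖
      ≤ ∫ ξ : Circle, ‖f ξ * P ((rseq k:ℂ)*η) ξ‖ ∂mc := norm_integral_le_integral_norm _
    _ ≤ ∫ ξ : Circle, K * P ((rseq k:ℂ)*η) ξ ∂mc := by
        apply integral_mono
        · exact (cont_integrable ((hf.mul hPc)) mc).norm
        · exact (cont_integrable hPc mc).const_mul K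
        · intro ξ
          show ‖f ξ * P ((rseq k:ℂ)*η) ξ‖ ≤ K * P ((rseq k:ℂ)*η) ξ
          rw [Real.norm_eq_abs, abs_mul,
            _root_.abs_of_nonneg (P_nonneg _ (le_of_lt hw1) ξ)]
          exact mul_le_mul_of_nonneg_right (hK ξ) (P_nonneg _ (le_of_lt hw1) ξ)
    _ = K := by rw [integral_const_mul, integral_P _ hw1, mul_one]

lemma Afun_tendsto {α : Circle} {μα : Measure Circle} (h : IsClarkMeasure θ α μα)
    (hlt : ∀ z ∈ Metric.ball (0:ℂ) 1, ‖θ z‖ < 1)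
    {f : Circle → ℝ} (hf : Continuous f) {K : ℝ} (hK : ∀ ξ, |f ξ| ≤ K) :
    Filter.Tendsto (fun k => Afun θ f k α) Filter.atTop (nhds (∫ ξ : Circle, f ξ ∂μα)) := by
  haveI := h.1
  have hrw : ∀ k, Afun θ f k α
      = ∫ η : Circle, (∫ ξ : Circle, f ξ * P ((rseq k:ℂ)*η) ξ ∂mc) ∂μα :=
    fun k => Afun_eq h hlt hf k
  simp only [hrw]
  apply tendsto_integral_of_dominated_convergence (fun _ => K)
  · intro k
    have hc : Continuous (fun p : Circle × Circle => f p.2 * P ((rseq k:ℂ)*p.1) p.2) :=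
      (hf.comp continuous_snd).mul (continuous_P_pair k)
    exact hc.stronglyMeasurable.integral_prod_right'.aestronglyMeasurable
  · exact integrable_const K
  · intro k
    exact Filter.Eventually.of_forall (fun η => inner_norm_bound k η hf hK)
  · exact Filter.Eventually.of_forall (fun η => poisson_approx hf η)

end Main

section Main2

variable {θ : ℂ → ℂ}

lemma Afun_integral (hθd : DifferentiableOn ℂ θ (Metric.ball 0 1))
    (hlt : ∀ z ∈ Metric.ball (0:ℂ) 1, ‖θ z‖ < 1)
    {f : Circle → ℝ} (hf : Continuous f) (k : ℕ) :
    ∫ α : Circle, Afun θ f k α ∂mc = ∫ ξ : Circle, f ξ ∂mc := by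
  have hint : Integrable (Function.uncurry
      (fun α ξ : Circle => f ξ * P (θ ((rseq k:ℂ)*ξ)) α)) (mc.prod mc) := by
    apply cont_integrable_prod
    exact (hf.comp continuous_snd).mul (continuous_theta_P hθd hlt k)
  calc ∫ α : Circle, Afun θ f k α ∂mc
      = ∫ ξ : Circle, ∫ α : Circle, f ξ * P (θ ((rseq k:ℂ)*ξ)) α ∂mc ∂mc :=
        integral_integral_swap hint
    _ = ∫ ξ : Circle, f ξ ∂mc := by
        congr 1
        ext ξ
        rw [integral_const_mul, integral_P _ (hlt _ (rmul_mem_ball k ξ)), mul_one]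

/-- Measurability of `α ↦ ∫ f dμ_α` for continuous `f`. -/
lemma measurable_integral_clark (hθd : DifferentiableOn ℂ θ (Metric.ball 0 1))
    (hlt : ∀ z ∈ Metric.ball (0:ℂ) 1, ‖θ z‖ < 1)
    {μ : Circle → Measure Circle} (hμ : ∀ α : Circle, IsClarkMeasure θ α (μ α))
    {f : Circle → ℝ} (hf : Continuous f) :
    Measurable (fun α : Circle => ∫ ξ : Circle, f ξ ∂(μ α)) := by
  obtain ⟨K₀, hK₀⟩ := (isCompact_range hf).isBounded.exists_norm_le
  have hK : ∀ ξ, |f ξ| ≤ K₀ := fun ξ => by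
    simpa [Real.norm_eq_abs] using hK₀ _ (Set.mem_range_self ξ)
  apply measurable_of_tendsto_metrizable (fun k => Afun_measurable hθd hlt hf k)
  rw [tendsto_pi_nhds]
  intro α
  exact Afun_tendsto (hμ α) hlt hf hK

/-- Aleksandrov's disintegration for continuous functions. -/
lemma integral_integral_clark (hθd : DifferentiableOn ℂ θ (Metric.ball 0 1))
    (hlt : ∀ z ∈ Metric.ball (0:ℂ) 1, ‖θ z‖ < 1)
    {μ : Circle → Measure Circle} (hμ : ∀ α : Circle, IsClarkMeasure θ α (μ α))
    {f : Circle → ℝ} (hf : Continuous f) :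
    ∫ α : Circle, (∫ ξ : Circle, f ξ ∂(μ α)) ∂mc = ∫ ξ : Circle, f ξ ∂mc := by
  obtain ⟨K₀, hK₀⟩ := (isCompact_range hf).isBounded.exists_norm_le
  have hK : ∀ ξ, |f ξ| ≤ K₀ := fun ξ => by
    simpa [Real.norm_eq_abs] using hK₀ _ (Set.mem_range_self ξ)
  have hK0 : 0 ≤ K₀ := le_trans (abs_nonneg _) (hK (1 : Circle))
  have h0lt : ‖θ 0‖ < 1 := hlt 0 (by simp)
  -- bound on Afun
  have hbd : ∀ k α, ‖Afun θ f k α‖ ≤ K₀ * P (θ 0) α := by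
    intro k α
    haveI := (hμ α).1
    rw [Afun_eq (hμ α) hlt hf k]
    have hmass : (μ α Set.univ).toReal = P (θ 0) α := by
      rw [clark_mass (hμ α) hlt, ENNReal.toReal_ofReal (P_nonneg _ (le_of_lt h0lt) α)]
    calc ‖∫ η : Circle, (∫ ξ : Circle, f ξ * P ((rseq k:ℂ)*η) ξ ∂mc) ∂(μ α)‖
        ≤ ∫ η : Circle, ‖∫ ξ : Circle, f ξ * P ((rseq k:ℂ)*η) ξ ∂mc‖ ∂(μ α) :=
          norm_integral_le_integral_norm _
      _ ≤ ∫ _η : Circle, K₀ ∂(μ α) := by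
          apply integral_mono
          · have hc : Continuous (fun p : Circle × Circle => f p.2 * P ((rseq k:ℂ)*p.1) p.2) :=
              (hf.comp continuous_snd).mul (continuous_P_pair k)
            have hsm : StronglyMeasurable
                (fun η : Circle => ∫ ξ : Circle, f ξ * P ((rseq k:ℂ)*η) ξ ∂mc) :=
              hc.stronglyMeasurable.integral_prod_right'
            refine ⟨(hsm.aestronglyMeasurable (μ := μ α)).norm, ?_⟩
            apply HasFiniteIntegral.of_bounded (C := K₀)
            apply Filter.Eventually.of_forall
            intro η
            simpa [Real.norm_eq_abs, abs_abs] using inner_norm_bound k η hf hK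
          · exact integrable_const K₀
          · intro η
            exact inner_norm_bound k η hf hK
      _ = (μ α Set.univ).toReal * K₀ := by rw [integral_const]; simp [measureReal_def]
      _ = K₀ * P (θ 0) α := by rw [hmass]; ring
  have hmeas : ∀ k, AEStronglyMeasurable (Afun θ f k) mc :=
    fun k => (Afun_measurable hθd hlt hf k).aestronglyMeasurable
  have hboundI : Integrable (fun α : Circle => K₀ * P (θ 0) α) mc :=
    (cont_integrable (continuous_P _ h0lt) mc).const_mul K₀
  have hlim : Filter.Tendsto (fun k => ∫ α : Circle, Afun θ f k α ∂mc) Filter.atTop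
      (nhds (∫ α : Circle, (∫ ξ : Circle, f ξ ∂(μ α)) ∂mc)) := by
    apply tendsto_integral_of_dominated_convergence _ hmeas hboundI
    · exact fun k => Filter.Eventually.of_forall (hbd k)
    · exact Filter.Eventually.of_forall (fun α => Afun_tendsto (hμ α) hlt hf hK)
  have hconst : ∀ k, ∫ α : Circle, Afun θ f k α ∂mc = ∫ ξ : Circle, f ξ ∂mc :=
    Afun_integral hθd hlt hf
  simp only [hconst] at hlim
  exact (tendsto_nhds_unique hlim tendsto_const_nhds)

end Main2

section Closed

/-- Continuous approximations to the indicator of a closed set. -/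
def fcl (F : Set Circle) (j : ℕ) (x : Circle) : ℝ :=
  max 0 (1 - ((j:ℝ)+1) * Metric.infDist x F)

lemma fcl_continuous (F : Set Circle) (j : ℕ) : Continuous (fcl F j) :=
  continuous_const.max (continuous_const.sub
    (continuous_const.mul (Metric.continuous_infDist_pt (s := F))))

lemma fcl_nonneg (F : Set Circle) (j : ℕ) (x : Circle) : 0 ≤ fcl F j x := le_max_left _ _

lemma fcl_le_one (F : Set Circle) (j : ℕ) (x : Circle) : fcl F j x ≤ 1 := by
  apply max_le (by norm_num)
  have h1 : 0 ≤ Metric.infDist x F := Metric.infDist_nonneg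
  have h2 : (0:ℝ) ≤ (j:ℝ)+1 := by positivity
  nlinarith

lemma fcl_one_of_mem (F : Set Circle) (j : ℕ) {x : Circle} (hx : x ∈ F) : fcl F j x = 1 := by
  unfold fcl
  rw [Metric.infDist_zero_of_mem hx]
  norm_num

lemma fcl_zero_outside (F : Set Circle) (hne : F.Nonempty) (j : ℕ) {x : Circle}
    (hx : x ∉ Metric.thickening (1/((j:ℝ)+1)) F) : fcl F j x = 0 := by
  rw [Metric.mem_thickening_iff_infDist_lt hne, not_lt] at hx
  have hj : (0:ℝ) < (j:ℝ)+1 := by positivity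
  have : 1 - ((j:ℝ)+1) * Metric.infDist x F ≤ 0 := by
    rw [div_le_iff₀ hj] at hx
    nlinarith
  unfold fcl
  exact max_eq_left this

lemma fcl_squeeze {F : Set Circle} (hF : IsClosed F) (hne : F.Nonempty)
    (ν : Measure Circle) [IsFiniteMeasure ν] :
    Filter.Tendsto (fun j : ℕ => ENNReal.ofReal (∫ x : Circle, fcl F j x ∂ν))
      Filter.atTop (nhds (ν F)) := by
  have hint : ∀ j, Integrable (fcl F j) ν := fun j => cont_integrable (fcl_continuous F j) ν
  have hofReal : ∀ j, ENNReal.ofReal (∫ x : Circle, fcl F j x ∂ν)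
      = ∫⁻ x : Circle, ENNReal.ofReal (fcl F j x) ∂ν := fun j =>
    ofReal_integral_eq_lintegral_ofReal (hint j)
      (Filter.Eventually.of_forall (fcl_nonneg F j))
  have hlower : ∀ j, ν F ≤ ENNReal.ofReal (∫ x : Circle, fcl F j x ∂ν) := by
    intro j
    rw [hofReal]
    calc ν F = ∫⁻ x : Circle, F.indicator (fun _ => 1) x ∂ν := by
          rw [lintegral_indicator hF.measurableSet]; simp
      _ ≤ ∫⁻ x : Circle, ENNReal.ofReal (fcl F j x) ∂ν := by
          apply lintegral_mono
          intro x
          by_cases hx : x ∈ F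
          · simp [Set.indicator_of_mem hx, fcl_one_of_mem F j hx]
          · simp [Set.indicator_of_notMem hx]
  have hupper : ∀ j, ENNReal.ofReal (∫ x : Circle, fcl F j x ∂ν)
      ≤ ν (Metric.thickening (1/((j:ℝ)+1)) F) := by
    intro j
    rw [hofReal]
    calc ∫⁻ x : Circle, ENNReal.ofReal (fcl F j x) ∂ν
        ≤ ∫⁻ x : Circle, (Metric.thickening (1/((j:ℝ)+1)) F).indicator (fun _ => 1) x ∂ν := by
          apply lintegral_mono
          intro x
          by_cases hx : x ∈ Metric.thickening (1/((j:ℝ)+1)) F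
          · simp only [Set.indicator_of_mem hx]
            exact ENNReal.ofReal_le_of_le_toReal (by simpa using fcl_le_one F j x)
          · simp [Set.indicator_of_notMem hx, fcl_zero_outside F hne j hx]
      _ = ν (Metric.thickening (1/((j:ℝ)+1)) F) := by
          rw [lintegral_indicator Metric.isOpen_thickening.measurableSet]; simp
  have hthick : Filter.Tendsto (fun j : ℕ => ν (Metric.thickening (1/((j:ℝ)+1)) F))
      Filter.atTop (nhds (ν F)) := by
    have h1 : Filter.Tendsto (fun j : ℕ => 1/((j:ℝ)+1)) Filter.atTop (nhdsWithin 0 (Set.Ioi 0)) := by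
      apply tendsto_nhdsWithin_of_tendsto_nhds_of_eventually_within
      · exact tendsto_one_div_add_atTop_nhds_zero_nat
      · exact Filter.Eventually.of_forall (fun j => Set.mem_Ioi.mpr (by positivity))
    exact (tendsto_measure_thickening_of_isClosed
      ⟨1, by norm_num, measure_ne_top ν _⟩ hF).comp h1
  exact tendsto_of_tendsto_of_tendsto_of_le_of_le tendsto_const_nhds hthick hlower hupper

end Closed

section ClosedCase

lemma closed_case {θ : ℂ → ℂ} (hθd : DifferentiableOn ℂ θ (Metric.ball 0 1))
    (hlt : ∀ z ∈ Metric.ball (0:ℂ) 1, ‖θ z‖ < 1)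
    {μ : Circle → Measure Circle} (hμ : ∀ α : Circle, IsClarkMeasure θ α (μ α))
    {F : Set Circle} (hF : IsClosed F) :
    Measurable (fun α : Circle => μ α F) ∧ ∫⁻ α : Circle, μ α F ∂mc = mc F := by
  rcases F.eq_empty_or_nonempty with rfl | hne
  · exact ⟨by simp [measurable_const], by simp⟩
  haveI : ∀ α, IsFiniteMeasure (μ α) := fun α => (hμ α).1
  have h0lt : ‖θ 0‖ < 1 := hlt 0 (by simp)
  set C0 : ℝ := 2 / (1 - ‖θ 0‖)^2 with hC0
  have hPC0 : ∀ α : Circle, P (θ 0) α ≤ C0 := fun α => P_le _ h0lt α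
  have hgmeas : ∀ j : ℕ, Measurable (fun α : Circle => ∫ ξ : Circle, fcl F j ξ ∂(μ α)) :=
    fun j => measurable_integral_clark hθd hlt hμ (fcl_continuous F j)
  have hgtend : ∀ α : Circle, Filter.Tendsto
      (fun j : ℕ => ENNReal.ofReal (∫ ξ : Circle, fcl F j ξ ∂(μ α)))
      Filter.atTop (nhds (μ α F)) :=
    fun α => fcl_squeeze hF hne (μ α)
  have hmeasF : Measurable (fun α : Circle => μ α F) := by
    apply ENNReal.measurable_of_tendsto (fun j => (hgmeas j).ennreal_ofReal)
    rw [tendsto_pi_nhds]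
    exact hgtend
  refine ⟨hmeasF, ?_⟩
  have hgle : ∀ (j : ℕ) (α : Circle), (∫ ξ : Circle, fcl F j ξ ∂(μ α)) ≤ P (θ 0) α := by
    intro j α
    have hmass : (μ α Set.univ).toReal = P (θ 0) α := by
      rw [clark_mass (hμ α) hlt, ENNReal.toReal_ofReal (P_nonneg _ (le_of_lt h0lt) α)]
    calc (∫ ξ : Circle, fcl F j ξ ∂(μ α)) ≤ ∫ _ξ : Circle, (1:ℝ) ∂(μ α) := by
          apply integral_mono (cont_integrable (fcl_continuous F j) (μ α)) (integrable_const 1)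
          exact fun ξ => fcl_le_one F j ξ
      _ = (μ α Set.univ).toReal := by rw [integral_const]; simp [measureReal_def]
      _ = P (θ 0) α := hmass
  have hlim1 : Filter.Tendsto
      (fun j : ℕ => ∫⁻ α : Circle, ENNReal.ofReal (∫ ξ : Circle, fcl F j ξ ∂(μ α)) ∂mc)
      Filter.atTop (nhds (∫⁻ α : Circle, μ α F ∂mc)) := by
    apply tendsto_lintegral_of_dominated_convergence (bound := fun _ => ENNReal.ofReal C0)
    · exact fun j => (hgmeas j).ennreal_ofReal
    · intro j
      exact Filter.Eventually.of_forall
        (fun α => ENNReal.ofReal_le_ofReal ((hgle j α).trans (hPC0 α)))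
    · simp [lintegral_const]
    · exact Filter.Eventually.of_forall hgtend
  have heq : ∀ j : ℕ, ∫⁻ α : Circle, ENNReal.ofReal (∫ ξ : Circle, fcl F j ξ ∂(μ α)) ∂mc
      = ENNReal.ofReal (∫ ξ : Circle, fcl F j ξ ∂mc) := by
    intro j
    rw [← ofReal_integral_eq_lintegral_ofReal]
    · rw [integral_integral_clark hθd hlt hμ (fcl_continuous F j)]
    · refine ⟨(hgmeas j).aestronglyMeasurable, ?_⟩
      apply HasFiniteIntegral.of_bounded (C := C0)
      apply Filter.Eventually.of_forall
      intro α
      rw [Real.norm_eq_abs, _root_.abs_of_nonneg (integral_nonneg (fcl_nonneg F j))]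
      exact (hgle j α).trans (hPC0 α)
    · exact Filter.Eventually.of_forall (fun α => integral_nonneg (fcl_nonneg F j))
  simp only [heq] at hlim1
  exact tendsto_nhds_unique hlim1 (fcl_squeeze hF hne mc)

end ClosedCase

end Aleks

/-- Aleksandrov's disintegration formula: the Clark family `{μ_α}_{α ∈ 𝕋}` of a
non-constant inner function is a canonical system of measures over `(𝕋, m)`:
for every Borel set `B ⊆ 𝕋`, `α ↦ μ_α(B)` is measurable and `∫_𝕋 μ_α(B) dm(α) = m(B)`. -/
theorem aleksandrov_disintegration (θ : ℂ → ℂ) (hθ : IsInner θ) (hnc : IsNonconstant θ)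
    (μ : Circle → Measure Circle) (hμ : ∀ α : Circle, IsClarkMeasure θ α (μ α)) :
    ∀ B : Set Circle, MeasurableSet B →
      Measurable (fun α : Circle => μ α B) ∧
      ∫⁻ α : Circle, μ α B ∂mc = mc B := by
  obtain ⟨hθd, hθb, -⟩ := hθ
  have hlt := Aleks.theta_lt_one hθd hθb hnc
  haveI : ∀ α, IsFiniteMeasure (μ α) := fun α => (hμ α).1
  have huniv := Aleks.closed_case hθd hlt hμ isClosed_univ
  intro B hB
  refine MeasurableSpace.induction_on_inter
    (C := fun B _ => Measurable (fun α : Circle => μ α B) ∧ ∫⁻ α : Circle, μ α B ∂mc = mc B)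
    borel_eq_generateFrom_isClosed ?_ ?_ ?_ ?_ ?_ B hB
  · -- π-system
    intro s hs t ht _
    exact hs.inter ht
  · -- empty
    exact ⟨by simp [measurable_const], by simp⟩
  · -- closed sets
    intro t ht
    exact Aleks.closed_case hθd hlt hμ ht
  · -- complement
    intro t htm ⟨hm, hi⟩
    have hrw : ∀ α : Circle, μ α tᶜ = μ α Set.univ - μ α t :=
      fun α => measure_compl htm (measure_ne_top _ _)
    constructor
    · simp only [hrw]
      exact huniv.1.sub hm
    · have hfin : ∫⁻ α : Circle, μ α t ∂mc ≠ ⊤ := by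
        rw [hi]
        exact measure_ne_top _ _
      calc ∫⁻ α : Circle, μ α tᶜ ∂mc
          = ∫⁻ α : Circle, (μ α Set.univ - μ α t) ∂mc := by
            apply lintegral_congr_ae
            exact Filter.Eventually.of_forall hrw
        _ = (∫⁻ α : Circle, μ α Set.univ ∂mc) - ∫⁻ α : Circle, μ α t ∂mc := by
            apply lintegral_sub hm hfin
            exact Filter.Eventually.of_forall (fun α => measure_mono (Set.subset_univ t))
        _ = mc Set.univ - mc t := by rw [huniv.2, hi]
        _ = mc tᶜ := (measure_compl htm (measure_ne_top _ _)).symm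
  · -- countable disjoint unions
    intro g hdisj hgm hC
    have hrw : ∀ α : Circle, μ α (⋃ i, g i) = ∑' i, μ α (g i) :=
      fun α => measure_iUnion hdisj hgm
    constructor
    · simp only [hrw]
      exact Measurable.ennreal_tsum (fun i => (hC i).1)
    · calc ∫⁻ α : Circle, μ α (⋃ i, g i) ∂mc
          = ∫⁻ α : Circle, ∑' i, μ α (g i) ∂mc := by
            apply lintegral_congr_ae
            exact Filter.Eventually.of_forall hrw
        _ = ∑' i, ∫⁻ α : Circle, μ α (g i) ∂mc :=
            lintegral_tsum (fun i => ((hC i).1).aemeasurable)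
        _ = ∑' i, mc (g i) := tsum_congr (fun i => (hC i).2)
        _ = mc (⋃ i, g i) := (measure_iUnion hdisj hgm).symm
end
end

section
/- Let θ be a non-constant inner function on the open unit disk 𝔻, with Clark family {μ_α}_{α ∈ 𝕋}, and let ξ ∈ 𝕋, α ∈ 𝕋. Then μ_α({ξ}) > 0 if and only if both θ and its derivative θ′ have finite nontangential limits θ(ξ) and θ′(ξ) at ξ and θ(ξ) = α. -/
open MeasureTheory Complex

noncomputable section

variable {H : Type*} [NormedAddCommGroup H] [InnerProductSpace ℂ H] [CompleteSpace H]

def Complex.abs : AbsoluteValue ℂ ℝ where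
  toFun z := ‖z‖
  map_mul' := norm_mul
  nonneg' := norm_nonneg
  eq_zero' _ := norm_eq_zero
  add_le' := norm_add_le

theorem Complex.norm_eq_abs (z : ℂ) : ‖z‖ = Complex.abs z := rfl

@[simp]
theorem Circle.abs_coe (z : Circle) : Complex.abs (z : ℂ) = 1 := Circle.norm_coe z

@[simp]
theorem Complex.abs_ofReal (r : ℝ) : Complex.abs (r : ℂ) = |r| := Complex.norm_real r

@[simp]
theorem Complex.abs_conj (z : ℂ) : Complex.abs ((starRingEnd ℂ) z) = Complex.abs z :=
  Complex.norm_conj z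

@[simp]
theorem Complex.abs_two : Complex.abs 2 = 2 := Complex.norm_two

@[simp]
theorem Complex.abs_exp (z : ℂ) : Complex.abs (Complex.exp z) = Real.exp z.re := Complex.norm_exp z

theorem Complex.sq_abs (z : ℂ) : Complex.abs z ^ 2 = Complex.normSq z := Complex.sq_norm z

theorem Complex.normSq_eq_abs (z : ℂ) : Complex.normSq z = Complex.abs z ^ 2 :=
  Complex.normSq_eq_norm_sq z

theorem Complex.continuous_abs : Continuous Complex.abs := continuous_norm

section ClarkAux
open Metric Filter Set

lemma circle_coe_continuous : Continuous (fun η : Circle => (η : ℂ)) := continuous_subtype_val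

lemma circle_integrable {E : Type*} [NormedAddCommGroup E] (μ : Measure Circle)
    [IsFiniteMeasure μ] {f : Circle → E} (hf : Continuous f) : Integrable f μ :=
  hf.integrable_of_hasCompactSupport (HasCompactSupport.of_compactSpace f)

lemma abs_coe_sub_pos (η : Circle) {z : ℂ} (hz : Complex.abs z < 1) :
    0 < Complex.abs ((η : ℂ) - z) := by
  have h := norm_sub_norm_le ((η : ℂ)) z
  simp only [Complex.norm_eq_abs, Circle.abs_coe] at h
  linarith

lemma coe_sub_ne (η : Circle) {z : ℂ} (hz : Complex.abs z < 1) : ((η:ℂ) - z) ≠ 0 := by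
  intro h
  have := abs_coe_sub_pos η hz
  rw [h] at this; simp at this

lemma re_div_eq (v w : ℂ) (hv : Complex.abs v = 1) :
    ((v + w) / (v - w)).re = (1 - Complex.abs w ^ 2) / Complex.abs (v - w) ^ 2 := by
  have hv2 : v.re * v.re + v.im * v.im = 1 := by
    have h : Complex.normSq v = 1 := by rw [normSq_eq_abs, hv, one_pow]
    simpa [Complex.normSq_apply] using h
  rcases eq_or_ne v w with rfl | hne
  · simp [hv]
  · have h2 : Complex.normSq (v - w) ≠ 0 := by
      simpa using sub_ne_zero.mpr hne
    rw [Complex.div_re, Complex.sq_abs, Complex.sq_abs, ← add_div]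
    congr 1
    simp only [Complex.normSq_apply, Complex.sub_re, Complex.sub_im, Complex.add_re,
      Complex.add_im]
    ring_nf
    nlinarith [hv2]

section Hfun

variable (μ : Measure Circle) [IsFiniteMeasure μ]

def hfun (z : ℂ) : ℂ := ∫ η : Circle, ((η:ℂ) + z) / ((η:ℂ) - z) ∂μ

def hder (z : ℂ) : ℂ := ∫ η : Circle, (2 * (η:ℂ)) / ((η:ℂ) - z)^2 ∂μ

lemma hfun_integrand_cont {z : ℂ} (hz : Complex.abs z < 1) :
    Continuous fun η : Circle => ((η:ℂ) + z) / ((η:ℂ) - z) := by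
  apply Continuous.div (circle_coe_continuous.add continuous_const)
    (circle_coe_continuous.sub continuous_const)
  exact fun η => coe_sub_ne η hz

lemma hfun_integrable {z : ℂ} (hz : Complex.abs z < 1) :
    Integrable (fun η : Circle => ((η:ℂ) + z) / ((η:ℂ) - z)) μ :=
  circle_integrable μ (hfun_integrand_cont hz)

lemma hfun_re {z : ℂ} (hz : Complex.abs z < 1) :
    (hfun μ z).re = ∫ η : Circle, (1 - Complex.abs z ^ 2) / Complex.abs ((η:ℂ) - z) ^ 2 ∂μ := by
  have h := integral_re (hfun_integrable μ hz)
  simp only [RCLike.re_to_complex] at h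
  rw [hfun, ← h]
  apply integral_congr_ae
  apply Filter.Eventually.of_forall
  intro η
  simp only [RCLike.re_to_complex]
  exact re_div_eq (η:ℂ) z (Circle.abs_coe η)

lemma hfun_hasDerivAt {z₀ : ℂ} (hz₀ : Complex.abs z₀ < 1) :
    HasDerivAt (hfun μ) (hder μ z₀) z₀ := by
  set ε : ℝ := (1 - Complex.abs z₀) / 2 with hε
  have hεpos : 0 < ε := by rw [hε]; linarith
  have hball : ∀ z ∈ ball z₀ ε, Complex.abs z < 1 - ε := by
    intro z hz
    rw [mem_ball] at hz
    have h1 : Complex.abs (z - z₀) < ε := by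
      rw [Complex.dist_eq] at hz; exact hz
    have h2 := norm_sub_norm_le z z₀
    simp only [Complex.norm_eq_abs] at h2
    have : Complex.abs z ≤ Complex.abs z₀ + Complex.abs (z - z₀) := by linarith
    rw [hε] at *
    linarith
  have key := hasDerivAt_integral_of_dominated_loc_of_deriv_le (μ := μ)
    (F := fun (z : ℂ) (η : Circle) => ((η:ℂ) + z) / ((η:ℂ) - z))
    (F' := fun (z : ℂ) (η : Circle) => (2 * (η:ℂ)) / ((η:ℂ) - z)^2)
    (x₀ := z₀) (bound := fun _ => 2 / ε^2) (Metric.ball_mem_nhds z₀ hεpos) ?_ ?_ ?_ ?_ ?_ ?_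
  · exact key.2
  · filter_upwards [Metric.ball_mem_nhds z₀ hεpos] with z hz
    exact (hfun_integrand_cont (by linarith [hball z hz])).aestronglyMeasurable
  · exact hfun_integrable μ hz₀
  · apply Continuous.aestronglyMeasurable
    apply Continuous.div (continuous_const.mul circle_coe_continuous)
      ((circle_coe_continuous.sub continuous_const).pow 2)
    exact fun η => pow_ne_zero 2 (coe_sub_ne η hz₀)
  · apply Filter.Eventually.of_forall
    intro η z hz
    have h1 : Complex.abs z < 1 - ε := hball z hz
    have h2 : ε ≤ Complex.abs ((η:ℂ) - z) := by
      have := norm_sub_norm_le ((η:ℂ)) z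
      simp only [Complex.norm_eq_abs, Circle.abs_coe] at this
      linarith
    rw [Complex.norm_eq_abs, map_div₀, map_mul, map_pow, Circle.abs_coe, Complex.abs_two,
      mul_one]
    apply div_le_div_of_nonneg_left (by norm_num) (by positivity)
    nlinarith
  · exact integrable_const _
  · apply Filter.Eventually.of_forall
    intro η z hz
    have h1 : Complex.abs z < 1 - ε := hball z hz
    have hne : ((η:ℂ) - z) ≠ 0 := coe_sub_ne η (by linarith)
    have hd1 : HasDerivAt (fun w : ℂ => (η:ℂ) + w) 1 z := by
      simpa using (hasDerivAt_id z).const_add ((η:ℂ))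
    have hd2 : HasDerivAt (fun w : ℂ => (η:ℂ) - w) (-1) z := by
      simpa using (hasDerivAt_id z).const_sub ((η:ℂ))
    have := hd1.div hd2 hne
    convert this using 1
    · rfl
    · rfl
    · ring

end Hfun

lemma const_of_re_eq_zero {d : ℂ → ℂ} (hd : DifferentiableOn ℂ d (ball 0 1))
    (hre : ∀ z ∈ ball (0:ℂ) 1, (d z).re = 0) : ∀ z ∈ ball (0:ℂ) 1, d z = d 0 := by
  have h0 : (0:ℂ) ∈ ball (0:ℂ) 1 := by simp
  -- exp (d z) has constant modulus 1
  have hE : DifferentiableOn ℂ (fun z => Complex.exp (d z)) (ball 0 1) :=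
    fun z hz => ((hd z hz).cexp)
  have hnorm : ∀ z ∈ ball (0:ℂ) 1, ‖Complex.exp (d z)‖ = 1 := by
    intro z hz
    rw [Complex.norm_eq_abs, Complex.abs_exp, hre z hz, Real.exp_zero]
  have hmax : IsMaxOn (norm ∘ fun z => Complex.exp (d z)) (ball (0:ℂ) 1) 0 := by
    intro z hz
    show ‖Complex.exp (d z)‖ ≤ ‖Complex.exp (d 0)‖
    rw [hnorm z hz, hnorm 0 h0]
  have heq := Complex.eqOn_of_isPreconnected_of_isMaxOn_norm
    (convex_ball (0:ℂ) 1).isPreconnected isOpen_ball hE h0 hmax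
  -- deriv d = 0 on ball
  have hderiv0 : ∀ z ∈ ball (0:ℂ) 1, fderivWithin ℂ d (ball 0 1) z = 0 := by
    intro z hz
    have hdat : DifferentiableAt ℂ d z := hd.differentiableAt (isOpen_ball.mem_nhds hz)
    have h1 : HasDerivAt (fun w => Complex.exp (d w)) (Complex.exp (d z) * deriv d z) z :=
      hdat.hasDerivAt.cexp
    have h2 : HasDerivAt (fun w => Complex.exp (d w)) 0 z := by
      apply HasDerivAt.congr_of_eventuallyEq (hasDerivAt_const z (Complex.exp (d 0)))
      filter_upwards [isOpen_ball.mem_nhds hz] with w hw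
      exact heq hw
    have h3 : Complex.exp (d z) * deriv d z = 0 := h1.unique h2
    have h4 : deriv d z = 0 := by
      rcases mul_eq_zero.mp h3 with h | h
      · exact absurd h (Complex.exp_ne_zero _)
      · exact h
    rw [fderivWithin_of_isOpen isOpen_ball hz]
    apply ContinuousLinearMap.ext_ring
    rw [ContinuousLinearMap.zero_apply, fderiv_apply_one_eq_deriv]
    exact h4
  intro z hz
  exact (convex_ball (0:ℂ) 1).is_const_of_fderivWithin_eq_zero hd hderiv0 hz h0
lemma inner_abs_lt (θ : ℂ → ℂ) (hd : DifferentiableOn ℂ θ (ball 0 1))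
    (hb : ∀ z ∈ ball (0:ℂ) 1, Complex.abs (θ z) ≤ 1)
    (hnc : ∃ z ∈ ball (0:ℂ) 1, ∃ w ∈ ball (0:ℂ) 1, θ z ≠ θ w) :
    ∀ z ∈ ball (0:ℂ) 1, Complex.abs (θ z) < 1 := by
  intro z hz
  rcases lt_or_eq_of_le (hb z hz) with h | h
  · exact h
  · exfalso
    have hmax : IsMaxOn (norm ∘ θ) (ball (0:ℂ) 1) z := by
      intro w hw
      simpa [Complex.norm_eq_abs, h] using hb w hw
    have heq := Complex.eqOn_of_isPreconnected_of_isMaxOn_norm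
      (convex_ball (0:ℂ) 1).isPreconnected isOpen_ball hd hz hmax
    obtain ⟨x, hx, y, hy, hxy⟩ := hnc
    exact hxy ((heq hx).trans (heq hy).symm)

/-- Schwarz-Pick type lower bound on `1 - |θ z|²`. -/
lemma schwarz_pick_lb (θ : ℂ → ℂ) (hd : DifferentiableOn ℂ θ (ball 0 1))
    (hlt : ∀ z ∈ ball (0:ℂ) 1, Complex.abs (θ z) < 1) (z : ℂ) (hz : z ∈ ball (0:ℂ) 1) :
    (1 - Complex.abs z ^ 2) * (1 - Complex.abs (θ 0)) / (1 + Complex.abs (θ 0))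
      ≤ 1 - Complex.abs (θ z) ^ 2 := by
  set b := θ 0 with hbdef
  have hb0 : (0:ℂ) ∈ ball (0:ℂ) 1 := by simp
  have ha : Complex.abs b < 1 := hlt 0 hb0
  have ha0 : 0 ≤ Complex.abs b := Complex.abs.nonneg b
  have hden : ∀ w : ℂ, Complex.abs w < 1 → (1 - (starRingEnd ℂ) b * w) ≠ 0 := by
    intro w hw hcontra
    have h1 : Complex.abs ((starRingEnd ℂ) b * w) < 1 := by
      rw [map_mul, Complex.abs_conj]
      nlinarith [Complex.abs.nonneg w]
    have h2 : (1:ℂ) = (starRingEnd ℂ) b * w := by linear_combination hcontra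
    rw [← h2] at h1; simp at h1
  set F : ℂ → ℂ := fun w => (θ w - b) / (1 - (starRingEnd ℂ) b * θ w) with hF
  have hFd : DifferentiableOn ℂ F (ball 0 1) := by
    apply DifferentiableOn.div
    · exact hd.sub_const b
    · exact (differentiableOn_const _).sub ((differentiableOn_const _).mul hd)
    · intro w hw; exact hden _ (hlt w hw)
  have hkey : ∀ w : ℂ,
      Complex.normSq (1 - (starRingEnd ℂ) b * w) - Complex.normSq (w - b)
        = (1 - Complex.normSq w) * (1 - Complex.normSq b) := fun w => by
    simp only [Complex.normSq_apply, Complex.sub_re, Complex.sub_im, Complex.mul_re,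
      Complex.mul_im, Complex.one_re, Complex.one_im, Complex.conj_re, Complex.conj_im]
    ring
  have hmaps : MapsTo F (ball (0:ℂ) 1) (ball (0:ℂ) 1) := by
    intro w hw
    have hw1 : Complex.abs (θ w) < 1 := hlt w hw
    have h1 : Complex.normSq (θ w) < 1 := by
      rw [Complex.normSq_eq_abs]; nlinarith [Complex.abs.nonneg (θ w)]
    have h2 : Complex.normSq b < 1 := by
      rw [Complex.normSq_eq_abs]; nlinarith
    have h3 := hkey (θ w)
    have h4 : 0 < Complex.normSq (1 - (starRingEnd ℂ) b * θ w) :=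
      Complex.normSq_pos.2 (hden _ hw1)
    rw [mem_ball_zero_iff, hF]
    simp only []
    rw [norm_div, Complex.norm_eq_abs, Complex.norm_eq_abs, div_lt_one (Complex.abs.pos (hden _ hw1))]
    have h5 : Complex.normSq (θ w - b) < Complex.normSq (1 - (starRingEnd ℂ) b * θ w) := by
      nlinarith [Complex.normSq_nonneg (θ w - b)]
    have e1 : Complex.abs (θ w - b) ^ 2 < Complex.abs (1 - (starRingEnd ℂ) b * θ w) ^ 2 := by
      rwa [Complex.sq_abs, Complex.sq_abs]
    exact lt_of_pow_lt_pow_left₀ 2 (Complex.abs.nonneg _) e1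
  have hF0 : F 0 = 0 := by simp [hF, hbdef]
  have hzlt : Complex.abs z < 1 := by simpa [mem_ball_zero_iff, Complex.norm_eq_abs] using hz
  have hschwarz : Complex.abs (F z) ≤ Complex.abs z :=
    Complex.norm_le_norm_of_mapsTo_ball_self hFd (hmaps.mono_right ball_subset_closedBall) hF0 hzlt
  have hw1 : Complex.abs (θ z) < 1 := hlt z hz
  have hNpos : 0 < Complex.abs (1 - (starRingEnd ℂ) b * θ z) := Complex.abs.pos (hden _ hw1)
  have h5 : Complex.abs (θ z - b) ≤ Complex.abs z * Complex.abs (1 - (starRingEnd ℂ) b * θ z) := by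
    rw [hF] at hschwarz
    simp only [] at hschwarz
    rw [map_div₀] at hschwarz
    calc Complex.abs (θ z - b)
        = Complex.abs (θ z - b) / Complex.abs (1 - (starRingEnd ℂ) b * θ z)
          * Complex.abs (1 - (starRingEnd ℂ) b * θ z) := (div_mul_cancel₀ _ hNpos.ne').symm
    _ ≤ Complex.abs z * Complex.abs (1 - (starRingEnd ℂ) b * θ z) :=
        mul_le_mul_of_nonneg_right hschwarz hNpos.le
  have h6 : Complex.normSq (θ z - b)
      ≤ Complex.abs z ^ 2 * Complex.normSq (1 - (starRingEnd ℂ) b * θ z) := by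
    rw [← Complex.sq_abs, ← Complex.sq_abs]
    nlinarith [Complex.abs.nonneg (θ z - b), Complex.abs.nonneg z, hNpos.le]
  have h3 := hkey (θ z)
  have hlow : 1 - Complex.abs b ≤ Complex.abs (1 - (starRingEnd ℂ) b * θ z) := by
    have h7 := norm_sub_norm_le (1:ℂ) ((starRingEnd ℂ) b * θ z)
    rw [norm_one, norm_mul, Complex.norm_eq_abs, Complex.norm_eq_abs, Complex.norm_eq_abs,
      Complex.abs_conj] at h7
    nlinarith [Complex.abs.nonneg (θ z), hw1.le]
  -- assemble
  have hA2 : 0 ≤ 1 - Complex.abs z ^ 2 := by nlinarith [Complex.abs.nonneg z]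
  have e1 : (1 - Complex.abs z ^ 2) * (1 - Complex.abs b) ^ 2
      ≤ (1 - Complex.abs z ^ 2) * Complex.abs (1 - (starRingEnd ℂ) b * θ z) ^ 2 := by
    apply mul_le_mul_of_nonneg_left _ hA2
    exact pow_le_pow_left₀ (by linarith) hlow 2
  have e2 : (1 - Complex.abs z ^ 2) * Complex.abs (1 - (starRingEnd ℂ) b * θ z) ^ 2
      ≤ (1 - Complex.abs (θ z) ^ 2) * ((1 + Complex.abs b) * (1 - Complex.abs b)) := by
    have hb2 : Complex.normSq b = Complex.abs b ^ 2 := (Complex.sq_abs b).symm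
    have ht2 : Complex.normSq (θ z) = Complex.abs (θ z) ^ 2 := (Complex.sq_abs (θ z)).symm
    have hN2 : Complex.normSq (1 - (starRingEnd ℂ) b * θ z)
        = Complex.abs (1 - (starRingEnd ℂ) b * θ z) ^ 2 := (Complex.sq_abs _).symm
    nlinarith [h3, h6]
  rw [div_le_iff₀ (by linarith : (0:ℝ) < 1 + Complex.abs b)]
  nlinarith [e1.trans e2, ha]
lemma tendsto_radial_point_mass (μ : Measure Circle) [IsFiniteMeasure μ] (ξ : Circle) :
    Tendsto (fun r : ℝ => ∫ η : Circle, (1 - r)^2 / Complex.abs ((η:ℂ) - r * (ξ:ℂ))^2 ∂μ)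
      (nhdsWithin 1 (Ico (0:ℝ) 1)) (nhds ((μ {ξ}).toReal)) := by
  have hind : ∫ η : Circle, Set.indicator {ξ} (fun _ => (1:ℝ)) η ∂μ = (μ {ξ}).toReal := by
    rw [MeasureTheory.integral_indicator (isClosed_singleton.measurableSet)]
    simp
  rw [← hind]
  have habs : ∀ r : ℝ, r ∈ Ico (0:ℝ) 1 → Complex.abs ((r:ℝ) * (ξ:ℂ)) < 1 := by
    intro r hr
    rw [map_mul, Circle.abs_coe, mul_one, Complex.abs_ofReal, _root_.abs_of_nonneg hr.1]
    exact hr.2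
  apply tendsto_integral_filter_of_dominated_convergence (fun _ => (1:ℝ))
  · filter_upwards [self_mem_nhdsWithin] with r hr
    apply Continuous.aestronglyMeasurable
    apply Continuous.div continuous_const
    · exact (Complex.continuous_abs.comp (circle_coe_continuous.sub continuous_const)).pow 2
    · intro η
      exact pow_ne_zero 2 (abs_coe_sub_pos η (habs r hr)).ne'
  · filter_upwards [self_mem_nhdsWithin] with r hr
    apply Filter.Eventually.of_forall
    intro η
    have h1 : 1 - r ≤ Complex.abs ((η:ℂ) - (r:ℝ) * (ξ:ℂ)) := by
      have h := norm_sub_norm_le ((η : ℂ)) ((r:ℝ) * (ξ:ℂ))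
      simp only [Complex.norm_eq_abs, Circle.abs_coe, map_mul, Complex.abs_ofReal, mul_one] at h
      rw [_root_.abs_of_nonneg hr.1] at h
      linarith
    have h2 : (0:ℝ) < Complex.abs ((η:ℂ) - (r:ℝ) * (ξ:ℂ)) := abs_coe_sub_pos η (habs r hr)
    have h3 : (1 - r)^2 ≤ Complex.abs ((η:ℂ) - (r:ℝ) * (ξ:ℂ))^2 :=
      pow_le_pow_left₀ (by linarith [hr.2]) h1 2
    rw [Real.norm_eq_abs, _root_.abs_of_nonneg (by positivity)]
    rw [div_le_one (by positivity)]
    exact h3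
  · exact integrable_const 1
  · apply Filter.Eventually.of_forall
    intro η
    by_cases hη : η = ξ
    · subst hη
      have heq : ∀ᶠ r in nhdsWithin 1 (Ico (0:ℝ) 1),
          (1 - r)^2 / Complex.abs ((η:ℂ) - (r:ℝ) * (η:ℂ))^2 = 1 := by
        filter_upwards [self_mem_nhdsWithin] with r hr
        have : (η:ℂ) - (r:ℝ) * (η:ℂ) = ((1 - r : ℝ) : ℂ) * (η:ℂ) := by
          push_cast; ring
        rw [this, map_mul, Circle.abs_coe, mul_one, Complex.abs_ofReal,
          _root_.abs_of_nonneg (by linarith [hr.2] : (0:ℝ) ≤ 1 - r)]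
        rw [div_self (by nlinarith [hr.2] : ((1-r)^2 : ℝ) ≠ 0)]
      rw [show Set.indicator {η} (fun _ => (1:ℝ)) η = 1 by simp]
      exact Tendsto.congr' (heq.mono fun r h => h.symm) tendsto_const_nhds
    · have hne : ((η:ℂ) - (ξ:ℂ)) ≠ 0 := by
        rw [sub_ne_zero]
        exact fun h => hη (Circle.coe_injective h)
      have hca : ContinuousAt (fun r : ℝ => (1 - r)^2 / Complex.abs ((η:ℂ) - (r:ℝ) * (ξ:ℂ))^2) 1 := by
        apply ContinuousAt.div
        · fun_prop
        · apply ContinuousAt.pow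
          apply Complex.continuous_abs.continuousAt.comp
          fun_prop
        · simp only [Complex.ofReal_one, one_mul]
          exact pow_ne_zero 2 ((Complex.abs.pos hne).ne')
      have : Tendsto (fun r : ℝ => (1 - r)^2 / Complex.abs ((η:ℂ) - (r:ℝ) * (ξ:ℂ))^2) (nhdsWithin 1 (Ico (0:ℝ) 1)) (nhds ((1 - 1)^2 / Complex.abs ((η:ℂ) - ((1:ℝ):ℂ) * (ξ:ℂ))^2)) := hca.tendsto.mono_left nhdsWithin_le_nhds
      simp only [Complex.ofReal_one, one_mul, sub_self] at this
      rw [show Set.indicator {ξ} (fun _ => (1:ℝ)) η = 0 by simp [hη]]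
      simpa using this
lemma abs_coe_sub_ge (η : Circle) (z : ℂ) :
    1 - Complex.abs z ≤ Complex.abs ((η : ℂ) - z) := by
  have h := norm_sub_norm_le ((η : ℂ)) z
  simpa only [Complex.norm_eq_abs, Circle.abs_coe] using h

section Stolz

variable (ξ : Circle) (M : ℝ)

def stolz : Set ℂ := {z : ℂ | Complex.abs z < 1 ∧ Complex.abs (z - (ξ:ℂ)) ≤ M * (1 - Complex.abs z)}

lemma stolz_lt {z : ℂ} (hz : z ∈ stolz ξ M) : Complex.abs z < 1 := hz.1

lemma stolz_key {z : ℂ} (hM : 0 < M) (hz : z ∈ stolz ξ M) (η : Circle) :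
    Complex.abs ((ξ:ℂ) - z) ≤ M * Complex.abs ((η:ℂ) - z) := by
  have h1 : Complex.abs ((ξ:ℂ) - z) = Complex.abs (z - (ξ:ℂ)) := by
    rw [← Complex.abs.map_neg]; ring_nf
  have h2 := hz.2
  have h3 := abs_coe_sub_ge η z
  rw [h1]
  calc Complex.abs (z - (ξ:ℂ)) ≤ M * (1 - Complex.abs z) := h2
  _ ≤ M * Complex.abs ((η:ℂ) - z) := by nlinarith

lemma stolz_ne {z : ℂ} (hz : z ∈ stolz ξ M) : (ξ:ℂ) - z ≠ 0 := by
  intro h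
  have h2 : (ξ:ℂ) = z := by linear_combination h
  have h3 := hz.1
  rw [← h2, Circle.abs_coe] at h3
  exact lt_irrefl _ h3

lemma tendsto_within_stolz : Tendsto (fun z : ℂ => z) (nhdsWithin (ξ:ℂ) (stolz ξ M)) (nhds (ξ:ℂ)) :=
  tendsto_id.mono_left nhdsWithin_le_nhds

/-- Key dominated convergence: first moment. -/
lemma tendsto_atom₁ (μ : Measure Circle) [IsFiniteMeasure μ] (hM : 1 < M) :
    Tendsto (fun z : ℂ => ∫ η : Circle, ((ξ:ℂ) - z) * (((η:ℂ) + z) / ((η:ℂ) - z)) ∂μ)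
      (nhdsWithin (ξ:ℂ) (stolz ξ M))
      (nhds ((μ {ξ}).toReal • (2 * (ξ:ℂ)))) := by
  have hind : ∫ η : Circle, Set.indicator {ξ} (fun _ => (2 * (ξ:ℂ))) η ∂μ
      = (μ {ξ}).toReal • (2 * (ξ:ℂ)) := by
    rw [MeasureTheory.integral_indicator (isClosed_singleton.measurableSet)]
    simp
  rw [← hind]
  apply tendsto_integral_filter_of_dominated_convergence (fun _ => 2 * M)
  · filter_upwards [self_mem_nhdsWithin] with z hz
    apply Continuous.aestronglyMeasurable
    apply Continuous.mul continuous_const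
    apply Continuous.div (circle_coe_continuous.add continuous_const)
      (circle_coe_continuous.sub continuous_const)
    intro η
    exact sub_ne_zero.mpr fun h => by
      have := abs_coe_sub_pos η (stolz_lt ξ M hz); rw [show (η:ℂ) = z from h] at this; simp at this
  · filter_upwards [self_mem_nhdsWithin] with z hz
    apply Filter.Eventually.of_forall
    intro η
    have h0 : 0 < Complex.abs ((η:ℂ) - z) := abs_coe_sub_pos η (stolz_lt ξ M hz)
    have h1 := stolz_key ξ M (by linarith) hz η
    have h2 : Complex.abs ((η:ℂ) + z) ≤ 2 := by
      have := Complex.abs.add_le ((η:ℂ)) z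
      rw [Circle.abs_coe] at this
      linarith [(stolz_lt ξ M hz).le]
    rw [Complex.norm_eq_abs, map_mul, map_div₀]
    calc Complex.abs ((ξ:ℂ) - z) * (Complex.abs ((η:ℂ) + z) / Complex.abs ((η:ℂ) - z))
        = Complex.abs ((ξ:ℂ) - z) / Complex.abs ((η:ℂ) - z) * Complex.abs ((η:ℂ) + z) := by
          ring
    _ ≤ M * 2 := by
        apply mul_le_mul _ h2 (Complex.abs.nonneg _) (by linarith)
        rw [div_le_iff₀ h0]
        linarith
    _ = 2 * M := by ring
  · exact integrable_const _
  · apply Filter.Eventually.of_forall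
    intro η
    by_cases hη : η = ξ
    · subst hη
      have heq : ∀ᶠ z in nhdsWithin (η:ℂ) (stolz η M),
          (η:ℂ) + z = ((η:ℂ) - z) * (((η:ℂ) + z) / ((η:ℂ) - z)) := by
        filter_upwards [self_mem_nhdsWithin] with z hz
        rw [mul_div_assoc']
        rw [mul_comm]
        rw [mul_div_assoc]
        rw [div_self (by
          intro h
          have := abs_coe_sub_pos η (stolz_lt η M hz); rw [h] at this; simp at this), mul_one]
      have hcont : Tendsto (fun z : ℂ => (η:ℂ) + z) (nhdsWithin (η:ℂ) (stolz η M))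
          (nhds (2 * (η:ℂ))) := by
        have : Tendsto (fun z : ℂ => (η:ℂ) + z) (nhds (η:ℂ)) (nhds ((η:ℂ) + (η:ℂ))) :=
          (continuous_const.add continuous_id).tendsto _
        simpa [two_mul] using this.mono_left nhdsWithin_le_nhds
      rw [show Set.indicator {η} (fun _ => (2 * (η:ℂ))) η = 2 * (η:ℂ) by simp]
      exact Tendsto.congr' heq hcont
    · have hne : ((η:ℂ) - (ξ:ℂ)) ≠ 0 := sub_ne_zero.mpr fun h => hη (Circle.coe_injective h)
      have hca : ContinuousAt (fun z : ℂ => ((ξ:ℂ) - z) * (((η:ℂ) + z) / ((η:ℂ) - z))) (ξ:ℂ) := by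
        apply ContinuousAt.mul (by fun_prop)
        exact ContinuousAt.div (by fun_prop) (by fun_prop) hne
      have h2 : Tendsto (fun z : ℂ => ((ξ:ℂ) - z) * (((η:ℂ) + z) / ((η:ℂ) - z)))
          (nhdsWithin (ξ:ℂ) (stolz ξ M))
          (nhds (((ξ:ℂ) - (ξ:ℂ)) * (((η:ℂ) + (ξ:ℂ)) / ((η:ℂ) - (ξ:ℂ))))) :=
        hca.tendsto.mono_left nhdsWithin_le_nhds
      rw [show Set.indicator {ξ} (fun _ => (2 * (ξ:ℂ))) η = 0 by simp [hη]]
      simpa using h2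

/-- Key dominated convergence: second moment. -/
lemma tendsto_atom₂ (μ : Measure Circle) [IsFiniteMeasure μ] (hM : 1 < M) :
    Tendsto (fun z : ℂ => ∫ η : Circle, ((ξ:ℂ) - z)^2 * ((2 * (η:ℂ)) / ((η:ℂ) - z)^2) ∂μ)
      (nhdsWithin (ξ:ℂ) (stolz ξ M))
      (nhds ((μ {ξ}).toReal • (2 * (ξ:ℂ)))) := by
  have hind : ∫ η : Circle, Set.indicator {ξ} (fun _ => (2 * (ξ:ℂ))) η ∂μ
      = (μ {ξ}).toReal • (2 * (ξ:ℂ)) := by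
    rw [MeasureTheory.integral_indicator (isClosed_singleton.measurableSet)]
    simp
  rw [← hind]
  apply tendsto_integral_filter_of_dominated_convergence (fun _ => 2 * M^2)
  · filter_upwards [self_mem_nhdsWithin] with z hz
    apply Continuous.aestronglyMeasurable
    apply Continuous.mul continuous_const
    apply Continuous.div (continuous_const.mul circle_coe_continuous)
      ((circle_coe_continuous.sub continuous_const).pow 2)
    intro η
    apply pow_ne_zero
    exact sub_ne_zero.mpr fun h => by
      have := abs_coe_sub_pos η (stolz_lt ξ M hz); rw [show (η:ℂ) = z from h] at this; simp at this
  · filter_upwards [self_mem_nhdsWithin] with z hz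
    apply Filter.Eventually.of_forall
    intro η
    have h0 : 0 < Complex.abs ((η:ℂ) - z) := abs_coe_sub_pos η (stolz_lt ξ M hz)
    have h1 := stolz_key ξ M (by linarith) hz η
    rw [Complex.norm_eq_abs, map_mul, map_div₀, map_pow, map_pow, map_mul]
    have h2 : Complex.abs 2 * Complex.abs ((η:ℂ)) = 2 := by
      rw [Circle.abs_coe, Complex.abs_two]; ring
    rw [h2]
    have hB : (0:ℝ) < Complex.abs ((η:ℂ) - z)^2 := by positivity
    rw [show Complex.abs ((ξ:ℂ) - z)^2 * (2 / Complex.abs ((η:ℂ) - z)^2)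
        = 2 * (Complex.abs ((ξ:ℂ) - z)^2 / Complex.abs ((η:ℂ) - z)^2) from by ring]
    apply mul_le_mul_of_nonneg_left _ (by norm_num : (0:ℝ) ≤ 2)
    rw [div_le_iff₀ hB]
    nlinarith [Complex.abs.nonneg ((ξ:ℂ) - z)]
  · exact integrable_const _
  · apply Filter.Eventually.of_forall
    intro η
    by_cases hη : η = ξ
    · subst hη
      have heq : ∀ᶠ z in nhdsWithin (η:ℂ) (stolz η M),
          2 * (η:ℂ) = ((η:ℂ) - z)^2 * ((2 * (η:ℂ)) / ((η:ℂ) - z)^2) := by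
        filter_upwards [self_mem_nhdsWithin] with z hz
        have hnz : ((η:ℂ) - z) ≠ 0 := by
          intro h
          have := abs_coe_sub_pos η (stolz_lt η M hz); rw [h] at this; simp at this
        field_simp
      rw [show Set.indicator {η} (fun _ => (2 * (η:ℂ))) η = 2 * (η:ℂ) by simp]
      exact Tendsto.congr' heq tendsto_const_nhds
    · have hne : ((η:ℂ) - (ξ:ℂ)) ≠ 0 := sub_ne_zero.mpr fun h => hη (Circle.coe_injective h)
      have hca : ContinuousAt (fun z : ℂ => ((ξ:ℂ) - z)^2 * ((2 * (η:ℂ)) / ((η:ℂ) - z)^2)) (ξ:ℂ) := by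
        apply ContinuousAt.mul (by fun_prop)
        exact ContinuousAt.div (by fun_prop) (by fun_prop) (pow_ne_zero 2 hne)
      have h2 : Tendsto (fun z : ℂ => ((ξ:ℂ) - z)^2 * ((2 * (η:ℂ)) / ((η:ℂ) - z)^2))
          (nhdsWithin (ξ:ℂ) (stolz ξ M))
          (nhds (((ξ:ℂ) - (ξ:ℂ))^2 * ((2 * (η:ℂ)) / ((η:ℂ) - (ξ:ℂ))^2))) :=
        hca.tendsto.mono_left nhdsWithin_le_nhds
      rw [show Set.indicator {ξ} (fun _ => (2 * (ξ:ℂ))) η = 0 by simp [hη]]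
      simpa using h2

end Stolz

lemma coe_mul_mem_ball {r : ℝ} (hr0 : 0 ≤ r) (hr1 : r < 1) (ξ : Circle) :
    ((r:ℂ) * (ξ:ℂ)) ∈ ball (0:ℂ) 1 := by
  rw [mem_ball_zero_iff, Complex.norm_eq_abs, map_mul, Circle.abs_coe, mul_one,
    Complex.abs_ofReal, _root_.abs_of_nonneg hr0]
  exact hr1

lemma abs_coe_mul {r : ℝ} (hr0 : 0 ≤ r) (ξ : Circle) :
    Complex.abs ((r:ℂ) * (ξ:ℂ)) = r := by
  rw [map_mul, Circle.abs_coe, mul_one, Complex.abs_ofReal, _root_.abs_of_nonneg hr0]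

lemma backward (θ : ℂ → ℂ) (hθd : DifferentiableOn ℂ θ (ball 0 1))
    (hlt : ∀ z ∈ ball (0:ℂ) 1, Complex.abs (θ z) < 1)
    (μ : Measure Circle) [IsFiniteMeasure μ] (ξ α : Circle)
    (hmain : ∀ z ∈ ball (0:ℂ) 1,
      ∫ η : Circle, (1 - Complex.abs z ^ 2) / Complex.abs ((η : ℂ) - z) ^ 2 ∂μ =
        (((α : ℂ) + θ z) / ((α : ℂ) - θ z)).re)
    (hNT : Tendsto θ (nhdsWithin (ξ:ℂ) (stolz ξ 2)) (nhds (α:ℂ)))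
    (L' : ℂ) (hNT' : Tendsto (deriv θ) (nhdsWithin (ξ:ℂ) (stolz ξ 2)) (nhds L')) :
    0 < μ {ξ} := by
  have hαθ : ∀ z ∈ ball (0:ℂ) 1, (α:ℂ) - θ z ≠ 0 := by
    intro z hz h
    have h2 : (α:ℂ) = θ z := by linear_combination h
    have h3 := hlt z hz
    rw [← h2, Circle.abs_coe] at h3
    exact lt_irrefl _ h3
  set a : ℝ := Complex.abs (θ 0) with hadef
  have ha : a < 1 := hlt 0 (by simp)
  have ha0 : 0 ≤ a := Complex.abs.nonneg _
  set B : ℝ := Complex.abs L' + 1 with hBdef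
  have hB0 : 0 < B := by positivity
  -- the radial path
  set ψ : ℝ → ℂ := fun r => (r:ℂ) * (ξ:ℂ) with hψdef
  have hψ : Tendsto ψ (nhdsWithin 1 (Ico (0:ℝ) 1)) (nhdsWithin (ξ:ℂ) (stolz ξ 2)) := by
    rw [tendsto_nhdsWithin_iff]
    constructor
    · have h1 : Tendsto ψ (nhds 1) (nhds (((1:ℝ):ℂ) * (ξ:ℂ))) := by
        apply Tendsto.mul _ tendsto_const_nhds
        exact (Complex.continuous_ofReal.tendsto 1)
      simp only [Complex.ofReal_one, one_mul] at h1
      exact h1.mono_left nhdsWithin_le_nhds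
    · filter_upwards [self_mem_nhdsWithin] with r hr
      refine ⟨?_, ?_⟩
      · rw [abs_coe_mul hr.1]; exact hr.2
      · have he : ψ r - (ξ:ℂ) = ((r - 1 : ℝ) : ℂ) * (ξ:ℂ) := by
          rw [hψdef]; push_cast; ring
        rw [he, map_mul, Circle.abs_coe, mul_one, Complex.abs_ofReal,
          abs_of_nonpos (by linarith [hr.2] : r - 1 ≤ 0)]
        rw [abs_coe_mul hr.1]
        nlinarith [hr.2]
  have hradθ : Tendsto (fun r => θ (ψ r)) (nhdsWithin 1 (Ico (0:ℝ) 1)) (nhds (α:ℂ)) :=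
    hNT.comp hψ
  have hradθ' : Tendsto (fun r => deriv θ (ψ r)) (nhdsWithin 1 (Ico (0:ℝ) 1)) (nhds L') :=
    hNT'.comp hψ
  -- get r₀ with derivative bound on [r₀, 1)
  have hBev : ∀ᶠ r in nhdsWithin 1 (Ico (0:ℝ) 1), Complex.abs (deriv θ (ψ r)) ≤ B := by
    have h1 : ∀ᶠ w in nhds L', Complex.abs w ≤ B := by
      filter_upwards [Metric.ball_mem_nhds L' one_pos] with w hw
      rw [mem_ball, Complex.dist_eq, Complex.norm_eq_abs] at hw
      calc Complex.abs w = Complex.abs (L' + (w - L')) := by ring_nf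
      _ ≤ Complex.abs L' + Complex.abs (w - L') := Complex.abs.add_le _ _
      _ ≤ B := by rw [hBdef]; linarith
    exact hradθ'.eventually h1
  rw [eventually_nhdsWithin_iff, Metric.eventually_nhds_iff] at hBev
  obtain ⟨ε, hεpos, hεball⟩ := hBev
  set r₀ : ℝ := max (1 - ε/2) 0 with hr₀def
  have hr₀0 : 0 ≤ r₀ := le_max_right _ _
  have hr₀1 : r₀ < 1 := by
    rw [hr₀def]; apply max_lt (by linarith) one_pos
  have hr₀B : ∀ t : ℝ, t ∈ Ico r₀ 1 → Complex.abs (deriv θ (ψ t)) ≤ B := by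
    intro t ht
    apply hεball
    · rw [Real.dist_eq, abs_of_nonpos (by linarith [ht.2])]
      have h2 : 1 - ε/2 ≤ r₀ := le_max_left _ _
      linarith [ht.1]
    · exact ⟨le_trans hr₀0 ht.1, ht.2⟩
  -- derivative of the radial path
  have hpath : ∀ t : ℝ, t ∈ Ico (0:ℝ) 1 →
      HasDerivAt (fun s : ℝ => θ (ψ s)) (deriv θ (ψ t) * (ξ:ℂ)) t := by
    intro t ht
    have hmem : ψ t ∈ ball (0:ℂ) 1 := coe_mul_mem_ball ht.1 ht.2 ξ
    have hθat : DifferentiableAt ℂ θ (ψ t) := hθd.differentiableAt (isOpen_ball.mem_nhds hmem)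
    have hinner : HasDerivAt (fun w : ℂ => w * (ξ:ℂ)) (ξ:ℂ) ((t:ℝ):ℂ) := hasDerivAt_mul_const _
    have hcomp : HasDerivAt (fun w : ℂ => θ (w * (ξ:ℂ))) (deriv θ (ψ t) * (ξ:ℂ)) ((t:ℝ):ℂ) := by
      have := (hθat.hasDerivAt).comp ((t:ℝ):ℂ) hinner
      exact this
    exact hcomp.comp_ofReal
  -- continuity of the derivative along the path
  have hderivCont : ContinuousOn (deriv θ) (ball (0:ℂ) 1) :=
    ((hθd.analyticOnNhd isOpen_ball).deriv).continuousOn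
  have hpathCont : ∀ r s : ℝ, 0 ≤ r → s < 1 → r ≤ s →
      IntervalIntegrable (fun t : ℝ => deriv θ (ψ t) * (ξ:ℂ)) MeasureTheory.volume r s := by
    intro r s hr hs hrs
    apply ContinuousOn.intervalIntegrable
    apply ContinuousOn.mul _ continuousOn_const
    apply hderivCont.comp
    · exact (Complex.continuous_ofReal.mul continuous_const).continuousOn
    · intro t ht
      rw [uIcc_of_le hrs] at ht
      exact coe_mul_mem_ball (le_trans hr ht.1) (lt_of_le_of_lt ht.2 hs) ξ
  -- FTC bound
  have hC : ∀ r : ℝ, r ∈ Ico r₀ 1 → Complex.abs ((α:ℂ) - θ (ψ r)) ≤ B * (1 - r) := by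
    intro r hr
    have hr0' : 0 ≤ r := le_trans hr₀0 hr.1
    have key : ∀ s : ℝ, r ≤ s → s < 1 →
        Complex.abs (θ (ψ s) - θ (ψ r)) ≤ B * (1 - r) := by
      intro s hrs hs1
      have hint := hpathCont r s hr0' hs1 hrs
      have hftc : ∫ t in r..s, deriv θ (ψ t) * (ξ:ℂ) = θ (ψ s) - θ (ψ r) := by
        apply intervalIntegral.integral_eq_sub_of_hasDerivAt _ hint
        intro t ht
        rw [uIcc_of_le hrs] at ht
        exact hpath t ⟨le_trans hr0' ht.1, lt_of_le_of_lt ht.2 hs1⟩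
      rw [← hftc]
      have hb : ∀ t ∈ Set.uIoc r s, ‖deriv θ (ψ t) * (ξ:ℂ)‖ ≤ B := by
        intro t ht
        rw [Set.uIoc_of_le hrs] at ht
        rw [norm_mul, Complex.norm_eq_abs, Complex.norm_eq_abs, Circle.abs_coe, mul_one]
        exact hr₀B t ⟨le_trans hr.1 ht.1.le, lt_of_le_of_lt ht.2 hs1⟩
      have := intervalIntegral.norm_integral_le_of_norm_le_const hb
      rw [Complex.norm_eq_abs] at this
      calc Complex.abs (∫ t in r..s, deriv θ (ψ t) * (ξ:ℂ)) ≤ B * |s - r| := this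
      _ = B * (s - r) := by rw [_root_.abs_of_nonneg (by linarith)]
      _ ≤ B * (1 - r) := by nlinarith
    -- let s → 1
    haveI : (nhdsWithin 1 (Ico (0:ℝ) 1)).NeBot := by
      apply mem_closure_iff_nhdsWithin_neBot.mp
      rw [closure_Ico (by norm_num : (0:ℝ) ≠ 1)]
      exact ⟨by norm_num, le_refl 1⟩
    have htend : Tendsto (fun s : ℝ => Complex.abs (θ (ψ s) - θ (ψ r)))
        (nhdsWithin 1 (Ico (0:ℝ) 1)) (nhds (Complex.abs ((α:ℂ) - θ (ψ r)))) := by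
      have h1 : Tendsto (fun s : ℝ => θ (ψ s) - θ (ψ r)) (nhdsWithin 1 (Ico (0:ℝ) 1))
          (nhds ((α:ℂ) - θ (ψ r))) := hradθ.sub tendsto_const_nhds
      exact (Complex.continuous_abs.tendsto _).comp h1
    apply le_of_tendsto htend
    have hev : ∀ᶠ s in nhdsWithin 1 (Ico (0:ℝ) 1), r < s := by
      apply eventually_nhdsWithin_of_eventually_nhds
      exact eventually_gt_nhds hr.2
    filter_upwards [hev, self_mem_nhdsWithin] with s hs hs2
    exact key s hs.le hs2.2
  -- Schwarz-Pick lower bound along the radius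
  have hSP : ∀ r : ℝ, r ∈ Ico (0:ℝ) 1 →
      (1 - r^2) * (1 - a) / (1 + a) ≤ 1 - Complex.abs (θ (ψ r))^2 := by
    intro r hr
    have := schwarz_pick_lb θ hθd hlt (ψ r) (coe_mul_mem_ball hr.1 hr.2 ξ)
    rwa [abs_coe_mul hr.1] at this
  -- main lower bound for the Poisson integrals
  set δ : ℝ := (1 - a) / ((1 + a) * B^2) with hδdef
  have hδpos : 0 < δ := by
    rw [hδdef]
    exact div_pos (by linarith) (mul_pos (by linarith) (pow_pos hB0 2))
  have hQ : ∀ r : ℝ, r ∈ Ico r₀ 1 →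
      δ ≤ ∫ η : Circle, (1 - r)^2 / Complex.abs ((η:ℂ) - (r:ℝ) * (ξ:ℂ))^2 ∂μ := by
    intro r hr
    have hr0' : 0 ≤ r := le_trans hr₀0 hr.1
    have hr1 : r < 1 := hr.2
    have hmem : ψ r ∈ ball (0:ℂ) 1 := coe_mul_mem_ball hr0' hr1 ξ
    have hQeq : ∫ η : Circle, (1 - r)^2 / Complex.abs ((η:ℂ) - (r:ℝ) * (ξ:ℂ))^2 ∂μ
        = ((1 - r)/(1 + r)) * (((α:ℂ) + θ (ψ r)) / ((α:ℂ) - θ (ψ r))).re := by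
      rw [← hmain (ψ r) hmem]
      rw [← integral_const_mul]
      apply integral_congr_ae
      apply Filter.Eventually.of_forall
      intro η
      rw [abs_coe_mul hr0']
      have hd0 : (0:ℝ) < Complex.abs ((η:ℂ) - (r:ℝ) * (ξ:ℂ)) := by
        apply abs_coe_sub_pos
        rw [abs_coe_mul hr0']; exact hr1
      rw [hψdef]
      field_simp
      ring
    rw [hQeq]
    have hre : (((α:ℂ) + θ (ψ r)) / ((α:ℂ) - θ (ψ r))).re
        = (1 - Complex.abs (θ (ψ r))^2) / Complex.abs ((α:ℂ) - θ (ψ r))^2 :=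
      re_div_eq _ _ (Circle.abs_coe α)
    rw [hre]
    set t : ℝ := Complex.abs (θ (ψ r)) with htdef
    set D : ℝ := Complex.abs ((α:ℂ) - θ (ψ r)) with hDdef
    have hDpos : 0 < D := Complex.abs.pos (hαθ _ hmem)
    have hDle : D ≤ B * (1 - r) := hC r hr
    have hSPr := hSP r ⟨hr0', hr1⟩
    have ht1 : t < 1 := hlt _ hmem
    have ht0 : 0 ≤ t := Complex.abs.nonneg _
    rw [div_mul_div_comm, hδdef,
      div_le_div_iff₀ (mul_pos (by linarith : (0:ℝ) < 1 + a) (pow_pos hB0 2))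
        (mul_pos (by linarith : (0:ℝ) < 1 + r) (pow_pos hDpos 2))]
    have hp1 : 0 ≤ ((1 - t^2) * (1 + a) - (1 - r^2) * (1 - a)) * ((1 - r) * B^2) := by
      apply mul_nonneg _ (mul_nonneg (by linarith : (0:ℝ) ≤ 1 - r) (sq_nonneg B))
      have := hSPr
      rw [div_le_iff₀ (by linarith : (0:ℝ) < 1 + a)] at this
      linarith
    have hp2 : 0 ≤ (B^2 * (1 - r)^2 - D^2) * ((1 - a) * (1 + r)) := by
      apply mul_nonneg _ (by nlinarith)
      nlinarith
    linarith [hp1, hp2]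
  -- conclude via the radial limit
  haveI : (nhdsWithin 1 (Ico (0:ℝ) 1)).NeBot := by
    apply mem_closure_iff_nhdsWithin_neBot.mp
    rw [closure_Ico (by norm_num : (0:ℝ) ≠ 1)]
    exact ⟨by norm_num, le_refl 1⟩
  have hlim := tendsto_radial_point_mass μ ξ
  have hge : δ ≤ (μ {ξ}).toReal := by
    apply ge_of_tendsto hlim
    have hev : ∀ᶠ r in nhdsWithin 1 (Ico (0:ℝ) 1), r₀ < r := by
      apply eventually_nhdsWithin_of_eventually_nhds
      exact eventually_gt_nhds hr₀1
    filter_upwards [hev, self_mem_nhdsWithin] with r h1 h2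
    exact hQ r ⟨h1.le, h2.2⟩
  by_contra hcon
  push_neg at hcon
  have : μ {ξ} = 0 := le_antisymm hcon zero_le
  rw [this] at hge
  simp at hge
  linarith

lemma stolz_mem_ball {ξ : Circle} {M : ℝ} {z : ℂ} (hz : z ∈ stolz ξ M) :
    z ∈ ball (0:ℂ) 1 := by
  rw [mem_ball_zero_iff, Complex.norm_eq_abs]; exact hz.1

lemma ball_abs {z : ℂ} (hz : z ∈ ball (0:ℂ) 1) : Complex.abs z < 1 := by
  rwa [mem_ball_zero_iff, Complex.norm_eq_abs] at hz

lemma forward (θ : ℂ → ℂ) (hθd : DifferentiableOn ℂ θ (ball 0 1))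
    (hlt : ∀ z ∈ ball (0:ℂ) 1, Complex.abs (θ z) < 1)
    (μ : Measure Circle) [IsFiniteMeasure μ] (ξ α : Circle)
    (hmain : ∀ z ∈ ball (0:ℂ) 1,
      ∫ η : Circle, (1 - Complex.abs z ^ 2) / Complex.abs ((η : ℂ) - z) ^ 2 ∂μ =
        (((α : ℂ) + θ z) / ((α : ℂ) - θ z)).re)
    (hpos : 0 < μ {ξ}) :
    (∀ M : ℝ, 1 < M → Tendsto θ (nhdsWithin (ξ:ℂ) (stolz ξ M)) (nhds (α:ℂ))) ∧
      ∃ L' : ℂ, ∀ M : ℝ, 1 < M →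
        Tendsto (deriv θ) (nhdsWithin (ξ:ℂ) (stolz ξ M)) (nhds L') := by
  have hαθ : ∀ z ∈ ball (0:ℂ) 1, (α:ℂ) - θ z ≠ 0 := by
    intro z hz h
    have h2 : (α:ℂ) = θ z := by linear_combination h
    have h3 := hlt z hz
    rw [← h2, Circle.abs_coe] at h3
    exact lt_irrefl _ h3
  set G : ℂ → ℂ := fun z => ((α:ℂ) + θ z) / ((α:ℂ) - θ z) with hGdef
  have hGd : DifferentiableOn ℂ G (ball 0 1) :=
    DifferentiableOn.div ((differentiableOn_const _).add hθd)
      ((differentiableOn_const _).sub hθd) (fun z hz => hαθ z hz)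
  have hure : ∀ z ∈ ball (0:ℂ) 1, 0 ≤ (G z).re := by
    intro z hz
    rw [hGdef]
    simp only []
    rw [re_div_eq _ _ (Circle.abs_coe α)]
    apply div_nonneg _ (by positivity)
    nlinarith [hlt z hz, Complex.abs.nonneg (θ z)]
  have hG1 : ∀ z ∈ ball (0:ℂ) 1, G z + 1 ≠ 0 := by
    intro z hz hc
    have h1 : (G z + 1).re = 0 := by rw [hc]; simp
    rw [Complex.add_re, Complex.one_re] at h1
    linarith [hure z hz]
  have hθeq : ∀ z ∈ ball (0:ℂ) 1, θ z = (α:ℂ) * ((G z - 1) / (G z + 1)) := by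
    intro z hz
    have h1 := hG1 z hz
    have h2 := hαθ z hz
    have hGz : G z = ((α:ℂ) + θ z) / ((α:ℂ) - θ z) := by rw [hGdef]
    rw [mul_div_assoc', eq_div_iff h1, hGz]
    field_simp
    ring
  -- harmonic conjugate identification
  have hhd : DifferentiableOn ℂ (hfun μ) (ball 0 1) := fun z hz =>
    ((hfun_hasDerivAt μ (ball_abs hz)).differentiableAt).differentiableWithinAt
  have hdd : DifferentiableOn ℂ (fun z => hfun μ z - G z) (ball 0 1) := hhd.sub hGd
  have hdre : ∀ z ∈ ball (0:ℂ) 1, ((fun z => hfun μ z - G z) z).re = 0 := by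
    intro z hz
    show (hfun μ z - G z).re = 0
    rw [Complex.sub_re]
    rw [hfun_re μ (ball_abs hz), hmain z hz, hGdef]
    ring
  have hconst := const_of_re_eq_zero hdd hdre
  set w₀ : ℂ := hfun μ 0 - G 0 with hw₀def
  have hGh : ∀ z ∈ ball (0:ℂ) 1, G z = hfun μ z - w₀ := by
    intro z hz
    have h : hfun μ z - G z = w₀ := hconst z hz
    linear_combination -h
  set m : ℝ := (μ {ξ}).toReal with hmdef
  have hm : 0 < m := ENNReal.toReal_pos hpos.ne' (measure_ne_top μ _)
  set c : ℂ := (m:ℝ) • (2 * (ξ:ℂ)) with hcdef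
  have hcne : c ≠ 0 := by
    rw [hcdef]
    apply smul_ne_zero (ne_of_gt hm)
    simp [Circle.coe_ne_zero ξ]
  set L' : ℂ := 2 * (α:ℂ) * c / c^2 with hL'def
  have key : ∀ M : ℝ, 1 < M →
      Tendsto θ (nhdsWithin (ξ:ℂ) (stolz ξ M)) (nhds (α:ℂ)) ∧
      Tendsto (deriv θ) (nhdsWithin (ξ:ℂ) (stolz ξ M)) (nhds L') := by
    intro M hM
    have T1 : Tendsto (fun z : ℂ => ((ξ:ℂ) - z) * hfun μ z)
        (nhdsWithin (ξ:ℂ) (stolz ξ M)) (nhds c) := by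
      have A := tendsto_atom₁ ξ M μ hM
      exact A.congr (fun z => integral_const_mul _ _)
    have T5 : Tendsto (fun z : ℂ => ((ξ:ℂ) - z)^2 * hder μ z)
        (nhdsWithin (ξ:ℂ) (stolz ξ M)) (nhds c) := by
      have A := tendsto_atom₂ ξ M μ hM
      exact A.congr (fun z => integral_const_mul _ _)
    have Tz0 : Tendsto (fun z : ℂ => (ξ:ℂ) - z) (nhdsWithin (ξ:ℂ) (stolz ξ M)) (nhds 0) := by
      have h1 : Tendsto (fun z : ℂ => (ξ:ℂ) - z) (nhds (ξ:ℂ)) (nhds ((ξ:ℂ) - (ξ:ℂ))) :=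
        (continuous_const.sub continuous_id).tendsto _
      simpa using h1.mono_left nhdsWithin_le_nhds
    have T2 : Tendsto (fun z : ℂ => ((ξ:ℂ) - z) * (G z + 1))
        (nhdsWithin (ξ:ℂ) (stolz ξ M)) (nhds c) := by
      have T2' : Tendsto (fun z : ℂ => ((ξ:ℂ) - z) * hfun μ z + ((ξ:ℂ) - z) * (1 - w₀))
          (nhdsWithin (ξ:ℂ) (stolz ξ M)) (nhds (c + 0 * (1 - w₀))) :=
        T1.add (Tz0.mul_const _)
      rw [zero_mul, add_zero] at T2'
      apply T2'.congr'
      filter_upwards [self_mem_nhdsWithin] with z hz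
      rw [hGh z (stolz_mem_ball hz)]
      ring
    have TN : Tendsto (fun z : ℂ => (α:ℂ) * (((ξ:ℂ) - z) * (G z - 1)))
        (nhdsWithin (ξ:ℂ) (stolz ξ M)) (nhds ((α:ℂ) * c)) := by
      have TN' : Tendsto (fun z : ℂ => ((ξ:ℂ) - z) * hfun μ z + ((ξ:ℂ) - z) * (-(1 + w₀)))
          (nhdsWithin (ξ:ℂ) (stolz ξ M)) (nhds (c + 0 * (-(1 + w₀)))) :=
        T1.add (Tz0.mul_const _)
      rw [zero_mul, add_zero] at TN'
      apply Tendsto.const_mul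
      apply TN'.congr'
      filter_upwards [self_mem_nhdsWithin] with z hz
      rw [hGh z (stolz_mem_ball hz)]
      ring
    constructor
    · have Tdiv := TN.div T2 hcne
      have hev : ∀ᶠ z in nhdsWithin (ξ:ℂ) (stolz ξ M),
          (α:ℂ) * (((ξ:ℂ) - z) * (G z - 1)) / (((ξ:ℂ) - z) * (G z + 1)) = θ z := by
        filter_upwards [self_mem_nhdsWithin] with z hz
        have hball := stolz_mem_ball hz
        rw [hθeq z hball]
        have hne := stolz_ne ξ M hz
        have h1 := hG1 z hball
        field_simp
      have := Tdiv.congr' hev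
      rwa [mul_div_assoc, div_self hcne, mul_one] at this
    · -- derivative formula
      have hDeriv : ∀ z ∈ ball (0:ℂ) 1,
          deriv θ z = 2 * (α:ℂ) * hder μ z / (G z + 1)^2 := by
        intro z hz
        have hh := hfun_hasDerivAt μ (ball_abs hz)
        have hN : HasDerivAt (fun w => hfun μ w - (w₀ + 1)) (hder μ z) z := hh.sub_const _
        have hD : HasDerivAt (fun w => hfun μ w - (w₀ - 1)) (hder μ z) z := hh.sub_const _
        have hDz : hfun μ z - (w₀ - 1) ≠ 0 := by
          have := hG1 z hz
          rw [hGh z hz] at this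
          intro hcon
          apply this
          linear_combination hcon
        have hq := (hN.div hD hDz).const_mul (α:ℂ)
        have hEq : θ =ᶠ[nhds z]
            fun w => (α:ℂ) * ((hfun μ w - (w₀ + 1)) / (hfun μ w - (w₀ - 1))) := by
          filter_upwards [isOpen_ball.mem_nhds hz] with w hw
          rw [hθeq w hw, hGh w hw]
          congr 2 <;> ring
        have hAt := HasDerivAt.congr_of_eventuallyEq hq hEq
        rw [hAt.deriv]
        rw [hGh z hz]
        have h2 : hfun μ z - w₀ + 1 = hfun μ z - (w₀ - 1) := by ring
        rw [h2]
        field_simp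
        ring
      have TN2 : Tendsto (fun z : ℂ => 2 * (α:ℂ) * (((ξ:ℂ) - z)^2 * hder μ z))
          (nhdsWithin (ξ:ℂ) (stolz ξ M)) (nhds (2 * (α:ℂ) * c)) :=
        T5.const_mul _
      have TD2 : Tendsto (fun z : ℂ => (((ξ:ℂ) - z) * (G z + 1))^2)
          (nhdsWithin (ξ:ℂ) (stolz ξ M)) (nhds (c^2)) := T2.pow 2
      have Tdiv2 := TN2.div TD2 (pow_ne_zero 2 hcne)
      rw [← hL'def] at Tdiv2
      apply Tdiv2.congr'
      filter_upwards [self_mem_nhdsWithin] with z hz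
      have hball := stolz_mem_ball hz
      rw [hDeriv z hball]
      have hne := stolz_ne ξ M hz
      have hG1' := hG1 z hball
      simp only [Pi.div_apply]
      field_simp
  exact ⟨fun M hM => (key M hM).1, L', fun M hM => (key M hM).2⟩

end ClarkAux

/-- `μ_α({ξ}) > 0` iff both `θ` and `θ′` have finite nontangential limits at `ξ`
and `θ(ξ) = α`. -/
theorem clark_point_mass_iff_deriv (θ : ℂ → ℂ) (hθ : IsInner θ) (hnc : IsNonconstant θ)
    (μ : Circle → Measure Circle) (hμ : ∀ α : Circle, IsClarkMeasure θ α (μ α))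
    (ξ α : Circle) :
    0 < μ α {ξ} ↔
      (NTLimit θ (ξ : ℂ) (α : ℂ) ∧ ∃ L' : ℂ, NTLimit (deriv θ) (ξ : ℂ) L') := by
  obtain ⟨hθd, hθb, _⟩ := hθ
  have hμα := hμ α
  haveI : MeasureTheory.IsFiniteMeasure (μ α) := hμα.1
  have hmain := hμα.2
  have hlt := inner_abs_lt θ hθd hθb hnc
  constructor
  · intro hpos
    obtain ⟨h1, L', h2⟩ := forward θ hθd hlt (μ α) ξ α hmain hpos
    exact ⟨h1, L', h2⟩
  · rintro ⟨hNT, L', hNT'⟩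
    exact backward θ hθd hlt (μ α) ξ α hmain (hNT 2 one_lt_two) L' (hNT' 2 one_lt_two)
end
end

section
/- Let A be a bounded self-adjoint operator on a separable complex Hilbert space H and let φ ∈ H. For λ ∈ ℝ set A_λ = A + λ⟨·,φ⟩φ and let μ_λ be the spectral measure of φ for A_λ. Then for every λ ∈ ℝ and every z ∈ ℂ ∖ ℝ one has 1 + λ·∫_ℝ (t−z)⁻¹ dμ_0(t) ≠ 0 and ∫_ℝ (t−z)⁻¹ dμ_λ(t) = (∫_ℝ (t−z)⁻¹ dμ_0(t)) / (1 + λ·∫_ℝ (t−z)⁻¹ dμ_0(t)). (The Aronszajn–Krein formula for rank-one perturbations.) -/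
open MeasureTheory Complex

noncomputable section

variable {H : Type*} [NormedAddCommGroup H] [InnerProductSpace ℂ H] [CompleteSpace H]

set_option maxHeartbeats 1000000

/-- The Aronszajn–Krein formula for rank-one perturbations `A_λ = A + λ⟨·,φ⟩φ` of a
bounded self-adjoint operator. -/
theorem aronszajn_krein {H : Type*} [NormedAddCommGroup H] [InnerProductSpace ℂ H]
    [CompleteSpace H] [TopologicalSpace.SeparableSpace H]
    (A : H →L[ℂ] H) (hA : IsSelfAdjoint A) (φ : H)
    (μ : ℝ → Measure ℝ)
    (hμ : ∀ lam : ℝ, IsSpectralMeasureSA (A + (lam : ℂ) • rankOne φ) φ (μ lam)) :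
    ∀ (lam : ℝ) (z : ℂ), z.im ≠ 0 →
      (1 + (lam : ℂ) * ∫ t : ℝ, ((t : ℂ) - z)⁻¹ ∂(μ 0)) ≠ 0 ∧
      ∫ t : ℝ, ((t : ℂ) - z)⁻¹ ∂(μ lam) =
        (∫ t : ℝ, ((t : ℂ) - z)⁻¹ ∂(μ 0)) /
          (1 + (lam : ℂ) * ∫ t : ℝ, ((t : ℂ) - z)⁻¹ ∂(μ 0)) := by
  classical
  intro lam z hz
  -- self-adjointness of the perturbed operators
  have hB : IsSelfAdjoint (rankOne φ) := by
    rw [ContinuousLinearMap.isSelfAdjoint_iff_isSymmetric]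
    intro x y
    simp [rankOne, inner_smul_left, inner_smul_right, innerSL_apply_apply]
    ring
  have hself : ∀ l : ℝ, IsSelfAdjoint (A + (l : ℂ) • rankOne φ) := by
    intro l
    have hl : IsSelfAdjoint ((l : ℝ) : ℂ) := by
      rw [isSelfAdjoint_iff]
      exact Complex.conj_ofReal l
    exact hA.add (hl.smul hB)
  -- invertibility of A_l - z
  have hunit : ∀ l : ℝ, IsUnit (A + (l : ℂ) • rankOne φ - z • (1 : H →L[ℂ] H)) := by
    intro l
    have h1 : z ∉ spectrum ℂ (A + (l : ℂ) • rankOne φ) := by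
      intro hmem
      have := (hself l).mem_spectrum_eq_re hmem
      rw [this] at hz
      simp at hz
    have h2 := spectrum.notMem_iff.mp h1
    rw [Algebra.algebraMap_eq_smul_one] at h2
    simpa [neg_sub] using h2.neg
  set T : ℝ → (H →L[ℂ] H) := fun l => A + (l : ℂ) • rankOne φ - z • (1 : H →L[ℂ] H) with hT
  set R : ℝ → (H →L[ℂ] H) := fun l => Ring.inverse (T l) with hR
  set F : ℝ → ℂ := fun l => (inner ℂ φ ((R l) φ) : ℂ) with hF
  have hTR : ∀ l : ℝ, (T l) ((R l) φ) = φ := by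
    intro l
    have := Ring.mul_inverse_cancel _ (hunit l)
    calc (T l) ((R l) φ) = ((T l) * (R l)) φ := rfl
      _ = φ := by rw [this]; rfl
  have hRT : ∀ l (x : H), (R l) ((T l) x) = x := by
    intro l x
    have := Ring.inverse_mul_cancel _ (hunit l)
    calc (R l) ((T l) x) = ((R l) * (T l)) x := rfl
      _ = x := by rw [this]; rfl
  -- key identity : T lam (R 0 φ) = (1 + lam * F 0) • φ
  have hdiff : ∀ x : H, (T lam) x = (T 0) x + (lam : ℂ) • (inner ℂ φ x : ℂ) • φ := by
    intro x
    simp [hT, rankOne, ContinuousLinearMap.add_apply, ContinuousLinearMap.sub_apply,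
      ContinuousLinearMap.smul_apply, ContinuousLinearMap.smulRight_apply, innerSL_apply_apply]
    abel
  have key : (T lam) ((R 0) φ) = (1 + (lam : ℂ) * F 0) • φ := by
    rw [hdiff, hTR 0]
    rw [add_smul, one_smul, smul_smul]
  have key2 : (R 0) φ = (1 + (lam : ℂ) * F 0) • (R lam) φ := by
    calc (R 0) φ = (R lam) ((T lam) ((R 0) φ)) := (hRT lam _).symm
      _ = (R lam) ((1 + (lam : ℂ) * F 0) • φ) := by rw [key]
      _ = (1 + (lam : ℂ) * F 0) • (R lam) φ := by rw [_root_.map_smul]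
  -- nonvanishing
  have hne : (1 + (lam : ℂ) * F 0) ≠ 0 := by
    intro h
    have h1 : (R 0) φ = 0 := by rw [key2, h, zero_smul]
    have h2 : φ = 0 := by
      have := hTR 0
      rw [h1] at this
      simpa using this.symm
    have h3 : F 0 = 0 := by simp [hF, h2]
    rw [h3, mul_zero, add_zero] at h
    exact one_ne_zero h
  have key3 : F 0 = (1 + (lam : ℂ) * F 0) * F lam := by
    have h4 : (inner ℂ φ ((R 0) φ) : ℂ) = inner ℂ φ ((1 + (lam : ℂ) * F 0) • (R lam) φ) := by
      rw [key2]
    rw [inner_smul_right] at h4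
    exact h4
  -- translate to integrals
  have e0 : (∫ t : ℝ, ((t : ℂ) - z)⁻¹ ∂(μ 0)) = F 0 := ((hμ 0).2 z hz).symm
  have elam : (∫ t : ℝ, ((t : ℂ) - z)⁻¹ ∂(μ lam)) = F lam := ((hμ lam).2 z hz).symm
  rw [e0, elam]
  refine ⟨hne, ?_⟩
  rw [eq_div_iff hne]
  linear_combination -key3
end
end

section
/- Let U be a unitary operator on a separable complex Hilbert space H and let φ ∈ H with ‖φ‖ = 1. For α ∈ 𝕋 set U_α = U + (α − 1)⟨·, U⁻¹φ⟩φ. Then each U_α is unitary, and letting ν_α be the spectral measure of φ for U_α, for every α ∈ 𝕋 and every z ∈ 𝔻 one has 1 + (α − 1)·Kν_1(z) ≠ 0 and Kν_α(z) = α·Kν_1(z) / (1 + (α − 1)·Kν_1(z)), where ν_1 is the spectral measure of φ for U itself and Kν(z) = ∫_𝕋 (1 − ξ̄z)⁻¹ dν(ξ). (The Aronszajn–Krein formula for unitary rank-one perturbations.) -/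
open MeasureTheory Complex

noncomputable section

variable {H : Type*} [NormedAddCommGroup H] [InnerProductSpace ℂ H] [CompleteSpace H]

section AKAux

variable {H : Type*} [NormedAddCommGroup H] [InnerProductSpace ℂ H] [CompleteSpace H]

lemma ak_norm_star_le (V : H →L[ℂ] H) (hV : V ∈ unitary (H →L[ℂ] H)) :
    ‖star V‖ ≤ 1 := by
  have h2 : V * star V = 1 := (Unitary.mem_iff.mp hV).2
  have h3 : ‖star (star V) * star V‖ = ‖star V‖ * ‖star V‖ := CStarRing.norm_star_mul_self
  rw [star_star, h2] at h3
  have h4 : ‖(1 : H →L[ℂ] H)‖ ≤ 1 := ContinuousLinearMap.norm_id_le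
  nlinarith [norm_nonneg (star V), h3 ▸ h4]

lemma ak_norm_smul_star_lt (V : H →L[ℂ] H) (hV : V ∈ unitary (H →L[ℂ] H)) {z : ℂ}
    (hz : ‖z‖ < 1) : ‖z • star V‖ < 1 := by
  calc ‖z • star V‖ = ‖z‖ * ‖star V‖ := norm_smul _ _
    _ ≤ ‖z‖ * 1 := mul_le_mul_of_nonneg_left (ak_norm_star_le V hV) (norm_nonneg z)
    _ < 1 := by simpa using hz

lemma ak_spectral_integral (V : unitary (H →L[ℂ] H)) (φ : H)
    (ν : Measure Circle) (hν : IsSpectralMeasureU V φ ν) {z : ℂ} (hz : ‖z‖ < 1)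
    (w : H) (hw : ((1 : H →L[ℂ] H) - z • star (V : H →L[ℂ] H)) w = φ) :
    ∫ ξ : Circle, (1 - (starRingEnd ℂ) (ξ : ℂ) * z)⁻¹ ∂ν = (inner ℂ φ w : ℂ) := by
  haveI : IsFiniteMeasure ν := hν.1
  set Vop := (V : H →L[ℂ] H) with hVop
  set x := z • star Vop with hx
  have hxn : ‖x‖ < 1 := ak_norm_smul_star_lt Vop V.2 hz
  set u : (H →L[ℂ] H)ˣ := Units.oneSub x hxn with hu
  have hwu : w = u.inv φ := by
    have h0 : u.inv (u.val w) = w := by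
      rw [← ContinuousLinearMap.mul_apply, u.inv_val, ContinuousLinearMap.one_apply]
    have h1 : u.val w = φ := hw
    rw [← h1]
    exact h0.symm
  have hsum : Summable (fun n : ℕ => x ^ n) := summable_geometric_of_norm_lt_one hxn
  have huinv : u.inv = ∑' n : ℕ, x ^ n := rfl
  have hsum2 : Summable (fun n : ℕ => (x ^ n) φ) :=
    (ContinuousLinearMap.apply ℂ H φ).summable hsum
  have hR : (inner ℂ φ w : ℂ) = ∑' n : ℕ, z ^ n * (inner ℂ φ (((star Vop) ^ n) φ) : ℂ) := by
    rw [hwu, huinv]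
    have h1 := ContinuousLinearMap.map_tsum (ContinuousLinearMap.apply ℂ H φ) hsum
    simp only [ContinuousLinearMap.apply_apply] at h1
    rw [h1]
    have h2 := ContinuousLinearMap.map_tsum (innerSL ℂ φ) hsum2
    simp only [innerSL_apply_apply] at h2
    rw [h2]
    congr 1
    funext n
    rw [hx, smul_pow, ContinuousLinearMap.smul_apply, inner_smul_right]
  have hmom : ∀ n : ℕ, (inner ℂ φ (((star Vop) ^ n) φ) : ℂ) = ∫ ξ : Circle, ((ξ : ℂ))⁻¹ ^ n ∂ν := by
    intro n
    have h3 := hν.2 (-(n : ℤ))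
    have h4 : ((V ^ (-(n : ℤ)) : unitary (H →L[ℂ] H)) : H →L[ℂ] H) = (star Vop) ^ n := by
      rw [zpow_neg, zpow_natCast, ← Unitary.star_eq_inv, ← star_pow]
      exact congrArg star (SubmonoidClass.coe_pow V n)
    rw [h4] at h3
    rw [h3]
    congr 1
    funext ξ
    rw [zpow_neg, zpow_natCast, inv_pow]
  have habs : ∀ ξ : Circle, ‖(starRingEnd ℂ) (ξ : ℂ) * z‖ < 1 := by
    intro ξ
    rw [norm_mul, RCLike.norm_conj]
    simp only [Circle.norm_coe, one_mul]
    simpa using hz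
  have hpt : ∀ ξ : Circle, (1 - (starRingEnd ℂ) (ξ : ℂ) * z)⁻¹
      = ∑' n : ℕ, ((starRingEnd ℂ) (ξ : ℂ) * z) ^ n :=
    fun ξ => (tsum_geometric_of_norm_lt_one (habs ξ)).symm
  have hmeas : ∀ n : ℕ, AEStronglyMeasurable
      (fun ξ : Circle => ((starRingEnd ℂ) (ξ : ℂ) * z) ^ n) ν := by
    intro n
    apply Continuous.aestronglyMeasurable
    exact ((Complex.continuous_conj.comp continuous_subtype_val).mul continuous_const).pow n
  have hlint : (∑' n : ℕ, ∫⁻ ξ : Circle, ‖((starRingEnd ℂ) (ξ : ℂ) * z) ^ n‖₊ ∂ν) ≠ ⊤ := by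
    have heq : ∀ n : ℕ, ∫⁻ ξ : Circle, ‖((starRingEnd ℂ) (ξ : ℂ) * z) ^ n‖₊ ∂ν
        = (‖z‖₊ : ENNReal) ^ n * ν Set.univ := by
      intro n
      have h6 : ∀ ξ : Circle, (‖((starRingEnd ℂ) (ξ : ℂ) * z) ^ n‖₊ : ENNReal)
          = (‖z‖₊ : ENNReal) ^ n := by
        intro ξ
        have h7 : ‖(starRingEnd ℂ) (ξ : ℂ)‖₊ = 1 := by
          rw [← NNReal.coe_inj]
          simp [coe_nnnorm, RCLike.norm_conj, Circle.norm_coe]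
        rw [← ENNReal.coe_pow, ENNReal.coe_inj, nnnorm_pow, nnnorm_mul, h7, one_mul]
      simp_rw [h6]
      rw [lintegral_const]
    simp_rw [heq]
    rw [ENNReal.tsum_mul_right]
    apply ENNReal.mul_ne_top
    · rw [ENNReal.tsum_geometric]
      apply ENNReal.inv_ne_top.mpr
      simp only [ne_eq, tsub_eq_zero_iff_le, not_le]
      exact_mod_cast hz
    · exact (measure_ne_top ν _)
  calc ∫ ξ : Circle, (1 - (starRingEnd ℂ) (ξ : ℂ) * z)⁻¹ ∂ν
      = ∫ ξ : Circle, ∑' n : ℕ, ((starRingEnd ℂ) (ξ : ℂ) * z) ^ n ∂ν := by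
        congr 1; funext ξ; exact hpt ξ
    _ = ∑' n : ℕ, ∫ ξ : Circle, ((starRingEnd ℂ) (ξ : ℂ) * z) ^ n ∂ν :=
        integral_tsum (fun n => hmeas n) hlint
    _ = ∑' n : ℕ, z ^ n * (inner ℂ φ (((star Vop) ^ n) φ) : ℂ) := by
        congr 1
        funext n
        rw [hmom n]
        rw [← integral_const_mul]
        congr 1
        funext ξ
        rw [mul_pow]
        rw [← Circle.coe_inv_eq_conj, Circle.coe_inv]
        ring
    _ = inner ℂ φ w := hR.symm

end AKAux

/-- The Aronszajn–Krein formula for unitary rank-one perturbations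
`U_α = U + (α - 1)⟨·, U⁻¹φ⟩φ`: each `U_α` is unitary and
`Kν_α(z) = α Kν_1(z) / (1 + (α - 1) Kν_1(z))`. -/
theorem aronszajn_krein_unitary {H : Type*} [NormedAddCommGroup H] [InnerProductSpace ℂ H]
    [CompleteSpace H] [TopologicalSpace.SeparableSpace H]
    (U : unitary (H →L[ℂ] H)) (φ : H) (hφ : ‖φ‖ = 1)
    (ν1 : Measure Circle) (hν1 : IsSpectralMeasureU U φ ν1) :
    ∀ α : Circle,
      ∃ h : uPert (U : H →L[ℂ] H) φ α ∈ unitary (H →L[ℂ] H),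
        ∀ να : Measure Circle,
          IsSpectralMeasureU (⟨uPert (U : H →L[ℂ] H) φ α, h⟩ : unitary (H →L[ℂ] H)) φ να →
          ∀ z ∈ Metric.ball (0 : ℂ) 1,
            (1 + ((α : ℂ) - 1) *
                ∫ ξ : Circle, (1 - (starRingEnd ℂ) (ξ : ℂ) * z)⁻¹ ∂ν1) ≠ 0 ∧
            ∫ ξ : Circle, (1 - (starRingEnd ℂ) (ξ : ℂ) * z)⁻¹ ∂να =
              (α : ℂ) * (∫ ξ : Circle, (1 - (starRingEnd ℂ) (ξ : ℂ) * z)⁻¹ ∂ν1) /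
                (1 + ((α : ℂ) - 1) *
                  ∫ ξ : Circle, (1 - (starRingEnd ℂ) (ξ : ℂ) * z)⁻¹ ∂ν1) := by
  intro α
  set Uop := (U : H →L[ℂ] H) with hUop
  obtain ⟨hUs, hUm⟩ := Unitary.mem_iff.mp U.2
  have hφφ : (inner ℂ φ φ : ℂ) = 1 := by
    rw [inner_self_eq_norm_sq_to_K, hφ]
    norm_num
  have hαconj : (starRingEnd ℂ) (α : ℂ) * (α : ℂ) = 1 := by
    rw [mul_comm, Complex.mul_conj, Circle.normSq_coe]
    norm_num
  have hαne : (α : ℂ) ≠ 0 := Circle.coe_ne_zero α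
  have hadj : ∀ (A : H →L[ℂ] H) (χ ψ : H), (inner ℂ ((star A) χ) ψ : ℂ) = inner ℂ χ (A ψ) := by
    intro A χ ψ
    rw [ContinuousLinearMap.star_eq_adjoint]
    exact ContinuousLinearMap.adjoint_inner_left A ψ χ
  set P : H →L[ℂ] H := (innerSL ℂ φ).smulRight φ with hP
  set Q : H →L[ℂ] H := 1 + ((α : ℂ) - 1) • P with hQ
  set Qb : H →L[ℂ] H := 1 + ((starRingEnd ℂ) (α : ℂ) - 1) • P with hQb
  have hQstar : star Q = Qb := by
    rw [ContinuousLinearMap.star_eq_adjoint]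
    symm
    apply (ContinuousLinearMap.eq_adjoint_iff Qb Q).mpr
    intro x y
    simp only [hQb, hQ, hP, ContinuousLinearMap.add_apply, ContinuousLinearMap.one_apply,
      ContinuousLinearMap.smul_apply, ContinuousLinearMap.smulRight_apply, innerSL_apply_apply,
      inner_add_left, inner_add_right, inner_smul_left, inner_smul_right, map_sub, map_one,
      Complex.conj_conj, inner_smul_right]
    ring_nf
    rw [inner_conj_symm]
    ring
  have hRinv : Ring.inverse Uop = star Uop := by
    have hunit : IsUnit Uop := ⟨Unitary.toUnits U, rfl⟩
    have hmi : Uop * Ring.inverse Uop = 1 := Ring.mul_inverse_cancel Uop hunit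
    calc Ring.inverse Uop = (star Uop * Uop) * Ring.inverse Uop := by rw [hUs, one_mul]
      _ = star Uop * (Uop * Ring.inverse Uop) := mul_assoc _ _ _
      _ = star Uop := by rw [hmi, mul_one]
  have hpert : uPert Uop φ α = Q * Uop := by
    unfold uPert
    rw [hRinv]
    ext ψ
    simp only [hQ, hP, ContinuousLinearMap.add_apply, ContinuousLinearMap.mul_apply,
      ContinuousLinearMap.one_apply, ContinuousLinearMap.smul_apply,
      ContinuousLinearMap.smulRight_apply, innerSL_apply_apply]
    rw [hadj Uop φ ψ]
  have hQmem : Q ∈ unitary (H →L[ℂ] H) := by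
    rw [Unitary.mem_iff, hQstar]
    constructor
    · ext ψ
      simp only [hQb, hQ, hP, ContinuousLinearMap.mul_apply, ContinuousLinearMap.add_apply,
        ContinuousLinearMap.one_apply, ContinuousLinearMap.smul_apply,
        ContinuousLinearMap.smulRight_apply, innerSL_apply_apply, inner_add_right, inner_smul_right,
        hφφ]
      match_scalars
      · ring
      · linear_combination (inner ℂ φ ψ : ℂ) * hαconj
    · ext ψ
      simp only [hQb, hQ, hP, ContinuousLinearMap.mul_apply, ContinuousLinearMap.add_apply,
        ContinuousLinearMap.one_apply, ContinuousLinearMap.smul_apply,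
        ContinuousLinearMap.smulRight_apply, innerSL_apply_apply, inner_add_right, inner_smul_right,
        hφφ]
      match_scalars
      · ring
      · linear_combination (inner ℂ φ ψ : ℂ) * hαconj
  have hmem : uPert Uop φ α ∈ unitary (H →L[ℂ] H) := by
    rw [hpert]
    exact mul_mem hQmem U.2
  refine ⟨hmem, ?_⟩
  intro να hνα z hzball
  have hz : ‖z‖ < 1 := mem_ball_zero_iff.mp hzball
  set Wop : H →L[ℂ] H := uPert Uop φ α with hWop
  set W : unitary (H →L[ℂ] H) := ⟨Wop, hmem⟩ with hW
  have hxU : ‖z • star Uop‖ < 1 := ak_norm_smul_star_lt Uop U.2 hz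
  have hxW : ‖z • star Wop‖ < 1 := ak_norm_smul_star_lt Wop hmem hz
  set uA : (H →L[ℂ] H)ˣ := Units.oneSub (z • star Uop) hxU with huA
  set uB : (H →L[ℂ] H)ˣ := Units.oneSub (z • star Wop) hxW with huB
  have huAval : ∀ ψ : H, uA.val ψ = ψ - z • (star Uop) ψ := by
    intro ψ
    show ((1 : H →L[ℂ] H) - z • star Uop) ψ = _
    simp [ContinuousLinearMap.sub_apply, ContinuousLinearMap.smul_apply]
  have huAinv_val : ∀ ψ : H, uA.inv (uA.val ψ) = ψ := by
    intro ψ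
    rw [← ContinuousLinearMap.mul_apply, uA.inv_val, ContinuousLinearMap.one_apply]
  have huAval_inv : ∀ ψ : H, uA.val (uA.inv ψ) = ψ := by
    intro ψ
    rw [← ContinuousLinearMap.mul_apply, uA.val_inv, ContinuousLinearMap.one_apply]
  have huBinv_val : ∀ ψ : H, uB.inv (uB.val ψ) = ψ := by
    intro ψ
    rw [← ContinuousLinearMap.mul_apply, uB.inv_val, ContinuousLinearMap.one_apply]
  set wA : H := uA.inv φ with hwAdef
  set wB : H := uB.inv φ with hwBdef
  have hwA : ((1 : H →L[ℂ] H) - z • star Uop) wA = φ := huAval_inv φ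
  have hwB : ((1 : H →L[ℂ] H) - z • star Wop) wB = φ := by
    rw [hwBdef]
    rw [← ContinuousLinearMap.mul_apply]
    change (uB.val * uB.inv) φ = φ
    rw [uB.val_inv, ContinuousLinearMap.one_apply]
  set F : ℂ := ∫ ξ : Circle, (1 - (starRingEnd ℂ) (ξ : ℂ) * z)⁻¹ ∂ν1 with hFdef
  set Fα : ℂ := ∫ ξ : Circle, (1 - (starRingEnd ℂ) (ξ : ℂ) * z)⁻¹ ∂να with hFαdef
  have hF : F = inner ℂ φ wA := ak_spectral_integral U φ ν1 hν1 hz wA hwA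
  have hFα : Fα = inner ℂ φ wB := ak_spectral_integral W φ να hνα hz wB hwB
  set u0 : H := (star Uop) φ with hu0def
  set t : ℂ := inner ℂ φ (uA.inv u0) with htdef
  -- z * t = F - 1
  have hzu0 : z • uA.inv u0 = wA - φ := by
    have h1 : uA.val (z • uA.inv u0) = uA.val (wA - φ) := by
      rw [_root_.map_smul, huAval_inv]
      rw [map_sub]
      rw [huAval_inv φ]  -- uA.val wA = uA.val (uA.inv φ) = φ
      rw [huAval φ]
      module
    have := congrArg uA.inv h1
    rwa [huAinv_val, huAinv_val] at this
  have key1 : z * t = F - 1 := by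
    rw [htdef, ← inner_smul_right, hzu0, inner_sub_right, ← hF, hφφ]
  set c : ℂ := z * ((starRingEnd ℂ) (α : ℂ) - 1) with hcdef
  -- star Wop and the perturbed resolvent equation
  have hWstar : star Wop = star Uop * Qb := by
    rw [hpert, star_mul, hQstar]
  have hB : ∀ ψ : H, ((1 : H →L[ℂ] H) - z • star Wop) ψ
      = ((1 : H →L[ℂ] H) - z • star Uop) ψ - (c * (inner ℂ φ ψ : ℂ)) • u0 := by
    intro ψ
    simp only [ContinuousLinearMap.sub_apply, ContinuousLinearMap.smul_apply,
      ContinuousLinearMap.one_apply, hWstar, ContinuousLinearMap.mul_apply]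
    rw [hQb]
    simp only [ContinuousLinearMap.add_apply, ContinuousLinearMap.one_apply,
      ContinuousLinearMap.smul_apply, hP, ContinuousLinearMap.smulRight_apply, innerSL_apply_apply]
    rw [map_add, _root_.map_smul, _root_.map_smul]
    rw [hcdef, hu0def]
    module
  -- inner of u0 with itself
  have hu0inner : (inner ℂ u0 u0 : ℂ) = 1 := by
    rw [hu0def, hadj Uop φ ((star Uop) φ), ← ContinuousLinearMap.mul_apply, hUm,
      ContinuousLinearMap.one_apply, hφφ]
  have hu0ne : u0 ≠ 0 := by
    intro h
    rw [h, inner_zero_right] at hu0inner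
    exact one_ne_zero hu0inner.symm
  -- nonvanishing of 1 - c * t
  have hct : (1 : ℂ) - c * t ≠ 0 := by
    intro hct0
    have h1 : ((1 : H →L[ℂ] H) - z • star Wop) (uA.inv u0) = ((1 : ℂ) - c * t) • u0 := by
      rw [hB]
      have h2 : ((1 : H →L[ℂ] H) - z • star Uop) (uA.inv u0) = u0 := huAval_inv u0
      rw [h2, ← htdef]
      module
    rw [hct0, zero_smul] at h1
    have h3 : uA.inv u0 = 0 := by
      have h4 := huBinv_val (uA.inv u0)
      have h5 : uB.val (uA.inv u0) = 0 := h1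
      rw [h5, map_zero] at h4
      exact h4.symm
    have h6 : u0 = 0 := by
      have := huAval_inv u0
      rw [h3, map_zero] at this
      exact this.symm
    exact hu0ne h6
  have hct2 : c * t = ((starRingEnd ℂ) (α : ℂ) - 1) * (F - 1) := by
    rw [← key1, hcdef]
    ring
  have hrel : (1 : ℂ) + ((α : ℂ) - 1) * F = (α : ℂ) * ((1 : ℂ) - c * t) := by
    rw [hct2]
    linear_combination (F - 1) * hαconj
  have hDne : (1 : ℂ) + ((α : ℂ) - 1) * F ≠ 0 := by
    rw [hrel]
    exact mul_ne_zero hαne hct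
  refine ⟨hDne, ?_⟩
  -- the Aronszajn–Krein identity
  have hstep : ((1 : H →L[ℂ] H) - z • star Uop) wB = φ + (c * Fα) • u0 := by
    have h1 := hB wB
    rw [hwB] at h1
    rw [hFα]
    have h2 := congrArg (fun v => v + (c * (inner ℂ φ wB : ℂ)) • u0) h1
    rw [sub_add_cancel] at h2
    rw [← h2]
  have hwBeq : wB = wA + (c * Fα) • uA.inv u0 := by
    have h1 : uA.val wB = φ + (c * Fα) • u0 := hstep
    have h2 := congrArg uA.inv h1
    rw [huAinv_val, map_add, _root_.map_smul] at h2
    exact h2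
  have hFαeq : Fα = F + c * Fα * t := by
    calc Fα = (inner ℂ φ wB : ℂ) := hFα
      _ = (inner ℂ φ wA : ℂ) + c * Fα * (inner ℂ φ (uA.inv u0) : ℂ) := by
          rw [hwBeq, inner_add_right, inner_smul_right]
      _ = F + c * Fα * t := by rw [← hF, ← htdef]
  show Fα = (α : ℂ) * F / (1 + ((α : ℂ) - 1) * F)
  rw [eq_div_iff hDne, hrel]
  linear_combination (α : ℂ) * hFαeq
end
end

section
/- Let U be a unitary operator on a separable complex Hilbert space H and let φ ∈ H with ‖φ‖ = 1. For α ∈ 𝕋 set U_α = U + (α − 1)⟨·, U⁻¹φ⟩φ (each U_α is unitary) and let ν_α be the spectral measure of φ for U_α. Then for every Borel set B ⊆ 𝕋 the function α ↦ ν_α(B) is m-measurable and ∫_𝕋 ν_α(B) dm(α) = m(B). (The family {ν_α}_{α∈𝕋} of spectral measures of all unitary rank-one perturbations is a canonical system of measures over (𝕋, m).) -/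
open MeasureTheory Complex

noncomputable section

variable {H : Type*} [NormedAddCommGroup H] [InnerProductSpace ℂ H] [CompleteSpace H]

section OpAux

open ContinuousLinearMap in
example : True := trivial

variable {H : Type*} [NormedAddCommGroup H] [InnerProductSpace ℂ H] [CompleteSpace H]

local notation "⟪" x ", " y "⟫" => @inner ℂ _ _ x y

lemma adjoint_smulRight (ψ χ : H) :
    ContinuousLinearMap.adjoint ((innerSL ℂ ψ).smulRight χ) = (innerSL ℂ χ).smulRight ψ := by
  symm
  rw [ContinuousLinearMap.eq_adjoint_iff]
  intro x y
  simp [inner_smul_left, inner_smul_right, mul_comm, ← inner_conj_symm y ψ]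

lemma ringInverse_unitary (U : unitary (H →L[ℂ] H)) :
    Ring.inverse (U : H →L[ℂ] H) = star (U : H →L[ℂ] H) := by
  simpa [← Unitary.star_eq_inv, Unitary.coe_star] using Ring.inverse_unit (Unitary.toUnits U)

lemma uPert_apply' (U : unitary (H →L[ℂ] H)) (φ : H) (α : Circle) (x : H) :
    uPert (U : H →L[ℂ] H) φ α x
      = (U : H →L[ℂ] H) x + (((α : ℂ) - 1) * ⟪star (U : H →L[ℂ] H) φ, x⟫) • φ := by
  simp [uPert, ringInverse_unitary, smul_smul]

lemma star_uPert (U : unitary (H →L[ℂ] H)) (φ : H) (α : Circle) (x : H) :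
    star (uPert (U : H →L[ℂ] H) φ α) x
      = star (U : H →L[ℂ] H) x
        + ((starRingEnd ℂ) ((α : ℂ) - 1) * ⟪φ, x⟫) • star (U : H →L[ℂ] H) φ := by
  rw [uPert, ringInverse_unitary, star_add, star_smul]
  have h2 : star ((innerSL ℂ (star (U : H →L[ℂ] H) φ)).smulRight φ)
      = (innerSL ℂ φ).smulRight (star (U : H →L[ℂ] H) φ) := by
    rw [ContinuousLinearMap.star_eq_adjoint (((innerSL ℂ) (star (U : H →L[ℂ] H) φ)).smulRight φ),
      adjoint_smulRight]
  rw [h2]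
  simp [smul_smul]

lemma uPert_mem (U : unitary (H →L[ℂ] H)) (φ : H) (hφ : ‖φ‖ = 1) (α : Circle) :
    uPert (U : H →L[ℂ] H) φ α ∈ unitary (H →L[ℂ] H) := by
  set A := (U : H →L[ℂ] H) with hA
  set ψ := star A φ with hψ
  have hφφ : ⟪φ, φ⟫ = 1 := by
    rw [inner_self_eq_norm_sq_to_K, hφ]; norm_num
  have hsUU : ∀ x, star A (A x) = x := by
    intro x
    have h := U.2.1
    calc star A (A x) = (star A * A) x := rfl
    _ = x := by rw [h]; rfl
  have hUsU : ∀ x, A (star A x) = x := by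
    intro x
    have h := U.2.2
    calc A (star A x) = (A * star A) x := rfl
    _ = x := by rw [h]; rfl
  have hUψ : A ψ = φ := hUsU φ
  have hψψ : ⟪ψ, ψ⟫ = 1 := by
    rw [hψ, ContinuousLinearMap.star_eq_adjoint]
    rw [ContinuousLinearMap.adjoint_inner_left]
    rw [← ContinuousLinearMap.star_eq_adjoint, hUψ]
    exact hφφ
  have hψx : ∀ x, ⟪ψ, x⟫ = ⟪φ, A x⟫ := by
    intro x
    rw [hψ, ContinuousLinearMap.star_eq_adjoint, ContinuousLinearMap.adjoint_inner_left]
  have hα : (starRingEnd ℂ) (α : ℂ) * (α : ℂ) = 1 := by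
    rw [mul_comm, Complex.mul_conj, Complex.normSq_eq_norm_sq]
    simp [Circle.norm_coe]
  rw [Unitary.mem_iff]
  constructor
  · ext x
    rw [ContinuousLinearMap.mul_apply, ContinuousLinearMap.one_apply]
    rw [uPert_apply', star_uPert]
    simp only [map_add, ContinuousLinearMap.map_smul, inner_add_right, inner_smul_right]
    rw [hsUU, ← hψ, ← hψx, hφφ, map_sub, map_one]
    match_scalars
    · ring
    · linear_combination (⟪ψ, x⟫) * hα
  · ext x
    rw [ContinuousLinearMap.mul_apply, ContinuousLinearMap.one_apply]
    rw [star_uPert, uPert_apply']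
    simp only [map_add, ContinuousLinearMap.map_smul, inner_add_right, inner_smul_right]
    rw [hUsU, hUψ, ← hψ, hψx, hUsU, hψψ, map_sub, map_one]
    match_scalars
    · ring
    · linear_combination (⟪φ, x⟫) * hα

end OpAux
section CircleInt

open scoped Real

instance : mc.IsMulLeftInvariant :=
  Measure.isMulLeftInvariant_haarMeasure (⊤ : TopologicalSpace.PositiveCompacts Circle)

lemma circle_coe_zpow (z : Circle) (n : ℤ) : ((z ^ n : Circle) : ℂ) = (z : ℂ) ^ n := by
  have hp : ∀ m : ℕ, ((z ^ m : Circle) : ℂ) = (z : ℂ) ^ m := fun m => map_pow Circle.coeHom z m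
  cases n with
  | ofNat m => simpa using hp m
  | negSucc m => rw [zpow_negSucc, zpow_negSucc, Circle.coe_inv, hp]

lemma continuous_circle_zpow (n : ℤ) : Continuous fun ξ : Circle => (ξ : ℂ) ^ n := by
  have : (fun ξ : Circle => (ξ : ℂ) ^ n) = fun ξ : Circle => ((ξ ^ n : Circle) : ℂ) := by
    funext ξ; rw [circle_coe_zpow]
  rw [this]
  exact continuous_induced_dom.comp (continuous_zpow n)

lemma integrable_continuous_circle {E : Type*} [NormedAddCommGroup E] {f : Circle → E}
    (hf : Continuous f) (μ : Measure Circle)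
    [IsFiniteMeasure μ] : MeasureTheory.Integrable f μ :=
  hf.integrable_of_hasCompactSupport (HasCompactSupport.of_compactSpace f)

lemma integral_circle_zpow {n : ℤ} (hn : n ≠ 0) : ∫ α : Circle, (α : ℂ) ^ n ∂mc = 0 := by
  set β : Circle := Circle.exp (π / n) with hβ
  have hβn : (β : ℂ) ^ n = -1 := by
    rw [hβ, Circle.coe_exp, ← Complex.exp_int_mul]
    have : (n : ℂ) * ((π / n : ℝ) * Complex.I) = π * Complex.I := by
      have hn' : (n : ℂ) ≠ 0 := Int.cast_ne_zero.mpr hn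
      push_cast
      field_simp
    rw [this, Complex.exp_pi_mul_I]
  have key : ∫ α : Circle, ((β * α : Circle) : ℂ) ^ n ∂mc = ∫ α : Circle, (α : ℂ) ^ n ∂mc :=
    MeasureTheory.integral_mul_left_eq_self (fun α : Circle => (α : ℂ) ^ n) β
  have expand : ∫ α : Circle, ((β * α : Circle) : ℂ) ^ n ∂mc
      = (β : ℂ) ^ n * ∫ α : Circle, (α : ℂ) ^ n ∂mc := by
    rw [← MeasureTheory.integral_const_mul]
    congr 1
    funext α
    rw [Circle.coe_mul, mul_zpow]
  rw [expand, hβn] at key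
  linear_combination (key) * (-1/2 : ℂ)

lemma integral_circle_zpow_eq (n : ℤ) :
    ∫ α : Circle, (α : ℂ) ^ n ∂mc = if n = 0 then 1 else 0 := by
  split_ifs with h
  · subst h; simp
  · exact integral_circle_zpow h

end CircleInt
section Moments

variable {H : Type*} [NormedAddCommGroup H] [InnerProductSpace ℂ H] [CompleteSpace H]

local notation "⟪" x ", " y "⟫" => @inner ℂ _ _ x y

lemma uPert_pow_expansion (U : unitary (H →L[ℂ] H)) (φ : H) (hφ : ‖φ‖ = 1) (n : ℕ) :
    ∃ w : ℕ → H, (∀ k, n < k → w k = 0) ∧ (n ≠ 0 → ⟪φ, w 0⟫ = 0) ∧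
      ∀ α : Circle, ((uPert (U : H →L[ℂ] H) φ α) ^ n) φ
        = ∑ k ∈ Finset.range (n + 1), ((α : ℂ)) ^ k • w k := by
  set A := (U : H →L[ℂ] H) with hA
  have hφφ : ⟪φ, φ⟫ = 1 := by rw [inner_self_eq_norm_sq_to_K, hφ]; norm_num
  have hψx : ∀ x, ⟪star A φ, x⟫ = ⟪φ, A x⟫ := fun x => by
    rw [ContinuousLinearMap.star_eq_adjoint, ContinuousLinearMap.adjoint_inner_left]
  induction n with
  | zero =>
    refine ⟨fun k => if k = 0 then φ else 0, ?_, by simp, ?_⟩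
    · intro k hk
      have : k ≠ 0 := by omega
      simp [this]
    · intro α; simp
  | succ n ih =>
    obtain ⟨w, hw0, -, hwsum⟩ := ih
    refine ⟨fun k => (A (w k) - ⟪φ, A (w k)⟫ • φ)
        + (if k = 0 then 0 else ⟪φ, A (w (k - 1))⟫ • φ), ?_, ?_, ?_⟩
    · intro k hk
      have h1 : w k = 0 := hw0 k (by omega)
      have h2 : w (k - 1) = 0 := hw0 (k - 1) (by omega)
      have hk0 : k ≠ 0 := by omega
      simp [h1, h2, hk0]
    · intro _
      simp [inner_sub_right, inner_smul_right, hφφ, hφ]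
    · intro α
      rw [pow_succ']
      rw [ContinuousLinearMap.mul_apply, hwsum α, map_sum]
      have hterm : ∀ k, uPert A φ α ((α : ℂ) ^ k • w k)
          = (α : ℂ) ^ k • (A (w k) - ⟪φ, A (w k)⟫ • φ)
            + (α : ℂ) ^ (k + 1) • (⟪φ, A (w k)⟫ • φ) := by
        intro k
        rw [ContinuousLinearMap.map_smul, uPert_apply', hψx]
        match_scalars <;> ring
      rw [Finset.sum_congr rfl fun k _ => hterm k, Finset.sum_add_distrib]
      have hre : ∑ k ∈ Finset.range (n + 1), (α : ℂ) ^ (k + 1) • (⟪φ, A (w k)⟫ • φ)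
          = ∑ k ∈ Finset.range (n + 2),
              (α : ℂ) ^ k • (if k = 0 then (0 : H) else ⟪φ, A (w (k - 1))⟫ • φ) := by
        rw [Finset.sum_range_succ' (fun k => (α : ℂ) ^ k •
          (if k = 0 then (0 : H) else ⟪φ, A (w (k - 1))⟫ • φ)) (n + 1)]
        simp
      have hg : ∑ k ∈ Finset.range (n + 1), (α : ℂ) ^ k • (A (w k) - ⟪φ, A (w k)⟫ • φ)
          = ∑ k ∈ Finset.range (n + 2), (α : ℂ) ^ k • (A (w k) - ⟪φ, A (w k)⟫ • φ) := by
        rw [Finset.sum_range_succ _ (n + 1), hw0 (n + 1) (by omega)]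
        simp
      rw [hre, hg, ← Finset.sum_add_distrib]
      exact Finset.sum_congr rfl fun k _ => by rw [← smul_add]

end Moments
section Moments2

variable {H : Type*} [NormedAddCommGroup H] [InnerProductSpace ℂ H] [CompleteSpace H]

local notation "⟪" x ", " y "⟫" => @inner ℂ _ _ x y

lemma continuous_uPert_moment (U : unitary (H →L[ℂ] H)) (φ : H) (hφ : ‖φ‖ = 1) (n : ℕ) :
    Continuous fun α : Circle => ⟪φ, ((uPert (U : H →L[ℂ] H) φ α) ^ n) φ⟫ := by
  obtain ⟨w, -, -, hsum⟩ := uPert_pow_expansion U φ hφ n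
  have : (fun α : Circle => ⟪φ, ((uPert (U : H →L[ℂ] H) φ α) ^ n) φ⟫)
      = fun α : Circle => ∑ k ∈ Finset.range (n + 1), (α : ℂ) ^ k * ⟪φ, w k⟫ := by
    funext α
    rw [hsum α, inner_sum]
    exact Finset.sum_congr rfl fun k _ => inner_smul_right _ _ _
  rw [this]
  refine continuous_finset_sum _ fun k _ => ?_
  exact (continuous_induced_dom.pow k).mul continuous_const

lemma integral_uPert_moment (U : unitary (H →L[ℂ] H)) (φ : H) (hφ : ‖φ‖ = 1) {n : ℕ}
    (hn : n ≠ 0) :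
    ∫ α : Circle, ⟪φ, ((uPert (U : H →L[ℂ] H) φ α) ^ n) φ⟫ ∂mc = 0 := by
  obtain ⟨w, -, hw0, hsum⟩ := uPert_pow_expansion U φ hφ n
  have heq : (fun α : Circle => ⟪φ, ((uPert (U : H →L[ℂ] H) φ α) ^ n) φ⟫)
      = fun α : Circle => ∑ k ∈ Finset.range (n + 1), (α : ℂ) ^ k * ⟪φ, w k⟫ := by
    funext α
    rw [hsum α, inner_sum]
    exact Finset.sum_congr rfl fun k _ => inner_smul_right _ _ _
  rw [heq]
  rw [MeasureTheory.integral_finset_sum]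
  · have : ∀ k ∈ Finset.range (n + 1),
        ∫ α : Circle, (α : ℂ) ^ k * ⟪φ, w k⟫ ∂mc
          = (if (k : ℤ) = 0 then 1 else 0) * ⟪φ, w k⟫ := by
      intro k _
      have zc : ∀ α : Circle, (α : ℂ) ^ k = (α : ℂ) ^ (k : ℤ) := fun α =>
        (zpow_natCast _ k).symm
      simp_rw [zc]
      rw [MeasureTheory.integral_mul_const, integral_circle_zpow_eq]
    rw [Finset.sum_congr rfl this]
    rw [Finset.sum_eq_single 0]
    · simpa using hw0 hn
    · intro k _ hk
      have : (k : ℤ) ≠ 0 := by exact_mod_cast hk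
      simp [this, hk]
    · simp
  · intro k _
    exact integrable_continuous_circle
      (((continuous_induced_dom.pow k).mul continuous_const)) mc

end Moments2
section Chars

def circleChar (n : ℤ) : C(Circle, ℂ) := ⟨fun ξ => (ξ : ℂ) ^ n, continuous_circle_zpow n⟩

@[simp] lemma circleChar_apply (n : ℤ) (ξ : Circle) : circleChar n ξ = (ξ : ℂ) ^ n := rfl

lemma circleChar_mul (m n : ℤ) : circleChar m * circleChar n = circleChar (m + n) := by
  ext ξ
  simp [zpow_add₀ (Circle.coe_ne_zero ξ)]

lemma circleChar_zero : circleChar 0 = 1 := by ext ξ; simp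

lemma star_circleChar (n : ℤ) : star (circleChar n) = circleChar (-n) := by
  ext ξ
  simp only [ContinuousMap.star_apply, circleChar_apply]
  rw [RCLike.star_def, map_zpow₀ (starRingEnd ℂ), ← Circle.coe_inv_eq_conj,
    Circle.coe_inv, inv_zpow, ← zpow_neg]

def charSpan : Submodule ℂ C(Circle, ℂ) := Submodule.span ℂ (Set.range circleChar)

lemma charSpan_mul_mem {f g : C(Circle, ℂ)} (hf : f ∈ charSpan) (hg : g ∈ charSpan) :
    f * g ∈ charSpan := by
  induction hf using Submodule.span_induction with
  | mem f hf =>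
    obtain ⟨m, rfl⟩ := hf
    induction hg using Submodule.span_induction with
    | mem g hg =>
      obtain ⟨n, rfl⟩ := hg
      rw [circleChar_mul]
      exact Submodule.subset_span ⟨m + n, rfl⟩
    | zero => rw [mul_zero]; exact zero_mem _
    | add g h _ _ hg hh => rw [mul_add]; exact add_mem hg hh
    | smul c g _ hg => rw [mul_smul_comm]; exact Submodule.smul_mem _ _ hg
  | zero => rw [zero_mul]; exact zero_mem _
  | add f h _ _ hf hh => rw [add_mul]; exact add_mem hf hh
  | smul c f _ hf => rw [smul_mul_assoc]; exact Submodule.smul_mem _ _ hf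

lemma charSpan_one_mem : (1 : C(Circle, ℂ)) ∈ charSpan := by
  rw [← circleChar_zero]; exact Submodule.subset_span ⟨0, rfl⟩

lemma charSpan_star_mem {f : C(Circle, ℂ)} (hf : f ∈ charSpan) : star f ∈ charSpan := by
  induction hf using Submodule.span_induction with
  | mem f hf =>
    obtain ⟨n, rfl⟩ := hf
    rw [star_circleChar]
    exact Submodule.subset_span ⟨-n, rfl⟩
  | zero => rw [star_zero]; exact zero_mem _
  | add f g _ _ hf hg => rw [star_add]; exact add_mem hf hg
  | smul c f _ hf => rw [star_smul]; exact Submodule.smul_mem _ _ hf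

def charAlg : StarSubalgebra ℂ C(Circle, ℂ) where
  toSubalgebra := charSpan.toSubalgebra charSpan_one_mem fun _ _ => charSpan_mul_mem
  star_mem' := charSpan_star_mem

lemma charAlg_carrier : (charAlg : Set C(Circle, ℂ)) = (charSpan : Set C(Circle, ℂ)) := rfl

lemma charAlg_dense : charAlg.topologicalClosure = ⊤ := by
  apply ContinuousMap.starSubalgebra_topologicalClosure_eq_top_of_separatesPoints
  intro x y hxy
  refine ⟨_, ⟨circleChar 1, Submodule.subset_span ⟨1, rfl⟩, rfl⟩, ?_⟩
  simp only [circleChar_apply, zpow_one]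
  exact fun h => hxy (Circle.coe_injective h)

lemma charSpan_approx (f : C(Circle, ℂ)) {ε : ℝ} (hε : 0 < ε) :
    ∃ g ∈ charSpan, ‖f - g‖ < ε := by
  have hf : f ∈ charAlg.topologicalClosure := by rw [charAlg_dense]; trivial
  have hf' : f ∈ closure (charAlg : Set C(Circle, ℂ)) := hf
  rw [Metric.mem_closure_iff] at hf'
  obtain ⟨g, hg, hd⟩ := hf' ε hε
  exact ⟨g, hg, by rwa [← dist_eq_norm]⟩

end Chars
section Avg

open MeasureTheory

lemma integral_cm_sub_le (μ : Measure Circle) [IsProbabilityMeasure μ] (f g : C(Circle, ℂ)) :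
    ‖(∫ ξ : Circle, f ξ ∂μ) - ∫ ξ : Circle, g ξ ∂μ‖ ≤ ‖f - g‖ := by
  rw [← integral_sub (integrable_continuous_circle f.continuous μ)
    (integrable_continuous_circle g.continuous μ)]
  have h := norm_integral_le_of_norm_le_const (μ := μ)
    (f := fun ξ : Circle => f ξ - g ξ) (C := ‖f - g‖)
    (Filter.Eventually.of_forall fun ξ => by
      simpa using ContinuousMap.norm_coe_le_norm (f - g) ξ)
  simpa using h

lemma avg_all (ν : Circle → Measure Circle) (hprob : ∀ α, IsProbabilityMeasure (ν α))
    (hchar : ∀ n : ℤ, Continuous (fun α : Circle => ∫ ξ : Circle, (ξ : ℂ) ^ n ∂ν α)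
      ∧ ∫ α : Circle, (∫ ξ : Circle, (ξ : ℂ) ^ n ∂ν α) ∂mc = ∫ ξ : Circle, (ξ : ℂ) ^ n ∂mc)
    (f : C(Circle, ℂ)) :
    Continuous (fun α : Circle => ∫ ξ : Circle, f ξ ∂ν α)
      ∧ ∫ α : Circle, (∫ ξ : Circle, f ξ ∂ν α) ∂mc = ∫ ξ : Circle, f ξ ∂mc := by
  haveI := hprob
  have hspan : ∀ g ∈ charSpan, Continuous (fun α : Circle => ∫ ξ : Circle, g ξ ∂ν α)
      ∧ ∫ α : Circle, (∫ ξ : Circle, g ξ ∂ν α) ∂mc = ∫ ξ : Circle, g ξ ∂mc := by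
    intro g hg
    induction hg using Submodule.span_induction with
    | mem g hg =>
      obtain ⟨n, rfl⟩ := hg
      exact hchar n
    | zero => simp [ContinuousMap.zero_apply, continuous_const]
    | add g h _ _ hgP hhP =>
      have hrw : ∀ μ : Measure Circle, ∀ _ : IsProbabilityMeasure μ,
          ∫ ξ : Circle, (g + h) ξ ∂μ = (∫ ξ : Circle, g ξ ∂μ) + ∫ ξ : Circle, h ξ ∂μ := by
        intro μ hμ
        simp only [ContinuousMap.add_apply]
        exact integral_add (integrable_continuous_circle g.continuous μ)
          (integrable_continuous_circle h.continuous μ)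
      have hfun : (fun α : Circle => ∫ ξ : Circle, (g + h) ξ ∂ν α)
          = fun α : Circle => (∫ ξ : Circle, g ξ ∂ν α) + ∫ ξ : Circle, h ξ ∂ν α := by
        funext α; exact hrw (ν α) (hprob α)
      constructor
      · rw [hfun]; exact hgP.1.add hhP.1
      · rw [hfun, integral_add (?_) (?_), hgP.2, hhP.2, hrw mc inferInstance]
        · exact integrable_continuous_circle hgP.1 mc
        · exact integrable_continuous_circle hhP.1 mc
    | smul c g _ hgP =>
      have hrw : ∀ μ : Measure Circle,
          ∫ ξ : Circle, (c • g) ξ ∂μ = c • ∫ ξ : Circle, g ξ ∂μ := by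
        intro μ
        simp only [ContinuousMap.smul_apply]
        exact integral_smul c _
      have hfun : (fun α : Circle => ∫ ξ : Circle, (c • g) ξ ∂ν α)
          = fun α : Circle => c • ∫ ξ : Circle, g ξ ∂ν α := by
        funext α; exact hrw (ν α)
      constructor
      · rw [hfun]; exact hgP.1.const_smul c
      · rw [hfun, integral_smul, hgP.2, hrw mc]
  -- approximation
  have happrox : ∀ k : ℕ, ∃ g ∈ charSpan, ‖f - g‖ < 1 / (k + 1) :=
    fun k => charSpan_approx f (by positivity)
  choose g hgmem hgnorm using happrox
  have hglim : Filter.Tendsto (fun k : ℕ => ‖f - g k‖) Filter.atTop (nhds 0) := by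
    apply squeeze_zero (fun k => norm_nonneg _) (fun k => le_of_lt (hgnorm k))
    exact tendsto_one_div_add_atTop_nhds_zero_nat
  have hUnif : TendstoUniformly (fun k (α : Circle) => ∫ ξ : Circle, (g k) ξ ∂ν α)
      (fun α : Circle => ∫ ξ : Circle, f ξ ∂ν α) Filter.atTop := by
    rw [Metric.tendstoUniformly_iff]
    intro ε hε
    filter_upwards [hglim.eventually (gt_mem_nhds hε)] with k hk α
    rw [dist_eq_norm]
    calc ‖(∫ ξ : Circle, f ξ ∂ν α) - ∫ ξ : Circle, (g k) ξ ∂ν α‖ ≤ ‖f - g k‖ :=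
          integral_cm_sub_le (ν α) f (g k)
    _ < ε := hk
  have hcont : Continuous (fun α : Circle => ∫ ξ : Circle, f ξ ∂ν α) :=
    hUnif.continuous (Filter.Frequently.of_forall fun k => (hspan (g k) (hgmem k)).1)
  refine ⟨hcont, ?_⟩
  -- integral identity
  have h1 : Filter.Tendsto (fun k : ℕ => ∫ α : Circle, (∫ ξ : Circle, (g k) ξ ∂ν α) ∂mc)
      Filter.atTop (nhds (∫ α : Circle, (∫ ξ : Circle, f ξ ∂ν α) ∂mc)) := by
    rw [tendsto_iff_norm_sub_tendsto_zero]
    apply squeeze_zero (fun k => norm_nonneg _) (fun k => ?_) hglim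
    have hb : ∀ α : Circle, ‖(∫ ξ : Circle, (g k) ξ ∂ν α) - ∫ ξ : Circle, f ξ ∂ν α‖
        ≤ ‖f - g k‖ := by
      intro α
      rw [norm_sub_rev]
      exact integral_cm_sub_le (ν α) f (g k)
    rw [← integral_sub (integrable_continuous_circle (hspan (g k) (hgmem k)).1 mc)
      (integrable_continuous_circle hcont mc)]
    have h := norm_integral_le_of_norm_le_const (μ := mc)
      (f := fun α : Circle => (∫ ξ : Circle, (g k) ξ ∂ν α) - ∫ ξ : Circle, f ξ ∂ν α)
      (C := ‖f - g k‖) (Filter.Eventually.of_forall hb)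
    simpa using h
  have h2 : Filter.Tendsto (fun k : ℕ => ∫ α : Circle, (∫ ξ : Circle, (g k) ξ ∂ν α) ∂mc)
      Filter.atTop (nhds (∫ ξ : Circle, f ξ ∂mc)) := by
    have : ∀ k, ∫ α : Circle, (∫ ξ : Circle, (g k) ξ ∂ν α) ∂mc
        = ∫ ξ : Circle, (g k) ξ ∂mc := fun k => (hspan (g k) (hgmem k)).2
    simp_rw [this]
    rw [tendsto_iff_norm_sub_tendsto_zero]
    apply squeeze_zero (fun k => norm_nonneg _) (fun k => ?_) hglim
    rw [norm_sub_rev]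
    exact integral_cm_sub_le mc f (g k)
  exact tendsto_nhds_unique h1 h2

end Avg
section AvgReal

open MeasureTheory
open scoped NNReal ENNReal

lemma avg_real (ν : Circle → Measure Circle) (hprob : ∀ α, IsProbabilityMeasure (ν α))
    (hchar : ∀ n : ℤ, Continuous (fun α : Circle => ∫ ξ : Circle, (ξ : ℂ) ^ n ∂ν α)
      ∧ ∫ α : Circle, (∫ ξ : Circle, (ξ : ℂ) ^ n ∂ν α) ∂mc = ∫ ξ : Circle, (ξ : ℂ) ^ n ∂mc)
    (f : C(Circle, ℝ)) :
    Continuous (fun α : Circle => ∫ ξ : Circle, f ξ ∂ν α)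
      ∧ ∫ α : Circle, (∫ ξ : Circle, f ξ ∂ν α) ∂mc = ∫ ξ : Circle, f ξ ∂mc := by
  haveI := hprob
  set fc : C(Circle, ℂ) := ⟨fun ξ => ((f ξ : ℝ) : ℂ),
    Complex.continuous_ofReal.comp f.continuous⟩ with hfc
  obtain ⟨hc, hi⟩ := avg_all ν hprob hchar fc
  have key : ∀ μ : Measure Circle, ∫ ξ : Circle, fc ξ ∂μ = ((∫ ξ : Circle, f ξ ∂μ : ℝ) : ℂ) :=
    fun μ => integral_ofReal
  have hre : (fun α : Circle => ∫ ξ : Circle, f ξ ∂ν α)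
      = fun α : Circle => (∫ ξ : Circle, fc ξ ∂ν α).re := by
    funext α; rw [key]; simp
  constructor
  · rw [hre]; exact Complex.continuous_re.comp hc
  · apply Complex.ofReal_injective
    calc ((∫ α : Circle, (∫ ξ : Circle, f ξ ∂ν α) ∂mc : ℝ) : ℂ)
        = ∫ α : Circle, ((∫ ξ : Circle, f ξ ∂ν α : ℝ) : ℂ) ∂mc := integral_ofReal.symm
      _ = ∫ α : Circle, (∫ ξ : Circle, fc ξ ∂ν α) ∂mc :=
          integral_congr_ae (Filter.Eventually.of_forall fun α => (key (ν α)).symm)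
      _ = ∫ ξ : Circle, fc ξ ∂mc := hi
      _ = ((∫ ξ : Circle, f ξ ∂mc : ℝ) : ℂ) := key mc

lemma avg_closed (ν : Circle → Measure Circle) (hprob : ∀ α, IsProbabilityMeasure (ν α))
    (hchar : ∀ n : ℤ, Continuous (fun α : Circle => ∫ ξ : Circle, (ξ : ℂ) ^ n ∂ν α)
      ∧ ∫ α : Circle, (∫ ξ : Circle, (ξ : ℂ) ^ n ∂ν α) ∂mc = ∫ ξ : Circle, (ξ : ℂ) ^ n ∂mc)
    {F : Set Circle} (hF : IsClosed F) :
    Measurable (fun α : Circle => ν α F) ∧ ∫⁻ α : Circle, ν α F ∂mc = mc F := by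
  haveI := hprob
  have δpos : ∀ k : ℕ, (0 : ℝ) < 1 / (k + 1) := fun k => by positivity
  have δlim : Filter.Tendsto (fun k : ℕ => 1 / ((k : ℝ) + 1)) Filter.atTop (nhds 0) :=
    tendsto_one_div_add_atTop_nhds_zero_nat
  set fk : ℕ → C(Circle, ℝ) := fun k =>
    ⟨fun ξ => ((thickenedIndicator (δpos k) F ξ : ℝ≥0) : ℝ),
      NNReal.continuous_coe.comp (thickenedIndicator (δpos k) F).continuous⟩ with hfk
  have fk_nonneg : ∀ k ξ, 0 ≤ fk k ξ := fun k ξ => NNReal.coe_nonneg _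
  have fk_le_one : ∀ k ξ, fk k ξ ≤ 1 := fun k ξ => by
    show ((thickenedIndicator (δpos k) F ξ : ℝ≥0) : ℝ) ≤ 1
    have := thickenedIndicator_le_one (δpos k) F ξ
    exact_mod_cast this
  have key : ∀ (k : ℕ) (μ : Measure Circle) [IsFiniteMeasure μ],
      ENNReal.ofReal (∫ ξ : Circle, fk k ξ ∂μ)
        = ∫⁻ ξ : Circle, (thickenedIndicator (δpos k) F ξ : ℝ≥0∞) ∂μ := by
    intro k μ _
    rw [ofReal_integral_eq_lintegral_ofReal (integrable_continuous_circle (fk k).continuous μ)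
      (Filter.Eventually.of_forall (fk_nonneg k))]
    congr 1
    funext ξ
    rw [hfk]
    simp [ENNReal.ofReal_coe_nnreal]
  have htend : ∀ (μ : Measure Circle) [IsFiniteMeasure μ],
      Filter.Tendsto (fun k : ℕ => ENNReal.ofReal (∫ ξ : Circle, fk k ξ ∂μ))
        Filter.atTop (nhds (μ F)) := by
    intro μ _
    have h := tendsto_lintegral_thickenedIndicator_of_isClosed μ hF δpos δlim
    exact (Filter.tendsto_congr fun k => (key k μ)).mpr h
  have hcontk : ∀ k : ℕ, Continuous fun α : Circle => ∫ ξ : Circle, fk k ξ ∂ν α :=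
    fun k => (avg_real ν hprob hchar (fk k)).1
  constructor
  · apply measurable_of_tendsto_metrizable'
      (f := fun k (α : Circle) => ENNReal.ofReal (∫ ξ : Circle, fk k ξ ∂ν α)) Filter.atTop
    · exact fun k => (ENNReal.continuous_ofReal.comp (hcontk k)).measurable
    · rw [tendsto_pi_nhds]
      exact fun α => htend (ν α)
  · have h1 : Filter.Tendsto
        (fun k : ℕ => ∫⁻ α : Circle, ENNReal.ofReal (∫ ξ : Circle, fk k ξ ∂ν α) ∂mc)
        Filter.atTop (nhds (∫⁻ α : Circle, ν α F ∂mc)) := by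
      apply tendsto_lintegral_of_dominated_convergence (bound := fun _ => 1)
      · exact fun k => (ENNReal.continuous_ofReal.comp (hcontk k)).measurable
      · intro k
        refine Filter.Eventually.of_forall fun α => ?_
        have hle : ∫ ξ : Circle, fk k ξ ∂ν α ≤ 1 := by
          have h1 : ∫ ξ : Circle, fk k ξ ∂ν α ≤ ∫ x : Circle, (1 : ℝ) ∂ν α :=
            integral_mono (integrable_continuous_circle (fk k).continuous (ν α))
              (integrable_const 1) (fk_le_one k)
          simpa using h1
        show ENNReal.ofReal (∫ ξ : Circle, fk k ξ ∂ν α) ≤ 1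
        calc ENNReal.ofReal (∫ ξ : Circle, fk k ξ ∂ν α) ≤ ENNReal.ofReal 1 :=
          ENNReal.ofReal_le_ofReal hle
        _ = 1 := ENNReal.ofReal_one
      · rw [MeasureTheory.lintegral_one]
        simp
      · exact Filter.Eventually.of_forall fun α => htend (ν α)
    have h2 : Filter.Tendsto
        (fun k : ℕ => ∫⁻ α : Circle, ENNReal.ofReal (∫ ξ : Circle, fk k ξ ∂ν α) ∂mc)
        Filter.atTop (nhds (mc F)) := by
      have hrw : ∀ k : ℕ, ∫⁻ α : Circle, ENNReal.ofReal (∫ ξ : Circle, fk k ξ ∂ν α) ∂mc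
          = ENNReal.ofReal (∫ ξ : Circle, fk k ξ ∂mc) := by
        intro k
        rw [← ofReal_integral_eq_lintegral_ofReal
          (integrable_continuous_circle (hcontk k) mc)
          (Filter.Eventually.of_forall fun α => integral_nonneg (fk_nonneg k))]
        rw [(avg_real ν hprob hchar (fk k)).2]
      simp_rw [hrw]
      exact htend mc
    exact tendsto_nhds_unique h1 h2

end AvgReal
section Main

open MeasureTheory
open scoped ComplexConjugate

local notation "⟪" x ", " y "⟫" => @inner ℂ _ _ x y

/-- The family `{ν_α}_{α ∈ 𝕋}` of spectral measures of all unitary rank-one perturbations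
`U_α = U + (α - 1)⟨·, U⁻¹φ⟩φ` is a canonical system of measures over `(𝕋, m)`. -/
theorem unitary_spectral_averaging {H : Type*} [NormedAddCommGroup H] [InnerProductSpace ℂ H]
    [CompleteSpace H] [TopologicalSpace.SeparableSpace H]
    (U : unitary (H →L[ℂ] H)) (φ : H) (hφ : ‖φ‖ = 1)
    (ν : Circle → Measure Circle)
    (hν : ∀ (α : Circle) (h : uPert (U : H →L[ℂ] H) φ α ∈ unitary (H →L[ℂ] H)),
      IsSpectralMeasureU (⟨uPert (U : H →L[ℂ] H) φ α, h⟩ : unitary (H →L[ℂ] H)) φ (ν α)) :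
    (∀ α : Circle, uPert (U : H →L[ℂ] H) φ α ∈ unitary (H →L[ℂ] H)) ∧
    ∀ B : Set Circle, MeasurableSet B →
      Measurable (fun α : Circle => ν α B) ∧
      ∫⁻ α : Circle, ν α B ∂mc = mc B := by
  have hmem : ∀ α : Circle, uPert (U : H →L[ℂ] H) φ α ∈ unitary (H →L[ℂ] H) :=
    fun α => uPert_mem U φ hφ α
  refine ⟨hmem, ?_⟩
  have spec := fun α => hν α (hmem α)
  haveI hfin : ∀ α, IsFiniteMeasure (ν α) := fun α => (spec α).1
  have hφφ : ⟪φ, φ⟫ = 1 := by rw [inner_self_eq_norm_sq_to_K, hφ]; norm_num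
  -- the moment identities
  have hmom : ∀ (m : ℕ) (α : Circle), ∫ ξ : Circle, (ξ : ℂ) ^ (m : ℤ) ∂ν α
      = ⟪φ, ((uPert (U : H →L[ℂ] H) φ α) ^ m) φ⟫ := by
    intro m α
    have h := (spec α).2 (m : ℤ)
    rw [zpow_natCast (G := ↥(unitary (H →L[ℂ] H)))] at h
    rw [← h, SubmonoidClass.coe_pow]
  have hmomneg : ∀ (m : ℕ) (α : Circle), ∫ ξ : Circle, (ξ : ℂ) ^ (-(m : ℤ)) ∂ν α
      = conj ⟪φ, ((uPert (U : H →L[ℂ] H) φ α) ^ m) φ⟫ := by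
    intro m α
    have h := (spec α).2 (-(m : ℤ))
    rw [zpow_neg, zpow_natCast (G := ↥(unitary (H →L[ℂ] H))), ← Unitary.star_eq_inv] at h
    rw [← h, Unitary.coe_star]
    have hc : ((( ⟨uPert (U : H →L[ℂ] H) φ α, hmem α⟩ : unitary (H →L[ℂ] H)) ^ m :
        unitary (H →L[ℂ] H)) : H →L[ℂ] H) = (uPert (U : H →L[ℂ] H) φ α) ^ m :=
      SubmonoidClass.coe_pow _ m
    rw [hc, ContinuousLinearMap.star_eq_adjoint, ContinuousLinearMap.adjoint_inner_right,
      ← inner_conj_symm]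
  -- probability measures
  haveI hprob : ∀ α, IsProbabilityMeasure (ν α) := by
    intro α
    have h := (spec α).2 0
    rw [zpow_zero] at h
    simp only [OneMemClass.coe_one, ContinuousLinearMap.one_apply, hφφ] at h
    have h2 : ∫ ξ : Circle, (ξ : ℂ) ^ (0 : ℤ) ∂ν α = ((ν α Set.univ).toReal : ℂ) := by
      simp [integral_const, Complex.real_smul, measureReal_def]
    rw [h2] at h
    refine ⟨?_⟩
    rw [← ENNReal.toReal_eq_one_iff]
    exact_mod_cast h.symm
  -- the character averaging hypothesis
  have hchar : ∀ n : ℤ, Continuous (fun α : Circle => ∫ ξ : Circle, (ξ : ℂ) ^ n ∂ν α)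
      ∧ ∫ α : Circle, (∫ ξ : Circle, (ξ : ℂ) ^ n ∂ν α) ∂mc
          = ∫ ξ : Circle, (ξ : ℂ) ^ n ∂mc := by
    intro n
    cases n with
    | ofNat m =>
      have hrw : (fun α : Circle => ∫ ξ : Circle, (ξ : ℂ) ^ (m : ℤ) ∂ν α)
          = fun α : Circle => ⟪φ, ((uPert (U : H →L[ℂ] H) φ α) ^ m) φ⟫ := by
        funext α; exact hmom m α
      constructor
      · show Continuous fun α : Circle => ∫ ξ : Circle, (ξ : ℂ) ^ (m : ℤ) ∂ν α
        rw [hrw]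
        exact continuous_uPert_moment U φ hφ m
      · show ∫ α : Circle, (∫ ξ : Circle, (ξ : ℂ) ^ (m : ℤ) ∂ν α) ∂mc
          = ∫ ξ : Circle, (ξ : ℂ) ^ (m : ℤ) ∂mc
        rcases Nat.eq_zero_or_pos m with hm | hm
        · subst hm
          have hone : ∀ (μ : Measure Circle) [IsProbabilityMeasure μ],
              ∫ ξ : Circle, (ξ : ℂ) ^ ((0 : ℕ) : ℤ) ∂μ = 1 := by
            intro μ _
            simp
          rw [hone mc]
          have : (fun α : Circle => ∫ ξ : Circle, (ξ : ℂ) ^ ((0 : ℕ) : ℤ) ∂ν α)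
              = fun _ : Circle => (1 : ℂ) := by
            funext α; exact hone (ν α)
          rw [this]
          simp
        · have hm' : m ≠ 0 := by omega
          rw [hrw, integral_uPert_moment U φ hφ hm',
            integral_circle_zpow (by exact_mod_cast hm')]
    | negSucc m =>
      have hmz : (Int.negSucc m) = -((m + 1 : ℕ) : ℤ) := by
        simp [Int.negSucc_eq]
      rw [hmz]
      have hrw : (fun α : Circle => ∫ ξ : Circle, (ξ : ℂ) ^ (-((m + 1 : ℕ) : ℤ)) ∂ν α)
          = fun α : Circle => conj ⟪φ, ((uPert (U : H →L[ℂ] H) φ α) ^ (m + 1)) φ⟫ := by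
        funext α; exact hmomneg (m + 1) α
      constructor
      · rw [hrw]
        exact continuous_star.comp (continuous_uPert_moment U φ hφ (m + 1))
      · rw [hrw]
        have : ∫ α : Circle, conj ⟪φ, ((uPert (U : H →L[ℂ] H) φ α) ^ (m + 1)) φ⟫ ∂mc
            = conj (∫ α : Circle, ⟪φ, ((uPert (U : H →L[ℂ] H) φ α) ^ (m + 1)) φ⟫ ∂mc) :=
          integral_conj
        rw [this, integral_uPert_moment U φ hφ (Nat.succ_ne_zero m),
          integral_circle_zpow (by omega : -((m + 1 : ℕ) : ℤ) ≠ 0)]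
        simp
  -- main induction over Borel sets
  have hgen : (inferInstance : MeasurableSpace Circle)
      = MeasurableSpace.generateFrom {s : Set Circle | IsClosed s} := by
    rw [BorelSpace.measurable_eq (α := Circle), borel_eq_generateFrom_isClosed]
  have hpi : IsPiSystem {s : Set Circle | IsClosed s} := by
    intro s hs t ht _
    exact hs.inter ht
  intro B hB
  refine MeasurableSpace.induction_on_inter (C := fun B _ =>
    Measurable (fun α : Circle => ν α B) ∧ ∫⁻ α : Circle, ν α B ∂mc = mc B)
    hgen hpi ?_ ?_ ?_ ?_ B hB
  · simp
  · exact fun t ht => avg_closed ν hprob hchar ht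
  · intro t htm htC
    have hcompl : ∀ α, ν α tᶜ = 1 - ν α t := by
      intro α
      rw [measure_compl htm (measure_ne_top _ _)]
      simp
    constructor
    · simp_rw [hcompl]
      exact Measurable.const_sub htC.1 1
    · simp_rw [hcompl]
      rw [lintegral_sub htC.1 (by rw [htC.2]; exact measure_ne_top _ _)
        (Filter.Eventually.of_forall fun α => prob_le_one)]
      rw [htC.2, lintegral_const]
      simp [measure_compl htm (measure_ne_top mc t)]
  · intro f hd hm hC
    have hun : ∀ α, ν α (⋃ i, f i) = ∑' i, ν α (f i) := fun α => measure_iUnion hd hm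
    constructor
    · simp_rw [hun]
      exact Measurable.ennreal_tsum fun i => (hC i).1
    · simp_rw [hun]
      rw [lintegral_tsum fun i => (hC i).1.aemeasurable]
      rw [measure_iUnion hd hm]
      exact tsum_congr fun i => (hC i).2

end Main
end
end
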